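/- arXiv:2605.02422 — 8 statements merged into one kernel-verified Lean document; each statement's English description precedes it below -/
import Mathlib

section
/- Multiscale power-counting bound (Theorem 1, rank-4 Abelian case D=1). Let η ∈ [1/2,1], m > 0, M > 1. Let 𝓛 be a nonempty finite set (the lines), 𝓕 a finite set (the internal faces) equipped with a map ∂ assigning to each f ∈ 𝓕 a nonempty subset ∂f ⊆ 𝓛 and an exponent n_f ∈ ℕ, and let 𝓕ext be a finite set (the external faces) with a map ∂ assigning to each g ∈ 𝓕ext a nonempty subset ∂g ⊆ 𝓛, an exponent n_g ∈ ℕ, and a fixed external momentum P_g ∈ ℤ. For a scale attribution μ : 𝓛 → ℕ, define the sliced amplitude A(μ) as the integral, over α = (α_l)_{l∈𝓛} with each α_l ranging over the slice I_{μ(l)} (where I_i := [M^{-2ηi}, M^{-2η(i-1)}] for i ≥ 1 and I_0 := [1, ∞)), of the integrand ∏_{l∈𝓛} e^{-α_l m^{2η}} · ∏_{f∈𝓕} ( Σ_{p∈ℤ} |p|^{n_f} e^{-(Σ_{l∈∂f} α_l)|p|^{2η}} ) · ∏_{g∈𝓕ext} |P_g|^{n_g} e^{-(Σ_{l∈∂g}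 α_l)|P_g|^{2η}}. Then there exists a constant K > 0, depending on 𝓛, 𝓕, 𝓕ext, the boundary maps, the exponents, the external momenta, m, M and η, but NOT on μ, such that for every scale attribution μ : 𝓛 → ℕ one has |A(μ)| ≤ K · ∏_{l∈𝓛} M^{-2η μ(l)} · ∏_{f∈𝓕} M^{(n_f+1)·i(f)}, where i(f) := min_{l∈∂f} μ(l). -/
open MeasureTheory Real

section MPCBAux

lemma mpcb_rpow_ge (c x : ℝ) (hc : 1 ≤ c) (hx : 0 ≤ x) : x - 1 ≤ x ^ c := by
  rcases le_or_gt x 1 with h | h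
  · have h2 : (0:ℝ) ≤ x ^ c := Real.rpow_nonneg hx c
    linarith
  · calc x - 1 ≤ x := by linarith
      _ = x ^ (1:ℝ) := (Real.rpow_one x).symm
      _ ≤ x ^ c := Real.rpow_le_rpow_of_exponent_le h.le hc

lemma mpcb_sum_exp (c s : ℝ) (hc : 1 ≤ c) (hs : 0 < s) (hs1 : s ≤ 1) :
    ∑' p : ℕ, Real.exp (-(s/2) * (p:ℝ) ^ c) ≤ 2 * Real.exp 1 * s ^ (-1/c) := by
  have hc0 : (0:ℝ) < c := lt_of_lt_of_le one_pos hc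
  set u : ℝ := s ^ (1/c) with hu_def
  have hu : 0 < u := Real.rpow_pos_of_pos hs _
  have hu1 : u ≤ 1 := Real.rpow_le_one hs.le hs1 (by positivity)
  have huc : u ^ c = s := by
    rw [hu_def, ← Real.rpow_mul hs.le, one_div_mul_cancel hc0.ne', Real.rpow_one]
  set r : ℝ := Real.exp (-(u/2)) with hr_def
  have hr0 : 0 < r := Real.exp_pos _
  have hr1 : r < 1 := by
    rw [hr_def, Real.exp_lt_one_iff]; linarith
  have hterm : ∀ p : ℕ, Real.exp (-(s/2) * (p:ℝ) ^ c) ≤ Real.exp (1/2) * r ^ p := by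
    intro p
    have h1 : s * (p:ℝ) ^ c = (u * p) ^ c := by
      rw [Real.mul_rpow hu.le (Nat.cast_nonneg p), huc]
    have h2 : u * p - 1 ≤ (u * p) ^ c := mpcb_rpow_ge c _ hc (by positivity)
    have h3 : -(s/2) * (p:ℝ) ^ c ≤ 1/2 + (-(u/2)) * p := by nlinarith
    calc Real.exp (-(s/2) * (p:ℝ) ^ c) ≤ Real.exp (1/2 + (-(u/2)) * p) := Real.exp_le_exp.mpr h3
      _ = Real.exp (1/2) * r ^ p := by
          rw [Real.exp_add, hr_def, ← Real.exp_nat_mul]; ring_nf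
  have hsumr : Summable fun p : ℕ => Real.exp (1/2) * r ^ p :=
    (summable_geometric_of_lt_one hr0.le hr1).mul_left _
  have hsum1 : Summable fun p : ℕ => Real.exp (-(s/2) * (p:ℝ) ^ c) :=
    Summable.of_nonneg_of_le (fun p => (Real.exp_pos _).le) hterm hsumr
  calc ∑' p : ℕ, Real.exp (-(s/2) * (p:ℝ) ^ c)
      ≤ ∑' p : ℕ, Real.exp (1/2) * r ^ p := Summable.tsum_le_tsum hterm hsum1 hsumr
    _ = Real.exp (1/2) * (1 - r)⁻¹ := by
        rw [tsum_mul_left, tsum_geometric_of_lt_one hr0.le hr1]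
    _ ≤ 2 * Real.exp 1 * s ^ (-1/c) := by
        have hrlow : Real.exp (-(1:ℝ)/2) ≤ r := by
          rw [hr_def, Real.exp_le_exp]; linarith
        have h4 : u/2 + 1 ≤ Real.exp (u/2) := Real.add_one_le_exp _
        have h5 : (u/2) * r + r ≤ 1 := by
          have : Real.exp (u/2) * r = 1 := by
            rw [hr_def, ← Real.exp_add]; ring_nf; exact Real.exp_zero
          nlinarith
        have h6 : (1 - r)⁻¹ ≤ ((u/2) * r)⁻¹ := by
          apply inv_anti₀ (by positivity)
          linarith
        have h7 : ((u/2) * r)⁻¹ ≤ 2 * Real.exp (1/2) / u := by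
          rw [mul_inv]
          have h8 : r⁻¹ ≤ Real.exp (1/2) := by
            rw [hr_def, ← Real.exp_neg, Real.exp_le_exp]; linarith
          have : (u/2)⁻¹ = 2/u := by field_simp
          rw [this]
          calc 2/u * r⁻¹ ≤ 2/u * Real.exp (1/2) := by
                apply mul_le_mul_of_nonneg_left h8 (by positivity)
            _ = 2 * Real.exp (1/2) / u := by ring
        have husr : u⁻¹ = s ^ (-1/c) := by
          rw [hu_def, ← Real.rpow_neg hs.le, neg_div]
        calc Real.exp (1/2) * (1 - r)⁻¹ ≤ Real.exp (1/2) * (2 * Real.exp (1/2) / u) := by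
              apply mul_le_mul_of_nonneg_left (le_trans h6 h7) (Real.exp_pos _).le
          _ = 2 * Real.exp 1 * u⁻¹ := by
              have : Real.exp (1/2) * Real.exp (1/2) = Real.exp 1 := by
                rw [← Real.exp_add]; norm_num
              field_simp; nlinarith [Real.exp_pos (1/2:ℝ)]
          _ = 2 * Real.exp 1 * s ^ (-1/c) := by rw [husr]


lemma mpcb_poly_le (n : ℕ) (c s x : ℝ) (hc : 1 ≤ c) (hs : 0 < s) (hs1 : s ≤ 1) (hx : 0 ≤ x) :
    x ^ n * Real.exp (-(s/2) * x ^ c) ≤ 2 ^ n * (1 + (n.factorial : ℝ)) * s ^ (-(n:ℝ)/c) := by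
  have hc0 : (0:ℝ) < c := lt_of_lt_of_le one_pos hc
  set y : ℝ := (s/2) * x ^ c with hy_def
  have hy : 0 ≤ y := by positivity
  have hxc : x ^ c = y * (2/s) := by rw [hy_def]; field_simp
  have hxn : (x:ℝ) ^ n = y ^ ((n:ℝ)/c) * (2/s) ^ ((n:ℝ)/c) := by
    rw [← Real.mul_rpow hy (by positivity), ← hxc, ← Real.rpow_natCast x n,
      ← Real.rpow_mul hx]
    congr 1
    field_simp
  have hyn : y ^ ((n:ℝ)/c) ≤ 1 + y ^ n := by
    rcases le_or_gt y 1 with h | h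
    · have : y ^ ((n:ℝ)/c) ≤ 1 := Real.rpow_le_one hy h (by positivity)
      have : (0:ℝ) ≤ y ^ n := by positivity
      nlinarith [Real.rpow_le_one hy h (by positivity : (0:ℝ) ≤ (n:ℝ)/c)]
    · have h1 : y ^ ((n:ℝ)/c) ≤ y ^ ((n:ℝ)) :=
        Real.rpow_le_rpow_of_exponent_le h.le (by
          apply div_le_self (Nat.cast_nonneg n) hc)
      rw [Real.rpow_natCast] at h1
      have : (0:ℝ) ≤ y ^ n := by positivity
      linarith
  have hfact : y ^ n * Real.exp (-y) ≤ (n.factorial : ℝ) := by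
    have h1 : y ^ n / (n.factorial : ℝ) ≤ Real.exp y := by
      have h2 := Real.sum_le_exp_of_nonneg hy (n+1)
      refine le_trans ?_ h2
      exact Finset.single_le_sum (f := fun i => y ^ i / (i.factorial : ℝ))
        (fun i _ => by positivity) (Finset.self_mem_range_succ n)
    have h3 : y ^ n ≤ (n.factorial : ℝ) * Real.exp y := by
      rw [div_le_iff₀ (by positivity : (0:ℝ) < (n.factorial:ℝ))] at h1
      linarith [h1]
    calc y ^ n * Real.exp (-y) ≤ (n.factorial : ℝ) * Real.exp y * Real.exp (-y) := by
          apply mul_le_mul_of_nonneg_right h3 (Real.exp_pos _).le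
      _ = (n.factorial : ℝ) := by rw [mul_assoc, ← Real.exp_add]; simp
  have h2s : (2/s) ^ ((n:ℝ)/c) ≤ 2 ^ n * s ^ (-(n:ℝ)/c) := by
    rw [Real.div_rpow (by norm_num) hs.le]
    have h1 : (2:ℝ) ^ ((n:ℝ)/c) ≤ 2 ^ n := by
      rw [← Real.rpow_natCast 2 n]
      exact Real.rpow_le_rpow_of_exponent_le one_le_two
        (div_le_self (Nat.cast_nonneg n) hc)
    have h2 : (s ^ ((n:ℝ)/c))⁻¹ = s ^ (-(n:ℝ)/c) := by
      rw [← Real.rpow_neg hs.le, neg_div]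
    rw [div_eq_mul_inv, h2]
    apply mul_le_mul_of_nonneg_right h1 (by positivity)
  have key : x ^ n * Real.exp (-(s/2) * x ^ c) = (2/s) ^ ((n:ℝ)/c) * (y ^ ((n:ℝ)/c) * Real.exp (-y)) := by
    rw [hxn, hy_def]; ring_nf
  rw [key]
  have hexpy : Real.exp (-y) ≤ 1 := Real.exp_le_one_iff.mpr (by linarith)
  have hmid : y ^ ((n:ℝ)/c) * Real.exp (-y) ≤ 1 + (n.factorial : ℝ) := by
    calc y ^ ((n:ℝ)/c) * Real.exp (-y) ≤ (1 + y ^ n) * Real.exp (-y) := by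
          apply mul_le_mul_of_nonneg_right hyn (Real.exp_pos _).le
      _ = Real.exp (-y) + y ^ n * Real.exp (-y) := by ring
      _ ≤ 1 + (n.factorial : ℝ) := add_le_add hexpy hfact
  calc (2/s) ^ ((n:ℝ)/c) * (y ^ ((n:ℝ)/c) * Real.exp (-y))
      ≤ (2/s) ^ ((n:ℝ)/c) * (1 + (n.factorial : ℝ)) := by
        apply mul_le_mul_of_nonneg_left hmid (by positivity)
    _ ≤ 2 ^ n * s ^ (-(n:ℝ)/c) * (1 + (n.factorial : ℝ)) := by
        apply mul_le_mul_of_nonneg_right h2s (by positivity)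
    _ = 2 ^ n * (1 + (n.factorial : ℝ)) * s ^ (-(n:ℝ)/c) := by ring


lemma mpcb_nat_cast_rpow_ge (c : ℝ) (hc : 1 ≤ c) (p : ℕ) : (p:ℝ) ≤ (p:ℝ) ^ c := by
  rcases Nat.eq_zero_or_pos p with h | h
  · subst h; simp [Real.zero_rpow (by linarith : c ≠ 0)]
  · have h1 : (1:ℝ) ≤ (p:ℝ) := by exact_mod_cast h
    calc (p:ℝ) = (p:ℝ) ^ (1:ℝ) := (Real.rpow_one _).symm
      _ ≤ (p:ℝ) ^ c := Real.rpow_le_rpow_of_exponent_le h1 hc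

lemma mpcb_nat_summable (n : ℕ) (c s : ℝ) (hc : 1 ≤ c) (hs : 0 < s) :
    Summable fun p : ℕ => (p:ℝ) ^ n * Real.exp (-s * (p:ℝ) ^ c) := by
  have hgeom : Summable fun p : ℕ => (p:ℝ) ^ n * Real.exp (-s) ^ p := by
    apply summable_pow_mul_geometric_of_norm_lt_one
    rw [Real.norm_eq_abs, abs_of_pos (Real.exp_pos _), Real.exp_lt_one_iff]
    linarith
  apply Summable.of_nonneg_of_le (fun p => by positivity) _ hgeom
  intro p
  apply mul_le_mul_of_nonneg_left _ (by positivity)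
  rw [← Real.exp_nat_mul, Real.exp_le_exp]
  have := mpcb_nat_cast_rpow_ge c hc p
  nlinarith



lemma mpcb_exp_summable (c s : ℝ) (hc : 1 ≤ c) (hs : 0 < s) :
    Summable fun p : ℕ => Real.exp (-(s/2) * (p:ℝ) ^ c) := by
  have := mpcb_nat_summable 0 c (s/2) hc (by linarith)
  simpa using this

lemma mpcb_nat_tsum (n : ℕ) (c s : ℝ) (hc : 1 ≤ c) (hs : 0 < s) (hs1 : s ≤ 1) :
    ∑' p : ℕ, (p:ℝ) ^ n * Real.exp (-s * (p:ℝ) ^ c)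
      ≤ 2 ^ n * (1 + (n.factorial : ℝ)) * (2 * Real.exp 1) * s ^ (-((n:ℝ)+1)/c) := by
  set B : ℝ := 2 ^ n * (1 + (n.factorial : ℝ)) * s ^ (-(n:ℝ)/c) with hB_def
  have hB0 : 0 ≤ B := by positivity
  have hterm : ∀ p : ℕ, (p:ℝ) ^ n * Real.exp (-s * (p:ℝ) ^ c)
      ≤ B * Real.exp (-(s/2) * (p:ℝ) ^ c) := by
    intro p
    have h1 : Real.exp (-s * (p:ℝ) ^ c)
        = Real.exp (-(s/2) * (p:ℝ) ^ c) * Real.exp (-(s/2) * (p:ℝ) ^ c) := by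
      rw [← Real.exp_add]; ring_nf
    rw [h1, ← mul_assoc]
    apply mul_le_mul_of_nonneg_right _ (Real.exp_pos _).le
    exact mpcb_poly_le n c s _ hc hs hs1 (Nat.cast_nonneg p)
  have hsum2 : Summable fun p : ℕ => B * Real.exp (-(s/2) * (p:ℝ) ^ c) :=
    (mpcb_exp_summable c s hc hs).mul_left B
  calc ∑' p : ℕ, (p:ℝ) ^ n * Real.exp (-s * (p:ℝ) ^ c)
      ≤ ∑' p : ℕ, B * Real.exp (-(s/2) * (p:ℝ) ^ c) :=
        Summable.tsum_le_tsum hterm (mpcb_nat_summable n c s hc hs) hsum2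
    _ = B * ∑' p : ℕ, Real.exp (-(s/2) * (p:ℝ) ^ c) := tsum_mul_left
    _ ≤ B * (2 * Real.exp 1 * s ^ (-1/c)) := by
        apply mul_le_mul_of_nonneg_left (mpcb_sum_exp c s hc hs hs1) hB0
    _ = 2 ^ n * (1 + (n.factorial : ℝ)) * (2 * Real.exp 1) * (s ^ (-(n:ℝ)/c) * s ^ (-1/c)) := by
        rw [hB_def]; ring
    _ = 2 ^ n * (1 + (n.factorial : ℝ)) * (2 * Real.exp 1) * s ^ (-((n:ℝ)+1)/c) := by
        rw [← Real.rpow_add hs]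
        congr 1
        ring




section intsum
variable (n : ℕ) (c s : ℝ)

lemma mpcb_cast_nat (k : ℕ) :
    |((k:ℤ):ℝ)| ^ n * Real.exp (-s * |((k:ℤ):ℝ)| ^ c)
      = (k:ℝ) ^ n * Real.exp (-s * (k:ℝ) ^ c) := by
  push_cast
  rw [abs_of_nonneg (Nat.cast_nonneg k)]

lemma mpcb_cast_neg (k : ℕ) :
    |(↑(-((k:ℤ)+1)) : ℝ)| ^ n * Real.exp (-s * |(↑(-((k:ℤ)+1)) : ℝ)| ^ c)
      = ((k:ℝ)+1) ^ n * Real.exp (-s * ((k:ℝ)+1) ^ c) := by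
  push_cast
  rw [abs_neg, abs_of_nonneg (by positivity : (0:ℝ) ≤ (k:ℝ)+1)]

lemma mpcb_shift_summable (hc : 1 ≤ c) (hs : 0 < s) :
    Summable fun k : ℕ => ((k:ℝ)+1) ^ n * Real.exp (-s * ((k:ℝ)+1) ^ c) := by
  have h := (mpcb_nat_summable n c s hc hs).comp_injective
    (add_left_injective 1)
  apply h.congr
  intro k
  simp only [Function.comp_apply]
  push_cast
  ring_nf

lemma mpcb_int_summable (hc : 1 ≤ c) (hs : 0 < s) :
    Summable fun p : ℤ => |(p:ℝ)| ^ n * Real.exp (-s * |(p:ℝ)| ^ c) := by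
  apply Summable.of_nat_of_neg_add_one
  · exact (mpcb_nat_summable n c s hc hs).congr
      (fun k => (mpcb_cast_nat n c s k).symm)
  · exact (mpcb_shift_summable n c s hc hs).congr
      (fun k => (mpcb_cast_neg n c s k).symm)

lemma mpcb_int_tsum (hc : 1 ≤ c) (hs : 0 < s) (hs1 : s ≤ 1) :
    ∑' p : ℤ, |(p:ℝ)| ^ n * Real.exp (-s * |(p:ℝ)| ^ c)
      ≤ 2 * (2 ^ n * (1 + (n.factorial : ℝ)) * (2 * Real.exp 1)) * s ^ (-((n:ℝ)+1)/c) := by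
  have h1 : Summable fun k : ℕ => (k:ℝ) ^ n * Real.exp (-s * (k:ℝ) ^ c) :=
    mpcb_nat_summable n c s hc hs
  have h2 : Summable fun k : ℕ => ((k:ℝ)+1) ^ n * Real.exp (-s * ((k:ℝ)+1) ^ c) :=
    mpcb_shift_summable n c s hc hs
  have hsplit := tsum_of_nat_of_neg_add_one
    (f := fun p : ℤ => |(p:ℝ)| ^ n * Real.exp (-s * |(p:ℝ)| ^ c))
    (h1.congr (fun k => (mpcb_cast_nat n c s k).symm))
    (h2.congr (fun k => (mpcb_cast_neg n c s k).symm))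
  rw [hsplit,
    tsum_congr (mpcb_cast_nat n c s),
    tsum_congr (mpcb_cast_neg n c s)]
  have hle2 : ∑' k : ℕ, ((k:ℝ)+1) ^ n * Real.exp (-s * ((k:ℝ)+1) ^ c)
      ≤ ∑' k : ℕ, (k:ℝ) ^ n * Real.exp (-s * (k:ℝ) ^ c) := by
    apply Summable.tsum_le_tsum_of_inj (fun k : ℕ => k + 1) (add_left_injective 1)
      (fun k _ => by positivity) _ h2 h1
    intro k
    push_cast
    exact le_of_eq rfl
  have hn := mpcb_nat_tsum n c s hc hs hs1
  linarith

end intsum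


lemma mpcb_exp_int (b : ℝ) (hb : 0 < b) :
    ∫ x in Set.Ioi (1:ℝ), Real.exp (-b * x) = Real.exp (-b) / b := by
  have hderiv : ∀ x ∈ Set.Ici (1:ℝ),
      HasDerivAt (fun y => -Real.exp (-b*y) / b) (Real.exp (-b*x)) x := by
    intro x _
    have h1 : HasDerivAt (fun y : ℝ => -b*y) (-b) x := by
      simpa using (hasDerivAt_id x).const_mul (-b)
    have h2 : HasDerivAt (fun y : ℝ => Real.exp (-b*y)) (Real.exp (-b*x) * (-b)) x :=
      (Real.hasDerivAt_exp (-b*x)).comp x h1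
    have h3 := (h2.neg).div_const b
    refine h3.congr_deriv ?_
    rw [mul_neg, neg_neg, mul_div_assoc, div_self hb.ne', mul_one]
  have htend : Filter.Tendsto (fun x : ℝ => -Real.exp (-b*x) / b)
      Filter.atTop (nhds 0) := by
    have h1 : Filter.Tendsto (fun x : ℝ => Real.exp (-(b*x))) Filter.atTop (nhds 0) :=
      Real.tendsto_exp_neg_atTop_nhds_zero.comp
        (Filter.Tendsto.const_mul_atTop hb Filter.tendsto_id)
    have h3 : (fun x : ℝ => -Real.exp (-b*x)/b) = fun x : ℝ => -(Real.exp (-(b*x))/b) := by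
      funext x
      rw [neg_mul]
      ring
    rw [h3]
    simpa using (h1.div_const b).neg
  have := integral_Ioi_of_hasDerivAt_of_tendsto' hderiv
    (exp_neg_integrableOn_Ioi 1 hb) htend
  rw [this, mul_one]
  ring

lemma mpcb_line (c b M : ℝ) (hc : 0 < c) (hb : 0 < b) (hM : 1 < M) (i : ℕ) :
    ∫⁻ x in (if i = 0 then Set.Ici (1:ℝ)
        else Set.Icc (M ^ (-c * (i:ℝ))) (M ^ (-c * ((i:ℝ) - 1)))),
        ENNReal.ofReal (Real.exp (-x * b))
      ≤ ENNReal.ofReal ((M ^ c + Real.exp (-b) / b) * M ^ (-c * (i:ℝ))) := by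
  have hM0 : (0:ℝ) < M := lt_trans one_pos hM
  rcases Nat.eq_zero_or_pos i with h0 | hpos
  · subst h0
    rw [if_pos rfl]
    simp only [Nat.cast_zero, mul_zero, Real.rpow_zero, mul_one]
    have hint : IntegrableOn (fun x : ℝ => Real.exp (-x * b)) (Set.Ici 1) := by
      rw [integrableOn_Ici_iff_integrableOn_Ioi]
      exact (exp_neg_integrableOn_Ioi 1 hb).congr_fun
        (fun x _ => by ring_nf) measurableSet_Ioi
    have heq : ∫⁻ x in Set.Ici (1:ℝ), ENNReal.ofReal (Real.exp (-x * b))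
        = ENNReal.ofReal (∫ x in Set.Ici (1:ℝ), Real.exp (-x * b)) := by
      rw [← ofReal_integral_eq_lintegral_ofReal hint
        (Filter.Eventually.of_forall (fun x => (Real.exp_pos _).le))]
    rw [heq]
    apply ENNReal.ofReal_le_ofReal
    have hval : ∫ x in Set.Ici (1:ℝ), Real.exp (-x * b) = Real.exp (-b) / b := by
      rw [MeasureTheory.integral_Ici_eq_integral_Ioi]
      rw [← mpcb_exp_int b hb]
      apply setIntegral_congr_fun measurableSet_Ioi
      intro x _; ring_nf
    rw [hval]
    have : (0:ℝ) < M ^ c := Real.rpow_pos_of_pos hM0 c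
    linarith
  · have hine : i ≠ 0 := Nat.pos_iff_ne_zero.mp hpos
    simp only [if_neg hine]
    set a₀ : ℝ := M ^ (-c * (i:ℝ)) with ha0
    set a₁ : ℝ := M ^ (-c * ((i:ℝ) - 1)) with ha1
    have ha0pos : 0 < a₀ := Real.rpow_pos_of_pos hM0 _
    have hbound : ∫⁻ x in Set.Icc a₀ a₁, ENNReal.ofReal (Real.exp (-x * b))
        ≤ ∫⁻ _x in Set.Icc a₀ a₁, 1 := by
      apply setLIntegral_mono measurable_const
      intro x hx
      have hx0 : 0 < x := lt_of_lt_of_le ha0pos hx.1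
      have : Real.exp (-x * b) ≤ 1 := by
        apply Real.exp_le_one_iff.mpr
        nlinarith
      calc ENNReal.ofReal (Real.exp (-x * b)) ≤ ENNReal.ofReal 1 :=
            ENNReal.ofReal_le_ofReal this
        _ = 1 := ENNReal.ofReal_one
    have hline : a₁ ≤ (M ^ c + Real.exp (-b) / b) * a₀ := by
      have h1 : a₁ = M ^ c * a₀ := by
        rw [ha0, ha1, ← Real.rpow_add hM0]
        congr 1
        ring
      have h2 : 0 < Real.exp (-b) / b := by positivity
      nlinarith
    calc ∫⁻ x in Set.Icc a₀ a₁, ENNReal.ofReal (Real.exp (-x * b))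
        ≤ ∫⁻ _x in Set.Icc a₀ a₁, 1 := hbound
      _ = volume (Set.Icc a₀ a₁) := setLIntegral_one _
      _ = ENNReal.ofReal (a₁ - a₀) := by rw [Real.volume_Icc]
      _ ≤ ENNReal.ofReal ((M ^ c + Real.exp (-b) / b) * a₀) := by
          apply ENNReal.ofReal_le_ofReal
          linarith


theorem mpcb_lintegral_fin_nat_prod {n : ℕ} (f : Fin n → ℝ → ENNReal)
    (hf : ∀ i, Measurable (f i)) :
    ∫⁻ x : Fin n → ℝ, ∏ i, f i (x i) = ∏ i, ∫⁻ x, f i x := by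
  induction n with
  | zero =>
      simp only [Finset.univ_eq_empty, Finset.prod_empty, lintegral_const, one_mul, volume_pi,
        Measure.pi_empty_univ]
  | succ n n_ih =>
      calc
        ∫⁻ x : Fin (n+1) → ℝ, ∏ i, f i (x i)
            = ∫⁻ z : ℝ × (Fin n → ℝ), f 0 z.1 * ∏ i : Fin n, f i.succ (z.2 i) := by
          have h := ((measurePreserving_piFinSuccAbove
            (fun _ : Fin (n+1) => (volume : Measure ℝ)) 0).symm).lintegral_comp_emb
            (MeasurableEquiv.measurableEmbedding _)
            (fun x : Fin (n+1) → ℝ => ∏ i, f i (x i))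
          rw [volume_pi, ← h]
          congr 1
          funext z
          rw [Fin.prod_univ_succ]
          simp [MeasurableEquiv.piFinSuccAbove_symm_apply, Fin.insertNthEquiv,
            Fin.insertNth_zero, Fin.zero_succAbove, Fin.cons_zero, Fin.cons_succ]
        _ = (∫⁻ x, f 0 x) * ∏ i : Fin n, ∫⁻ x, f i.succ x := by
          have hg : Measurable fun y : Fin n → ℝ => ∏ i : Fin n, f i.succ (y i) :=
            Finset.measurable_prod _ (fun i _ => (hf i.succ).comp (measurable_pi_apply i))
          rw [← n_ih (fun i => f i.succ) (fun i => hf i.succ)]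
          exact lintegral_prod_mul (hf 0).aemeasurable hg.aemeasurable
        _ = ∏ i, ∫⁻ x, f i x := (Fin.prod_univ_succ (fun i => ∫⁻ x, f i x)).symm

theorem mpcb_lintegral_fintype_prod {ι : Type} [Fintype ι] (f : ι → ℝ → ENNReal)
    (hf : ∀ i, Measurable (f i)) :
    ∫⁻ x : ι → ℝ, ∏ i, f i (x i) = ∏ i, ∫⁻ x, f i x := by
  let e := (Fintype.equivFin ι).symm
  have h := (volume_measurePreserving_piCongrLeft (fun _ : ι => ℝ) e).lintegral_comp_emb
    (MeasurableEquiv.measurableEmbedding _) (fun x : ι → ℝ => ∏ i, f i (x i))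
  rw [← h]
  refine Eq.trans (lintegral_congr (fun x => ?_))
    (Eq.trans (mpcb_lintegral_fin_nat_prod (fun j => f (e j)) (fun j => hf _))
      (e.prod_comp (fun i => ∫⁻ x, f i x)))
  show (∏ i : ι, f i ((MeasurableEquiv.piCongrLeft (fun _ : ι => ℝ) e) x i))
      = ∏ j, f (e j) (x j)
  rw [← e.prod_comp (fun i => f i ((MeasurableEquiv.piCongrLeft (fun _ : ι => ℝ) e) x i))]
  apply Finset.prod_congr rfl
  intro j _
  congr 1
  simp [MeasurableEquiv.coe_piCongrLeft, Equiv.piCongrLeft_apply_apply]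

theorem mpcb_indicator_pi {ι : Type} [Fintype ι] (s : ι → Set ℝ) (g : ι → ℝ → ENNReal)
    (x : ι → ℝ) :
    (Set.univ.pi s).indicator (fun y => ∏ i, g i (y i)) x
      = ∏ i, (s i).indicator (g i) (x i) := by
  by_cases h : x ∈ Set.univ.pi s
  · rw [Set.indicator_of_mem h]
    exact Finset.prod_congr rfl fun i _ =>
      (Set.indicator_of_mem (h i (Set.mem_univ i)) _).symm
  · rw [Set.indicator_of_notMem h]
    rw [Set.mem_univ_pi] at h
    push_neg at h
    obtain ⟨i, hi⟩ := h
    exact (Finset.prod_eq_zero (Finset.mem_univ i)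
      (Set.indicator_of_notMem hi _)).symm

end MPCBAux

set_option maxHeartbeats 1000000 in

/-- Multiscale power-counting bound (Theorem 1, rank-4 Abelian case `D = 1`).

For a graph with line set `L` (nonempty, finite), internal faces `F` and external
faces `Fext` (finite), boundary maps `bF : F → Finset L`, `bE : Fext → Finset L`
(with nonempty values), derivative-coupling exponents `nF`, `nE`, and external
momenta `P`, the sliced amplitude `A(μ)` — the integral of the Schwinger integrand
over the product of slices `I_{μ(l)}` (where `I_0 = [1,∞)` and
`I_i = [M^{-2ηi}, M^{-2η(i-1)}]` for `i ≥ 1`) — satisfies the uniform bound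
`|A(μ)| ≤ K · ∏_l M^{-2ημ(l)} · ∏_f M^{(n_f+1)·i(f)}` with `i(f) = min_{l∈∂f} μ(l)`,
for a constant `K > 0` independent of the scale attribution `μ`. -/
theorem multiscale_power_counting_bound
    (η m M : ℝ) (hη : η ∈ Set.Icc (1 / 2 : ℝ) 1) (hm : 0 < m) (hM : 1 < M)
    (L F Fext : Type) [Fintype L] [Nonempty L] [Fintype F] [Fintype Fext]
    (bF : F → Finset L) (hbF : ∀ f, (bF f).Nonempty) (nF : F → ℕ)
    (bE : Fext → Finset L) (hbE : ∀ g, (bE g).Nonempty) (nE : Fext → ℕ)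
    (P : Fext → ℤ) :
    ∃ K > (0 : ℝ), ∀ μ : L → ℕ,
      |∫ α in Set.univ.pi (fun l : L =>
            if μ l = 0 then Set.Ici (1 : ℝ)
            else Set.Icc (M ^ (-(2 * η) * (μ l : ℝ))) (M ^ (-(2 * η) * ((μ l : ℝ) - 1)))),
          (∏ l : L, Real.exp (-(α l) * m ^ (2 * η))) *
            (∏ f : F, ∑' p : ℤ,
              |(p : ℝ)| ^ (nF f) *
                Real.exp (-(∑ l ∈ bF f, α l) * |(p : ℝ)| ^ (2 * η))) *
            (∏ g : Fext,
              |(P g : ℝ)| ^ (nE g) *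
                Real.exp (-(∑ l ∈ bE g, α l) * |(P g : ℝ)| ^ (2 * η)))|
        ≤ K * (∏ l : L, M ^ (-(2 * η) * (μ l : ℝ))) *
            (∏ f : F, M ^ (((nF f : ℝ) + 1) * (((bF f).inf' (hbF f) μ : ℕ) : ℝ))) := by
  obtain ⟨hη1, hη2⟩ := hη
  have hM0 : (0:ℝ) < M := lt_trans one_pos hM
  have hc1 : (1:ℝ) ≤ 2 * η := by linarith
  have hc0 : (0:ℝ) < 2 * η := by linarith
  set b : ℝ := m ^ (2 * η) with hb_def
  have hb : 0 < b := Real.rpow_pos_of_pos hm _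
  set CL : ℝ := M ^ (2 * η) + Real.exp (-b) / b with hCL_def
  have hCLpos : 0 < CL := by
    have : (0:ℝ) < M ^ (2*η) := Real.rpow_pos_of_pos hM0 _
    have : (0:ℝ) < Real.exp (-b) / b := by positivity
    rw [hCL_def]; positivity
  set Cz : ℕ → ℝ := fun n => 2 * (2 ^ n * (1 + (n.factorial : ℝ)) * (2 * Real.exp 1))
    with hCz_def
  have hCzpos : ∀ n, 0 < Cz n := fun n => by
    rw [hCz_def]
    have : (0:ℝ) < (n.factorial : ℝ) := by positivity
    positivity
  set D : ℝ := ∏ g : Fext, |(P g : ℝ)| ^ nE g with hD_def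
  have hD : 0 ≤ D := Finset.prod_nonneg fun g _ => by positivity
  set K0 : ℝ := (∏ _l : L, CL) * (∏ f : F, Cz (nF f)) * D with hK0_def
  have hK0 : 0 ≤ K0 := by
    apply mul_nonneg (mul_nonneg ?_ ?_) hD
    · exact Finset.prod_nonneg fun _ _ => hCLpos.le
    · exact Finset.prod_nonneg fun f _ => (hCzpos (nF f)).le
  refine ⟨K0 + 1, by linarith, fun μ => ?_⟩
  set I : L → Set ℝ := fun l =>
    if μ l = 0 then Set.Ici (1 : ℝ)
    else Set.Icc (M ^ (-(2 * η) * (μ l : ℝ))) (M ^ (-(2 * η) * ((μ l : ℝ) - 1)))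
    with hI_def
  have hImeas : ∀ l, MeasurableSet (I l) := fun l => by
    simp only [hI_def]
    by_cases h : μ l = 0
    · rw [if_pos h]; exact measurableSet_Ici
    · rw [if_neg h]; exact measurableSet_Icc
  have hSmeas : MeasurableSet (Set.univ.pi I) := MeasurableSet.univ_pi hImeas
  have hIlb : ∀ l, ∀ t ∈ I l, M ^ (-(2 * η) * (μ l : ℝ)) ≤ t := by
    intro l t ht
    simp only [hI_def] at ht
    by_cases h : μ l = 0
    · rw [if_pos h] at ht
      simp only [h, Nat.cast_zero, mul_zero, Real.rpow_zero]
      exact ht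
    · rw [if_neg h] at ht
      exact ht.1
  have hIpos : ∀ l, ∀ t ∈ I l, 0 < t := fun l t ht =>
    lt_of_lt_of_le (Real.rpow_pos_of_pos hM0 _) (hIlb l t ht)
  set A : ℝ := ∏ l : L, M ^ (-(2 * η) * (μ l : ℝ)) with hA_def
  have hA : 0 < A := Finset.prod_pos fun l _ => Real.rpow_pos_of_pos hM0 _
  set B : ℝ := ∏ f : F, M ^ (((nF f : ℝ) + 1) * (((bF f).inf' (hbF f) μ : ℕ) : ℝ)) with hB_def
  have hB : 0 < B := Finset.prod_pos fun f _ => Real.rpow_pos_of_pos hM0 _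
  set CF : ℝ := ∏ f : F,
      Cz (nF f) * M ^ (((nF f : ℝ) + 1) * (((bF f).inf' (hbF f) μ : ℕ) : ℝ)) with hCF_def
  have hCF : 0 ≤ CF := Finset.prod_nonneg fun f _ =>
    mul_nonneg (hCzpos (nF f)).le (Real.rpow_pos_of_pos hM0 _).le
  set G : (L → ℝ) → ℝ := fun α =>
      (∏ l : L, Real.exp (-(α l) * b)) *
        (∏ f : F, ∑' p : ℤ,
          |(p : ℝ)| ^ (nF f) *
            Real.exp (-(∑ l ∈ bF f, α l) * |(p : ℝ)| ^ (2 * η))) *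
        (∏ g : Fext,
          |(P g : ℝ)| ^ (nE g) *
            Real.exp (-(∑ l ∈ bE g, α l) * |(P g : ℝ)| ^ (2 * η))) with hG_def
  -- pointwise bound on the slice domain
  have hpoint : ∀ α ∈ Set.univ.pi I,
      ‖G α‖ ≤ (CF * D) * ∏ l : L, Real.exp (-(α l) * b) := by
    intro α hα
    have hx : ∀ l, α l ∈ I l := fun l => hα l (Set.mem_univ l)
    have hxpos : ∀ l, 0 < α l := fun l => hIpos l _ (hx l)
    have htsum_nonneg : ∀ f : F,
        0 ≤ ∑' p : ℤ, |(p : ℝ)| ^ (nF f) *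
          Real.exp (-(∑ l ∈ bF f, α l) * |(p : ℝ)| ^ (2 * η)) :=
      fun f => tsum_nonneg fun p => by positivity
    have h1 : 0 ≤ ∏ l : L, Real.exp (-(α l) * b) :=
      Finset.prod_nonneg fun l _ => (Real.exp_pos _).le
    have h2 : 0 ≤ ∏ f : F, ∑' p : ℤ, |(p : ℝ)| ^ (nF f) *
        Real.exp (-(∑ l ∈ bF f, α l) * |(p : ℝ)| ^ (2 * η)) :=
      Finset.prod_nonneg fun f _ => htsum_nonneg f
    have h3 : 0 ≤ ∏ g : Fext, |(P g : ℝ)| ^ (nE g) *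
        Real.exp (-(∑ l ∈ bE g, α l) * |(P g : ℝ)| ^ (2 * η)) :=
      Finset.prod_nonneg fun g _ => by positivity
    have hGnn : 0 ≤ G α := by
      rw [hG_def]
      exact mul_nonneg (mul_nonneg h1 h2) h3
    rw [Real.norm_eq_abs, abs_of_nonneg hGnn]
    -- face bound
    have hface : ∀ f : F,
        (∑' p : ℤ, |(p : ℝ)| ^ (nF f) *
          Real.exp (-(∑ l ∈ bF f, α l) * |(p : ℝ)| ^ (2 * η)))
        ≤ Cz (nF f) * M ^ (((nF f : ℝ) + 1) * (((bF f).inf' (hbF f) μ : ℕ) : ℝ)) := by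
      intro f
      set i : ℕ := (bF f).inf' (hbF f) μ with hi_def
      set s : ℝ := ∑ l ∈ bF f, α l with hs_def
      set s0 : ℝ := M ^ (-(2 * η) * (i : ℝ)) with hs0_def
      have hs0pos : 0 < s0 := Real.rpow_pos_of_pos hM0 _
      have hs0le1 : s0 ≤ 1 := by
        rw [hs0_def]
        apply Real.rpow_le_one_of_one_le_of_nonpos hM.le
        have : (0:ℝ) ≤ (i:ℝ) := Nat.cast_nonneg i
        nlinarith
      have hs0s : s0 ≤ s := by
        obtain ⟨l0, hl0, hinf⟩ := Finset.exists_mem_eq_inf' (hbF f) μ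
        have hlb : M ^ (-(2 * η) * (μ l0 : ℝ)) ≤ α l0 := hIlb l0 _ (hx l0)
        have hsum : α l0 ≤ s := by
          rw [hs_def]
          exact Finset.single_le_sum (fun l _ => (hxpos l).le) hl0
        have : s0 = M ^ (-(2 * η) * (μ l0 : ℝ)) := by rw [hs0_def, hi_def, hinf]
        linarith
      have hspos : 0 < s := lt_of_lt_of_le hs0pos hs0s
      have hmono : (∑' p : ℤ, |(p : ℝ)| ^ (nF f) *
            Real.exp (-s * |(p : ℝ)| ^ (2 * η)))
          ≤ ∑' p : ℤ, |(p : ℝ)| ^ (nF f) *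
            Real.exp (-s0 * |(p : ℝ)| ^ (2 * η)) := by
        apply Summable.tsum_le_tsum _
          (mpcb_int_summable (nF f) (2*η) s hc1 hspos)
          (mpcb_int_summable (nF f) (2*η) s0 hc1 hs0pos)
        intro p
        apply mul_le_mul_of_nonneg_left _ (by positivity)
        apply Real.exp_le_exp.mpr
        have hp : (0:ℝ) ≤ |(p : ℝ)| ^ (2 * η) := Real.rpow_nonneg (abs_nonneg _) _
        nlinarith
      have hbound := mpcb_int_tsum (nF f) (2*η) s0 hc1 hs0pos hs0le1
      have hrw : s0 ^ (-(((nF f : ℕ) : ℝ) + 1)/(2*η))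
          = M ^ (((nF f : ℝ) + 1) * (i : ℝ)) := by
        rw [hs0_def, ← Real.rpow_mul hM0.le]
        congr 1
        field_simp
      calc (∑' p : ℤ, |(p : ℝ)| ^ (nF f) *
            Real.exp (-s * |(p : ℝ)| ^ (2 * η)))
          ≤ ∑' p : ℤ, |(p : ℝ)| ^ (nF f) *
            Real.exp (-s0 * |(p : ℝ)| ^ (2 * η)) := hmono
        _ ≤ Cz (nF f) * s0 ^ (-(((nF f : ℕ) : ℝ) + 1)/(2*η)) := by
            rw [hCz_def]; exact hbound
        _ = Cz (nF f) * M ^ (((nF f : ℝ) + 1) * (i : ℝ)) := by rw [hrw]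
    have hext : ∀ g : Fext,
        |(P g : ℝ)| ^ (nE g) * Real.exp (-(∑ l ∈ bE g, α l) * |(P g : ℝ)| ^ (2 * η))
          ≤ |(P g : ℝ)| ^ (nE g) := by
      intro g
      have hsg : 0 ≤ ∑ l ∈ bE g, α l := Finset.sum_nonneg fun l _ => (hxpos l).le
      have hpg : (0:ℝ) ≤ |(P g : ℝ)| ^ (2 * η) := Real.rpow_nonneg (abs_nonneg _) _
      have : Real.exp (-(∑ l ∈ bE g, α l) * |(P g : ℝ)| ^ (2 * η)) ≤ 1 := by
        apply Real.exp_le_one_iff.mpr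
        nlinarith
      calc |(P g : ℝ)| ^ (nE g) * Real.exp (-(∑ l ∈ bE g, α l) * |(P g : ℝ)| ^ (2 * η))
          ≤ |(P g : ℝ)| ^ (nE g) * 1 := by
            apply mul_le_mul_of_nonneg_left this (by positivity)
        _ = |(P g : ℝ)| ^ (nE g) := mul_one _
    have hprod2 : (∏ f : F, ∑' p : ℤ, |(p : ℝ)| ^ (nF f) *
        Real.exp (-(∑ l ∈ bF f, α l) * |(p : ℝ)| ^ (2 * η))) ≤ CF := by
      rw [hCF_def]
      exact Finset.prod_le_prod (fun f _ => htsum_nonneg f) (fun f _ => hface f)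
    have hprod3 : (∏ g : Fext, |(P g : ℝ)| ^ (nE g) *
        Real.exp (-(∑ l ∈ bE g, α l) * |(P g : ℝ)| ^ (2 * η))) ≤ D := by
      rw [hD_def]
      exact Finset.prod_le_prod (fun g _ => by positivity) (fun g _ => hext g)
    rw [hG_def]
    calc (∏ l : L, Real.exp (-(α l) * b)) *
          (∏ f : F, ∑' p : ℤ, |(p : ℝ)| ^ (nF f) *
            Real.exp (-(∑ l ∈ bF f, α l) * |(p : ℝ)| ^ (2 * η))) *
          (∏ g : Fext, |(P g : ℝ)| ^ (nE g) *
            Real.exp (-(∑ l ∈ bE g, α l) * |(P g : ℝ)| ^ (2 * η)))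
        ≤ (∏ l : L, Real.exp (-(α l) * b)) * CF * D := by
          apply mul_le_mul _ hprod3 h3 _
          · exact mul_le_mul_of_nonneg_left hprod2 h1
          · exact mul_nonneg h1 hCF
      _ = (CF * D) * ∏ l : L, Real.exp (-(α l) * b) := by ring
  -- the lintegral bound
  have hlin : (∫⁻ α in Set.univ.pi I, ENNReal.ofReal ‖G α‖)
      ≤ ENNReal.ofReal (K0 * A * B) := by
    have hWnn : 0 ≤ CF * D := mul_nonneg hCF hD
    calc (∫⁻ α in Set.univ.pi I, ENNReal.ofReal ‖G α‖)
        ≤ ∫⁻ α in Set.univ.pi I,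
            ENNReal.ofReal ((CF * D) * ∏ l : L, Real.exp (-(α l) * b)) := by
          apply lintegral_mono_ae
          refine (ae_restrict_iff' hSmeas).mpr (Filter.Eventually.of_forall fun α hα =>
            ENNReal.ofReal_le_ofReal (hpoint α hα))
      _ = ∫⁻ α in Set.univ.pi I,
            ENNReal.ofReal (CF * D) * ∏ l : L, ENNReal.ofReal (Real.exp (-(α l) * b)) := by
          apply lintegral_congr
          intro α
          rw [ENNReal.ofReal_mul hWnn,
            ENNReal.ofReal_prod_of_nonneg (fun l _ => (Real.exp_pos _).le)]
      _ = ENNReal.ofReal (CF * D) *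
            ∫⁻ α in Set.univ.pi I, ∏ l : L, ENNReal.ofReal (Real.exp (-(α l) * b)) :=
          lintegral_const_mul' _ _ ENNReal.ofReal_ne_top
      _ = ENNReal.ofReal (CF * D) *
            ∏ l : L, ∫⁻ t in I l, ENNReal.ofReal (Real.exp (-t * b)) := by
          congr 1
          have hmeas1 : ∀ l : L, Measurable fun t : ℝ => ENNReal.ofReal (Real.exp (-t * b)) :=
            fun l => (Real.measurable_exp.comp (measurable_id.neg.mul_const b)).ennreal_ofReal
          have h1 : (∫⁻ α in Set.univ.pi I,
              ∏ l : L, ENNReal.ofReal (Real.exp (-(α l) * b)))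
              = ∫⁻ α : L → ℝ, ∏ l : L,
                (I l).indicator (fun t => ENNReal.ofReal (Real.exp (-t * b))) (α l) := by
            rw [← lintegral_indicator hSmeas]
            apply lintegral_congr
            intro α
            exact mpcb_indicator_pi I (fun l t => ENNReal.ofReal (Real.exp (-t * b))) α
          rw [h1, mpcb_lintegral_fintype_prod
            (fun l => (I l).indicator (fun t => ENNReal.ofReal (Real.exp (-t * b))))
            (fun l => ((hmeas1 l).indicator (hImeas l)))]
          apply Finset.prod_congr rfl
          intro l _
          rw [lintegral_indicator (hImeas l)]
      _ ≤ ENNReal.ofReal (CF * D) *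
            ∏ l : L, ENNReal.ofReal (CL * M ^ (-(2 * η) * (μ l : ℝ))) := by
          apply mul_le_mul_right
          apply Finset.prod_le_prod'
          intro l _
          exact mpcb_line (2 * η) b M hc0 hb hM (μ l)
      _ = ENNReal.ofReal (K0 * A * B) := by
          rw [← ENNReal.ofReal_prod_of_nonneg
            (fun l _ => mul_nonneg hCLpos.le (Real.rpow_pos_of_pos hM0 _).le),
            ← ENNReal.ofReal_mul hWnn]
          congr 1
          have e1 : (∏ l : L, (CL * M ^ (-(2 * η) * (μ l : ℝ)))) = (∏ _l : L, CL) * A := by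
            rw [Finset.prod_mul_distrib, ← hA_def]
          have e2 : CF = (∏ f : F, Cz (nF f)) * B := by
            rw [hCF_def, Finset.prod_mul_distrib, ← hB_def]
          rw [e1, e2, hK0_def]
          ring
  -- put it together
  rw [← Real.norm_eq_abs]
  calc ‖∫ α in Set.univ.pi I, G α‖
      ≤ (∫⁻ α in Set.univ.pi I, ENNReal.ofReal ‖G α‖).toReal :=
        norm_integral_le_lintegral_norm G
    _ ≤ K0 * A * B := ENNReal.toReal_le_of_le_ofReal (by positivity) hlin
    _ ≤ (K0 + 1) * A * B := by nlinarith
end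

section
/- Uniform slice bound for the regularized propagator. Let η ∈ [1/2,1], m > 0, M > 1, and n ≥ 1 a natural number. For i ≥ 1 and p = (p_1,…,p_n) ∈ ℤ^n define C_i(p) := ∫_{M^{-2ηi}}^{M^{-2η(i-1)}} e^{-α(Σ_{j=1}^n |p_j|^{2η} + m^{2η})} dα. Then there exist constants K > 0 and δ > 0 (depending on η, m, M, n but not on i or p) such that for all i ≥ 1 and all p ∈ ℤ^n: C_i(p) ≤ K · M^{-2ηi} · e^{-δ M^{-i} Σ_{j=1}^n |p_j|}. -/
open MeasureTheory

/-- Uniform slice bound for the regularized propagator: the `i`-th Schwinger slice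
`C_i(p) = ∫_{M^{-2ηi}}^{M^{-2η(i-1)}} e^{-α(Σ_j |p_j|^{2η} + m^{2η})} dα` satisfies
`C_i(p) ≤ K · M^{-2ηi} · e^{-δ M^{-i} Σ_j |p_j|}` with `K, δ` uniform in `i` and `p`. -/
theorem slice_propagator_uniform_bound (η m M : ℝ)
    (hη : η ∈ Set.Icc (1 / 2 : ℝ) 1) (hm : 0 < m) (hM : 1 < M)
    (n : ℕ) (hn : 1 ≤ n) :
    ∃ K > (0 : ℝ), ∃ δ > (0 : ℝ), ∀ i : ℕ, 1 ≤ i → ∀ p : Fin n → ℤ,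
      (∫ α in Set.Icc (M ^ (-(2 * η) * (i : ℝ))) (M ^ (-(2 * η) * ((i : ℝ) - 1))),
          Real.exp (-α * (∑ j, |(p j : ℝ)| ^ (2 * η) + m ^ (2 * η))))
        ≤ K * M ^ (-(2 * η) * (i : ℝ)) *
            Real.exp (-δ * M ^ (-(i : ℝ)) * ∑ j, |(p j : ℝ)|) := by
  have hM0 : (0:ℝ) < M := lt_trans one_pos hM
  have hη1 : 1 ≤ 2 * η := by nlinarith [hη.1]
  refine ⟨M ^ (2*η) * Real.exp n, by positivity, 1, one_pos, ?_⟩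
  intro i hi p
  set A := M ^ (-(2 * η) * (i : ℝ)) with hA
  set B := M ^ (-(2 * η) * ((i : ℝ) - 1)) with hB
  set S := (∑ j, |(p j : ℝ)| ^ (2 * η)) + m ^ (2 * η) with hS
  have hA0 : (0:ℝ) < A := Real.rpow_pos_of_pos hM0 _
  have hB0 : (0:ℝ) < B := Real.rpow_pos_of_pos hM0 _
  have hS0 : (0:ℝ) ≤ S := by
    have : (0:ℝ) ≤ ∑ j, |(p j : ℝ)| ^ (2 * η) :=
      Finset.sum_nonneg fun j _ => by positivity
    have : (0:ℝ) ≤ m ^ (2 * η) := by positivity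
    rw [hS]; positivity
  have hAB : A ≤ B := by
    apply Real.rpow_le_rpow_of_exponent_le hM.le
    nlinarith
  -- Step 1: integral ≤ (B - A) * exp(-A*S)
  have hint : IntegrableOn (fun α => Real.exp (-α * S)) (Set.Icc A B) := by
    apply Continuous.integrableOn_Icc
    exact Real.continuous_exp.comp (by continuity)
  have step1 : (∫ α in Set.Icc A B, Real.exp (-α * S)) ≤ (B - A) * Real.exp (-A * S) := by
    have h : ∀ x ∈ Set.Icc A B, Real.exp (-x * S) ≤ (fun _ : ℝ => Real.exp (-A * S)) x := by
      intro x hx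
      exact Real.exp_le_exp.2 (by nlinarith [hx.1])
    have h2 := setIntegral_mono_on hint
      (integrableOn_const measure_Icc_lt_top.ne) measurableSet_Icc h
    rwa [setIntegral_const, Real.volume_real_Icc_of_le hAB,
      smul_eq_mul] at h2
  -- B = M^(2η) * A
  have hBA : B = M ^ (2*η) * A := by
    rw [hA, hB, ← Real.rpow_add hM0]
    congr 1; ring
  -- Step 2: exponent bound
  have key : ∀ j : Fin n, M ^ (-(i:ℝ)) * |(p j : ℝ)| - 1 ≤ A * |(p j : ℝ)| ^ (2*η) := by
    intro j
    set x := M ^ (-(i:ℝ)) * |(p j : ℝ)| with hx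
    have hx0 : (0:ℝ) ≤ x := by positivity
    have hAx : A * |(p j : ℝ)| ^ (2*η) = x ^ (2*η) := by
      rw [hx, Real.mul_rpow (by positivity) (abs_nonneg _), hA,
        ← Real.rpow_mul hM0.le]
      congr 1
      ring
    rw [hAx]
    rcases le_total x 1 with h1 | h1
    · have : (0:ℝ) ≤ x ^ (2*η) := Real.rpow_nonneg hx0 _
      linarith
    · have : x ^ (1:ℝ) ≤ x ^ (2*η) := Real.rpow_le_rpow_of_exponent_le h1 hη1
      rw [Real.rpow_one] at this
      linarith
  have hAS : M ^ (-(i:ℝ)) * (∑ j, |(p j : ℝ)|) - n ≤ A * S := by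
    have h1 : ∑ j : Fin n, (M ^ (-(i:ℝ)) * |(p j : ℝ)| - 1) ≤
        ∑ j : Fin n, A * |(p j : ℝ)| ^ (2*η) :=
      Finset.sum_le_sum fun j _ => key j
    have h2 : ∑ j : Fin n, A * |(p j : ℝ)| ^ (2*η) ≤ A * S := by
      rw [hS, mul_add, ← Finset.mul_sum]
      have : (0:ℝ) ≤ m ^ (2*η) := by positivity
      nlinarith
    have h3 : ∑ j : Fin n, (M ^ (-(i:ℝ)) * |(p j : ℝ)| - 1) =
        M ^ (-(i:ℝ)) * (∑ j, |(p j : ℝ)|) - n := by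
      rw [Finset.sum_sub_distrib, ← Finset.mul_sum]
      simp
    linarith [h1, h2, h3.ge, h3.le]
  have step2 : Real.exp (-A * S) ≤
      Real.exp n * Real.exp (-(1:ℝ) * M ^ (-(i:ℝ)) * ∑ j, |(p j : ℝ)|) := by
    rw [← Real.exp_add]
    apply Real.exp_le_exp.2
    nlinarith [hAS]
  calc (∫ α in Set.Icc A B, Real.exp (-α * S)) ≤ (B - A) * Real.exp (-A * S) := step1
    _ ≤ B * Real.exp (-A * S) := by nlinarith [Real.exp_pos (-A*S), hA0]
    _ = M ^ (2*η) * A * Real.exp (-A * S) := by rw [hBA]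
    _ ≤ M ^ (2*η) * A * (Real.exp n *
        Real.exp (-(1:ℝ) * M ^ (-(i:ℝ)) * ∑ j, |(p j : ℝ)|)) := by
        apply mul_le_mul_of_nonneg_left step2 (by positivity)
    _ = M ^ (2*η) * Real.exp n * A *
        Real.exp (-(1:ℝ) * M ^ (-(i:ℝ)) * ∑ j, |(p j : ℝ)|) := by ring
end

section
/- One-dimensional heat-kernel lattice sum asymptotics. Let r > 0 and let ν ≥ 0 be a real number (with the convention |0|^ν = 1 when ν = 0 and |0|^ν = 0 when ν > 0). Then lim_{t→0⁺} t^{(ν+1)/r} · Σ_{q∈ℤ} |q|^ν e^{-t|q|^r} = (2/r) · Γ((ν+1)/r), where Γ denotes the real Gamma function. -/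
open Real Filter Set MeasureTheory

namespace HeatKernelSumAux


lemma cont_f {r c : ℝ} (hr : 0 ≤ r) (hc : 0 ≤ c) :
    Continuous (fun y : ℝ => y ^ c * Real.exp (-(y ^ r))) :=
  (Real.continuous_rpow_const hc).mul
    ((Real.continuous_rpow_const hr).neg.rexp)

/-- `y^c * exp(-(b*y^r)) → 0` at `+∞` for `r, b > 0`. -/
lemma tendsto_rpow_exp_zero {r : ℝ} (hr : 0 < r) (c : ℝ) {b : ℝ} (hb : 0 < b) :
    Tendsto (fun y : ℝ => y ^ c * Real.exp (-(b * y ^ r))) atTop (nhds 0) := by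
  have h1 := tendsto_rpow_mul_exp_neg_mul_atTop_nhds_zero (c / r) b hb
  have h2 := tendsto_rpow_atTop hr
  refine (h1.comp h2).congr' ?_
  filter_upwards [eventually_gt_atTop (0:ℝ)] with y hy
  simp only [Function.comp_apply]
  rw [← Real.rpow_mul hy.le, mul_div_cancel₀ _ hr.ne', neg_mul]

/-- global bound for `y^c * exp(-(y^r))` on `y ≥ 0`. -/
lemma exists_bound {r : ℝ} (hr : 0 < r) {c : ℝ} (hc : 0 ≤ c) :
    ∃ C : ℝ, 0 ≤ C ∧ ∀ y : ℝ, 0 ≤ y → y ^ c * Real.exp (-(y ^ r)) ≤ C := by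
  have h0 := tendsto_rpow_exp_zero hr c (one_pos)
  simp only [one_mul] at h0
  have h1 : ∀ᶠ y in atTop, (fun y : ℝ => y ^ c * Real.exp (-(y ^ r))) y < 1 :=
    h0.eventually (eventually_lt_nhds one_pos)
  obtain ⟨R, hR⟩ := h1.exists_forall_of_atTop
  obtain ⟨C, hC⟩ := (isCompact_Icc (a := (0:ℝ)) (b := max R 0)).exists_bound_of_continuousOn
    (cont_f hr.le hc).continuousOn
  refine ⟨max C 1, le_trans zero_le_one (le_max_right _ _), fun y hy => ?_⟩
  rcases le_or_gt y (max R 0) with h | h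
  · exact le_trans (le_trans (le_abs_self _) (hC y ⟨hy, h⟩)) (le_max_left _ _)
  · exact le_trans (hR y (le_trans (le_max_left _ _) h.le)).le (le_max_right _ _)



/-- summability of `n^ν e^{-t n^r}`. -/
lemma summable_main {r ν t : ℝ} (hr : 0 < r) (ht : 0 < t) :
    Summable (fun n : ℕ => (n : ℝ) ^ ν * Real.exp (-(t * (n : ℝ) ^ r))) := by
  have h0 := tendsto_rpow_exp_zero hr (ν + 2) ht
  have h1 : ∀ᶠ y in atTop, (fun y : ℝ => y ^ (ν + 2) * Real.exp (-(t * y ^ r))) y ≤ 1 :=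
    h0.eventually (eventually_le_nhds one_pos)
  refine summable_of_isBigO_nat (Real.summable_nat_rpow.mpr (by norm_num : (-2:ℝ) < -1)) ?_
  rw [Asymptotics.isBigO_iff]
  refine ⟨1, ?_⟩
  obtain ⟨R, hR⟩ := h1.exists_forall_of_atTop
  filter_upwards [eventually_ge_atTop (max 1 (Nat.ceil (max R 0)))] with n hn
  have hn1 : (1:ℝ) ≤ (n:ℝ) := by exact_mod_cast Nat.one_le_cast.mpr (le_trans (le_max_left _ _) hn)
  have hnR : R ≤ (n:ℝ) := by
    calc R ≤ max R 0 := le_max_left _ _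
    _ ≤ Nat.ceil (max R 0) := Nat.le_ceil _
    _ ≤ (n:ℝ) := by exact_mod_cast le_trans (le_max_right _ _) hn
  have hnpos : (0:ℝ) < n := lt_of_lt_of_le one_pos hn1
  have key : (n:ℝ) ^ (ν+2) * Real.exp (-(t * (n:ℝ) ^ r)) ≤ 1 := hR n hnR
  have hsplit : (n:ℝ) ^ ν = (n:ℝ) ^ (ν+2) * (n:ℝ) ^ (-2:ℝ) := by
    rw [← Real.rpow_add hnpos]; ring_nf
  rw [Real.norm_eq_abs, Real.norm_eq_abs, abs_of_nonneg (by positivity),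
    abs_of_nonneg (by positivity), one_mul, hsplit]
  calc (n:ℝ) ^ (ν+2) * (n:ℝ) ^ (-2:ℝ) * Real.exp (-(t * (n:ℝ) ^ r))
      = ((n:ℝ) ^ (ν+2) * Real.exp (-(t * (n:ℝ) ^ r))) * (n:ℝ) ^ (-2:ℝ) := by ring
    _ ≤ 1 * (n:ℝ) ^ (-2:ℝ) := by
        exact mul_le_mul_of_nonneg_right key (by positivity)
    _ = (n:ℝ) ^ (-2:ℝ) := one_mul _



lemma union_Ioc {h : ℝ} (hh : 0 < h) :
    Ioi (0:ℝ) = ⋃ n : ℕ, Ioc (h * n) (h * (n + 1)) := by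
  ext x
  simp only [mem_Ioi, mem_iUnion, mem_Ioc]
  constructor
  · intro hx
    have hxh : 0 < x / h := div_pos hx hh
    set k := ⌈x / h⌉ with hk
    have hk1 : 1 ≤ k := Int.ceil_pos.mpr hxh
    have hj : ((k - 1).toNat : ℤ) = k - 1 := Int.toNat_of_nonneg (by omega)
    refine ⟨(k - 1).toNat, ?_, ?_⟩
    · have : ((k - 1).toNat : ℝ) = (k : ℝ) - 1 := by
        exact_mod_cast congrArg (Int.cast : ℤ → ℝ) hj
      rw [this]
      have h2 : (k : ℝ) - 1 < x / h := by
        have := Int.ceil_lt_add_one (x / h)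
        push_cast at this ⊢
        linarith
      calc h * ((k:ℝ) - 1) < h * (x / h) := by
            exact mul_lt_mul_of_pos_left h2 hh
        _ = x := by field_simp
    · have : ((k - 1).toNat : ℝ) + 1 = (k : ℝ) := by
        have := congrArg (Int.cast : ℤ → ℝ) hj
        push_cast at this; linarith
      rw [this]
      have h2 : x / h ≤ (k : ℝ) := Int.le_ceil _
      calc x = h * (x / h) := by field_simp
        _ ≤ h * (k : ℝ) := mul_le_mul_of_nonneg_left h2 hh.le
  · rintro ⟨n, hn1, -⟩
    exact lt_of_le_of_lt (by positivity) hn1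

lemma disj_Ioc {h : ℝ} (hh : 0 < h) :
    Pairwise (Function.onFun Disjoint fun n : ℕ => Ioc (h * n) (h * (n + 1))) := by
  intro m n hmn
  rcases hmn.lt_or_gt with hlt | hlt
  · rw [Function.onFun, Set.Ioc_disjoint_Ioc]
    refine le_trans (min_le_left _ _) (le_trans ?_ (le_max_right _ _))
    have : (m:ℝ) + 1 ≤ (n:ℝ) := by exact_mod_cast hlt
    nlinarith
  · rw [Function.onFun, Set.Ioc_disjoint_Ioc]
    refine le_trans (min_le_right _ _) (le_trans ?_ (le_max_left _ _))
    have : (n:ℝ) + 1 ≤ (m:ℝ) := by exact_mod_cast hlt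
    nlinarith

lemma ceil_const {h : ℝ} (hh : 0 < h) {n : ℕ} {x : ℝ}
    (hx : x ∈ Ioc (h * n) (h * (n + 1))) : (⌈x / h⌉ : ℝ) = (n : ℝ) + 1 := by
  have h1 : (n : ℝ) < x / h := by
    rw [lt_div_iff₀ hh]; linarith [hx.1, mul_comm h (n:ℝ)]
  have h2 : x / h ≤ (n : ℝ) + 1 := by
    rw [div_le_iff₀ hh]; linarith [hx.2, mul_comm h ((n:ℝ)+1)]
  have : ⌈x / h⌉ = (n : ℤ) + 1 := by
    rw [Int.ceil_eq_iff]
    constructor <;> push_cast <;> [linarith; linarith]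
  rw [this]; push_cast; ring

/-- The step-function integral identity. -/
lemma step_eq {f : ℝ → ℝ} {h : ℝ} (hh : 0 < h)
    (hint : IntegrableOn (fun x => f (h * (⌈x / h⌉ : ℝ))) (Ioi 0)) :
    ∫ x in Ioi (0:ℝ), f (h * (⌈x / h⌉ : ℝ)) = ∑' n : ℕ, h * f (h * (n + 1)) := by
  rw [show Ioi (0:ℝ) = ⋃ n : ℕ, Ioc (h * n) (h * (n + 1)) from union_Ioc hh] at hint ⊢
  rw [integral_iUnion (fun n => measurableSet_Ioc) (disj_Ioc hh) hint]
  congr 1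
  ext n
  rw [setIntegral_congr_fun measurableSet_Ioc
      (g := fun _ => f (h * ((n:ℝ) + 1))) (fun x hx => by rw [ceil_const hh hx]),
    setIntegral_const, measureReal_def, Real.volume_Ioc, smul_eq_mul]
  have : h * ((n:ℝ) + 1) - h * n = h := by ring
  rw [this, ENNReal.toReal_ofReal hh.le]



variable {r ν : ℝ} (hr : 0 < r) (hν : 0 ≤ ν)

/-- ceil point is in [x, x+h] -/
lemma ceil_mem {h x : ℝ} (hh : 0 < h) (hx : 0 < x) :
    x ≤ h * (⌈x / h⌉ : ℝ) ∧ h * (⌈x / h⌉ : ℝ) ≤ x + h := by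
  constructor
  · calc x = h * (x / h) := by field_simp
      _ ≤ h * (⌈x / h⌉ : ℝ) := mul_le_mul_of_nonneg_left (Int.le_ceil _) hh.le
  · have h1 : (⌈x / h⌉ : ℝ) ≤ x / h + 1 := (Int.ceil_lt_add_one _).le
    calc h * (⌈x / h⌉ : ℝ) ≤ h * (x / h + 1) := mul_le_mul_of_nonneg_left h1 hh.le
      _ = x + h := by rw [mul_add, mul_one, mul_div_cancel₀ _ hh.ne']

include hr hν in
/-- Main convergence via dominated convergence. -/
lemma tendsto_step_sum :
    Tendsto (fun h : ℝ => ∑' n : ℕ,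
        h * ((h * ((n:ℝ) + 1)) ^ ν * Real.exp (-((h * ((n:ℝ) + 1)) ^ r))))
      (nhdsWithin 0 (Ioi 0))
      (nhds ((1 / r) * Real.Gamma ((ν + 1) / r))) := by
  obtain ⟨Cb, hCb0, hCb⟩ := exists_bound hr hν
  obtain ⟨Cc, hCc0, hCc⟩ := exists_bound hr (by linarith : (0:ℝ) ≤ ν + 2)
  set f : ℝ → ℝ := fun y => y ^ ν * Real.exp (-(y ^ r)) with hf
  set g : ℝ → ℝ := fun x => if x ≤ 1 then Cb else Cc * x ^ (-2 : ℝ) with hg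
  -- pointwise domination off the step function bound
  have hdom : ∀ y x : ℝ, 0 < x → x ≤ y → y ≤ x + 1 → f y ≤ g x := by
    intro y x hx hxy hyx
    have hy : 0 < y := lt_of_lt_of_le hx hxy
    rcases le_or_gt x 1 with hx1 | hx1
    · simp only [hg, if_pos hx1]
      exact hCb y hy.le
    · simp only [hg, if_neg (not_le.mpr hx1)]
      have h1 : f y = (y ^ (ν + 2) * Real.exp (-(y ^ r))) * y ^ (-2:ℝ) := by
        rw [hf]
        rw [show y ^ (ν+2) * Real.exp (-(y^r)) * y ^ (-2:ℝ)
            = (y ^ (ν+2) * y ^ (-2:ℝ)) * Real.exp (-(y^r)) by ring,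
          ← Real.rpow_add hy]
        ring_nf
      rw [h1]
      have h2 : y ^ (-2:ℝ) ≤ x ^ (-2:ℝ) := by
        rw [Real.rpow_neg hy.le, Real.rpow_neg hx.le]
        refine inv_anti₀ (by positivity) ?_
        exact Real.rpow_le_rpow hx.le hxy (by norm_num)
      calc (y ^ (ν + 2) * Real.exp (-(y ^ r))) * y ^ (-2:ℝ)
          ≤ Cc * y ^ (-2:ℝ) := mul_le_mul_of_nonneg_right (hCc y hy.le) (by positivity)
        _ ≤ Cc * x ^ (-2:ℝ) := mul_le_mul_of_nonneg_left h2 hCc0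
  -- integrability of g on Ioi 0
  have hgint : IntegrableOn g (Ioi 0) := by
    rw [show Ioi (0:ℝ) = Ioc 0 1 ∪ Ioi 1 by
      rw [Set.Ioc_union_Ioi_eq_Ioi zero_le_one]]
    refine IntegrableOn.union ?_ ?_
    · have hbase : IntegrableOn (fun _ : ℝ => Cb) (Ioc 0 1) volume :=
        (integrableOn_const_iff).mpr (Or.inr measure_Ioc_lt_top)
      refine hbase.congr_fun (fun x hx => ?_) measurableSet_Ioc
      rw [hg]; dsimp only; rw [if_pos hx.2]
    · have hbase : IntegrableOn (fun x : ℝ => Cc * x ^ (-2:ℝ)) (Ioi 1) :=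
        (integrableOn_Ioi_rpow_of_lt (by norm_num : (-2:ℝ) < -1) one_pos).const_mul Cc
      refine hbase.congr_fun (fun x hx => ?_) measurableSet_Ioi
      rw [hg]; dsimp only; rw [if_neg (not_le.mpr hx)]
  -- measurability of the step functions
  have hmeas : ∀ h : ℝ, AEStronglyMeasurable
      (fun x : ℝ => f (h * (⌈x / h⌉ : ℝ))) (volume.restrict (Ioi 0)) := by
    intro h
    refine ((cont_f hr.le hν).measurable.comp ?_).aestronglyMeasurable
    have hc : Measurable (fun n : ℤ => (n : ℝ)) := measurable_from_top
    exact measurable_const.mul (hc.comp (measurable_id.div_const h).ceil)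
  -- the uniform a.e. bound
  have hbnd : ∀ h ∈ Ioc (0:ℝ) 1, ∀ᵐ x ∂(volume.restrict (Ioi (0:ℝ))),
      ‖f (h * (⌈x / h⌉ : ℝ))‖ ≤ g x := by
    intro h hh
    rw [ae_restrict_iff' measurableSet_Ioi]
    refine ae_of_all _ (fun x hx => ?_)
    have hx0 : (0:ℝ) < x := hx
    obtain ⟨h1, h2⟩ := ceil_mem hh.1 hx0
    have hy1 : h * (⌈x / h⌉ : ℝ) ≤ x + 1 := le_trans h2 (by linarith [hh.2])
    rw [Real.norm_eq_abs, abs_of_nonneg ?_]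
    · exact hdom _ x hx0 h1 hy1
    · simp only [hf]
      exact mul_nonneg (Real.rpow_nonneg (le_trans hx0.le h1) ν) (Real.exp_nonneg _)
  -- apply dominated convergence
  have key := MeasureTheory.tendsto_integral_filter_of_dominated_convergence
    (μ := volume.restrict (Ioi (0:ℝ))) (l := nhdsWithin (0:ℝ) (Ioi 0))
    (F := fun h x => f (h * (⌈x / h⌉ : ℝ))) (f := f) (bound := g)
    (Filter.Eventually.of_forall hmeas)
    ?_ hgint ?_
  · -- identify the limit integral and pass from integrals to sums
    have hval : ∫ x in Ioi (0:ℝ), f x = (1 / r) * Real.Gamma ((ν + 1) / r) := by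
      rw [hf]
      simpa using integral_rpow_mul_exp_neg_rpow hr (by linarith : (-1:ℝ) < ν)
    rw [hval] at key
    refine key.congr' ?_
    filter_upwards [Ioc_mem_nhdsGT one_pos] with h hh
    have hint : IntegrableOn (fun x => f (h * (⌈x / h⌉ : ℝ))) (Ioi 0) :=
      Integrable.mono' hgint (hmeas h) (hbnd h hh)
    rw [step_eq hh.1 hint]
  · -- domination
    filter_upwards [Ioc_mem_nhdsGT one_pos] with h hh
    exact hbnd h hh
  · -- pointwise convergence
    rw [ae_restrict_iff' measurableSet_Ioi]
    refine ae_of_all _ (fun x hx => ?_)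
    have hx0 : (0:ℝ) < x := hx
    have hinner : Tendsto (fun h : ℝ => h * (⌈x / h⌉ : ℝ))
        (nhdsWithin 0 (Ioi 0)) (nhds x) := by
      have hlow : ∀ᶠ h in nhdsWithin (0:ℝ) (Ioi 0), x ≤ h * (⌈x / h⌉ : ℝ) := by
        filter_upwards [self_mem_nhdsWithin] with h hh
        exact (ceil_mem hh hx0).1
      have hup : ∀ᶠ h in nhdsWithin (0:ℝ) (Ioi 0), h * (⌈x / h⌉ : ℝ) ≤ x + h := by
        filter_upwards [self_mem_nhdsWithin] with h hh
        exact (ceil_mem hh hx0).2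
      have hupt : Tendsto (fun h : ℝ => x + h) (nhdsWithin 0 (Ioi 0)) (nhds x) := by
        have : Tendsto (fun h : ℝ => x + h) (nhds 0) (nhds (x + 0)) :=
          (continuous_const.add continuous_id).tendsto 0
        simpa using this.mono_left nhdsWithin_le_nhds
      exact tendsto_of_tendsto_of_tendsto_of_le_of_le' tendsto_const_nhds hupt hlow hup
    exact Filter.Tendsto.comp ((cont_f hr.le hν).continuousAt) hinner

end HeatKernelSumAux

open HeatKernelSumAux Real Filter Set MeasureTheory in


/-- One-dimensional heat-kernel lattice sum asymptotics:
`lim_{t→0⁺} t^((ν+1)/r) · Σ_{q∈ℤ} |q|^ν e^{-t|q|^r} = (2/r) · Γ((ν+1)/r)`. -/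
theorem heat_kernel_lattice_sum_asymptotics (r ν : ℝ) (hr : 0 < r) (hν : 0 ≤ ν) :
    Filter.Tendsto
      (fun t : ℝ =>
        t ^ ((ν + 1) / r) * ∑' q : ℤ, |(q : ℝ)| ^ ν * Real.exp (-t * |(q : ℝ)| ^ r))
      (nhdsWithin (0 : ℝ) (Set.Ioi 0))
      (nhds ((2 / r) * Real.Gamma ((ν + 1) / r))) := by
  set s : ℝ := (ν + 1) / r with hsdef
  have hs : 0 < s := by positivity
  set Ψ : ℝ → ℝ := fun h => ∑' n : ℕ,
      h * ((h * ((n:ℝ) + 1)) ^ ν * Real.exp (-((h * ((n:ℝ) + 1)) ^ r))) with hΨ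
  -- Step A : t ↦ t^(1/r) into 𝓝[>]0
  have hA : Tendsto (fun t : ℝ => t ^ (1/r : ℝ)) (nhdsWithin 0 (Ioi 0))
      (nhdsWithin 0 (Ioi 0)) := by
    refine tendsto_nhdsWithin_of_tendsto_nhds_of_eventually_within _ ?_ ?_
    · have h0 := (Real.continuousAt_rpow_const 0 (1/r) (Or.inr (by positivity))).tendsto
      rw [Real.zero_rpow (by positivity : (1/r:ℝ) ≠ 0)] at h0
      exact h0.mono_left nhdsWithin_le_nhds
    · filter_upwards [self_mem_nhdsWithin] with t ht
      exact Real.rpow_pos_of_pos ht _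
  -- Step A0 : t^s * 0^ν → 0
  have hA0 : Tendsto (fun t : ℝ => t ^ s * (0:ℝ) ^ ν) (nhdsWithin 0 (Ioi 0)) (nhds 0) := by
    have h0 := (Real.continuousAt_rpow_const 0 s (Or.inr hs.le)).tendsto
    rw [Real.zero_rpow hs.ne'] at h0
    have h1 : Tendsto (fun t : ℝ => t ^ s) (nhdsWithin (0:ℝ) (Ioi 0)) (nhds 0) :=
      h0.mono_left nhdsWithin_le_nhds
    have := h1.mul_const ((0:ℝ) ^ ν)
    simpa using this
  -- combined limit
  have hcomb : Tendsto (fun t : ℝ => t ^ s * (0:ℝ) ^ ν + 2 * Ψ (t ^ (1/r : ℝ)))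
      (nhdsWithin 0 (Ioi 0)) (nhds ((2 / r) * Real.Gamma s)) := by
    have h2 : Tendsto (fun t : ℝ => 2 * Ψ (t ^ (1/r : ℝ))) (nhdsWithin 0 (Ioi 0))
        (nhds (2 * ((1 / r) * Real.Gamma s))) :=
      (((tendsto_step_sum hr hν).comp hA)).const_mul 2
    have := hA0.add h2
    rw [zero_add] at this
    convert this using 2
    ring
  -- eventual equality
  refine Tendsto.congr' ?_ hcomb
  filter_upwards [self_mem_nhdsWithin] with t ht
  have ht0 : (0:ℝ) < t := ht
  set h : ℝ := t ^ (1/r : ℝ) with hhdef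
  have hh : 0 < h := Real.rpow_pos_of_pos ht0 _
  have hhr : h ^ r = t := by
    rw [hhdef, ← Real.rpow_mul ht0.le, one_div_mul_cancel hr.ne', Real.rpow_one]
  have hts : t ^ s = h ^ (ν + 1) := by
    rw [hhdef, ← Real.rpow_mul ht0.le, hsdef]
    congr 1
    field_simp
  have sm : Summable (fun n : ℕ => (n:ℝ) ^ ν * Real.exp (-(t * (n:ℝ) ^ r))) :=
    summable_main hr ht0
  set T : ℝ := ∑' n : ℕ, ((n:ℝ) + 1) ^ ν * Real.exp (-(t * ((n:ℝ) + 1) ^ r)) with hT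
  have S1 : Summable (fun n : ℕ =>
      |((n:ℤ):ℝ)| ^ ν * Real.exp (-t * |((n:ℤ):ℝ)| ^ r)) := by
    refine sm.congr (fun n => ?_)
    rw [Int.cast_natCast, abs_of_nonneg (Nat.cast_nonneg n : (0:ℝ) ≤ n), neg_mul]
  have S2 : Summable (fun n : ℕ =>
      |(Int.cast (-((n:ℤ) + 1)) : ℝ)| ^ ν * Real.exp (-t * |(Int.cast (-((n:ℤ) + 1)) : ℝ)| ^ r)) := by
    refine ((summable_nat_add_iff 1).mpr sm).congr (fun n => ?_)
    have hc : (Int.cast (-((n:ℤ) + 1)) : ℝ) = -((n:ℝ) + 1) := by push_cast; ring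
    rw [hc, abs_neg, abs_of_nonneg (by positivity : (0:ℝ) ≤ (n:ℝ) + 1), neg_mul]
    push_cast
    ring_nf
  have hsplit : (∑' q : ℤ, |(q:ℝ)| ^ ν * Real.exp (-t * |(q:ℝ)| ^ r))
      = (0:ℝ) ^ ν + 2 * T := by
    rw [tsum_of_nat_of_neg_add_one
      (f := fun q : ℤ => |(q:ℝ)| ^ ν * Real.exp (-t * |(q:ℝ)| ^ r)) S1 S2,
      Summable.tsum_eq_zero_add S1]
    have e0 : |(((0:ℕ):ℤ):ℝ)| ^ ν * Real.exp (-t * |(((0:ℕ):ℤ):ℝ)| ^ r) = (0:ℝ) ^ ν := by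
      simp [Real.zero_rpow hr.ne']
    have e2 : (∑' n : ℕ, |(((n+1:ℕ):ℤ):ℝ)| ^ ν * Real.exp (-t * |(((n+1:ℕ):ℤ):ℝ)| ^ r)) = T := by
      refine tsum_congr (fun n => ?_)
      have hc : ((((n+1:ℕ):ℤ)):ℝ) = (n:ℝ) + 1 := by push_cast; ring
      rw [hc, abs_of_nonneg (by positivity : (0:ℝ) ≤ (n:ℝ) + 1), neg_mul]
    have e3 : (∑' n : ℕ, |(Int.cast (-((n:ℤ) + 1)) : ℝ)| ^ ν * Real.exp (-t * |(Int.cast (-((n:ℤ) + 1)) : ℝ)| ^ r)) = T := by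
      refine tsum_congr (fun n => ?_)
      have hc : (Int.cast (-((n:ℤ) + 1)) : ℝ) = -((n:ℝ) + 1) := by push_cast; ring
      rw [hc, abs_neg, abs_of_nonneg (by positivity : (0:ℝ) ≤ (n:ℝ) + 1), neg_mul]
    rw [e0, e2, e3]
    ring
  have hΨh : Ψ h = t ^ s * T := by
    rw [hΨ, hT, ← tsum_mul_left]
    refine tsum_congr (fun n => ?_)
    have hn1 : (0:ℝ) ≤ (n:ℝ) + 1 := by positivity
    rw [Real.mul_rpow hh.le hn1, Real.mul_rpow hh.le hn1, hhr, hts,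
      Real.rpow_add hh ν 1, Real.rpow_one]
    ring
  rw [hsplit, hΨh]
  ring
end

section
/- Closed form of the melonic threshold integral. Let η > 0, s ∈ ℝ, α > -1, β > -1, and y ∈ [0,1). Then 2³ e^{(3+α+β)s} ∫_0^{(1-y^{2η})^{1/(2η)}} x₁^α ( ∫_0^{(1-y^{2η}-x₁^{2η})^{1/(2η)}} x₂^β ( ∫_0^{(1-y^{2η}-x₁^{2η}-x₂^{2η})^{1/(2η)}} 1 dx₃ ) dx₂ ) dx₁ = (8 e^{(3+α+β)s}/(2η)²) · (1-y^{2η})^{(3+α+β)/(2η)} · B((α+1)/(2η), (β+2)/(2η) + 1) · B((β+1)/(2η), 1/(2η) + 1), where B(a,b) = Γ(a)Γ(b)/Γ(a+b) is the Euler Beta function and Γ is the real Gamma function. -/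
open MeasureTheory intervalIntegral Set

/-- The Euler Beta function `B(u,v) = Γ(u)Γ(v)/Γ(u+v)` (real Gamma function). -/
noncomputable def eulerBeta (u v : ℝ) : ℝ :=
  Real.Gamma u * Real.Gamma v / Real.Gamma (u + v)

lemma beta_eq (m c : ℝ) (hm : 0 < m) (hc : -1 < c) :
    ∫ t in (0:ℝ)..1, t ^ (m - 1) * (1 - t) ^ c = eulerBeta m (c + 1) := by
  have hc1 : (0:ℝ) < c + 1 := by linarith
  have h1 : Complex.betaIntegral (m : ℂ) ((c : ℝ) + 1 : ℝ) =
      ((∫ t in (0:ℝ)..1, t ^ (m - 1) * (1 - t) ^ c : ℝ) : ℂ) := by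
    rw [Complex.betaIntegral, ← intervalIntegral.integral_ofReal,
      intervalIntegral.integral_of_le zero_le_one,
      intervalIntegral.integral_of_le zero_le_one]
    refine setIntegral_congr_fun measurableSet_Ioc (fun x hx => ?_)
    have hx0 : (0:ℝ) ≤ x := hx.1.le
    have hx1 : (0:ℝ) ≤ 1 - x := by linarith [hx.2]
    push_cast
    rw [Complex.ofReal_cpow hx0, Complex.ofReal_cpow hx1]
    push_cast
    ring_nf
  have h2 := Complex.Gamma_mul_Gamma_eq_betaIntegral
    (s := (m : ℂ)) (t := ((c + 1 : ℝ) : ℂ)) (by simpa using hm) (by simpa using hc1)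
  rw [h1] at h2
  have h3 : ((m : ℂ) + ((c + 1 : ℝ) : ℂ)) = ((m + (c + 1) : ℝ) : ℂ) := by push_cast; ring
  rw [h3, Complex.Gamma_ofReal, Complex.Gamma_ofReal, Complex.Gamma_ofReal,
    ← Complex.ofReal_mul, ← Complex.ofReal_mul] at h2
  have h4 : Real.Gamma m * Real.Gamma (c + 1)
      = Real.Gamma (m + (c + 1)) * ∫ t in (0:ℝ)..1, t ^ (m - 1) * (1 - t) ^ c :=
    Complex.ofReal_inj.mp h2
  have h5 : Real.Gamma (m + (c + 1)) ≠ 0 :=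
    (Real.Gamma_pos_of_pos (by linarith)).ne'
  rw [eulerBeta, h4]
  field_simp

lemma key {p α c A : ℝ} (hp : 0 < p) (hα : -1 < α) (hc : 0 ≤ c) (hA : 0 ≤ A) :
    ∫ x in (0:ℝ)..(A ^ (1 / p)), x ^ α * (A - x ^ p) ^ c
      = A ^ ((α + 1) / p + c) / p * eulerBeta ((α + 1) / p) (c + 1) := by
  have hp' : (1:ℝ)/p ≠ 0 := one_div_ne_zero hp.ne'
  have hm : 0 < (α + 1) / p := div_pos (by linarith) hp
  rcases eq_or_lt_of_le hA with hA0 | hApos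
  · rw [← hA0, Real.zero_rpow hp', Real.zero_rpow (by positivity : (α+1)/p + c ≠ 0)]
    simp
  set m := (α + 1) / p with hmdef
  set f : ℝ → ℝ := fun t => A ^ (1/p) * t ^ (1/p) with hf_def
  set f' : ℝ → ℝ := fun t => A ^ (1/p) * ((1/p) * t ^ (1/p - 1)) with hf'_def
  set g : ℝ → ℝ := fun x => x ^ α * (A - x ^ p) ^ c with hg_def
  have hfcont : Continuous f := by
    apply continuous_const.mul
    rw [continuous_iff_continuousAt]
    exact fun x => Real.continuousAt_rpow_const x _ (Or.inr (by positivity))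
  have hxple : ∀ x : ℝ, 0 ≤ x → x ≤ A ^ (1/p) → x ^ p ≤ A := by
    intro x hx0 hx1
    calc x ^ p ≤ (A ^ (1/p)) ^ p := Real.rpow_le_rpow hx0 hx1 hp.le
    _ = A := by rw [← Real.rpow_mul hA, one_div, inv_mul_cancel₀ hp.ne', Real.rpow_one]
  -- continuity of g away from 0
  have hgcont : ContinuousOn g {x : ℝ | 0 < x} := by
    intro x hx
    apply ContinuousAt.continuousWithinAt
    apply ContinuousAt.mul
    · exact Real.continuousAt_rpow_const x _ (Or.inl (ne_of_gt hx))
    · exact ContinuousAt.rpow_const (by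
        apply ContinuousAt.sub continuousAt_const
        exact Real.continuousAt_rpow_const x _ (Or.inl (ne_of_gt hx))) (Or.inr hc)
  have hgInt : IntegrableOn g (Icc 0 (A ^ (1/p))) := by
    have h1 : IntervalIntegrable (fun x : ℝ => x ^ α) volume 0 (A ^ (1/p)) :=
      intervalIntegral.intervalIntegrable_rpow' hα
    have h2 : ContinuousOn (fun x : ℝ => (A - x ^ p) ^ c) (Set.uIcc 0 (A ^ (1/p))) := by
      apply ContinuousOn.rpow_const
      · exact continuousOn_const.sub (fun x hx =>
          (Real.continuousAt_rpow_const x p (Or.inr hp.le)).continuousWithinAt)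
      · exact fun x _ => Or.inr hc
    have := h1.mul_continuousOn h2
    rwa [intervalIntegrable_iff_integrableOn_Icc_of_le
      (Real.rpow_nonneg hA _)] at this
  -- pointwise identity on Ioc 0 1
  have hpoint : ∀ t ∈ Ioc (0:ℝ) 1,
      f' t • g (f t) = A ^ (m + c) / p * (t ^ (m - 1) * (1 - t) ^ c) := by
    intro t ht
    have ht0 : 0 < t := ht.1
    have ht1 : t ≤ 1 := ht.2
    have hft : f t ^ α = A ^ (α / p) * t ^ (α / p) := by
      rw [hf_def]
      rw [Real.mul_rpow (Real.rpow_nonneg hA _) (Real.rpow_nonneg ht0.le _),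
        ← Real.rpow_mul hA, ← Real.rpow_mul ht0.le]
      rw [show 1/p * α = α/p by ring]
    have hftp : f t ^ p = A * t := by
      rw [hf_def, Real.mul_rpow (Real.rpow_nonneg hA _) (Real.rpow_nonneg ht0.le _),
        ← Real.rpow_mul hA, ← Real.rpow_mul ht0.le, one_div, inv_mul_cancel₀ hp.ne',
        Real.rpow_one, Real.rpow_one]
    have hAt : A - A * t = A * (1 - t) := by ring
    have hAtc : (A * (1 - t)) ^ c = A ^ c * (1 - t) ^ c :=
      Real.mul_rpow hApos.le (by linarith)
    rw [smul_eq_mul, hg_def, hf'_def]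
    simp only []
    rw [hft, hftp, hAt, hAtc]
    rw [show A ^ (1/p) * (1/p * t ^ (1/p - 1)) * (A ^ (α/p) * t ^ (α/p) * (A ^ c * (1-t) ^ c))
        = (A ^ (1/p) * A ^ (α/p) * A ^ c) * (t ^ (1/p - 1) * t ^ (α/p)) * (1-t) ^ c / p
      by ring]
    rw [← Real.rpow_add hApos, ← Real.rpow_add hApos, ← Real.rpow_add ht0]
    rw [show 1/p + α/p + c = m + c by rw [hmdef]; ring,
      show 1/p - 1 + α/p = m - 1 by rw [hmdef]; ring]
    ring
  -- the substituted integral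
  have hsub : (∫ t in (0:ℝ)..1, f' t • (g ∘ f) t) = ∫ u in (f 0)..(f 1), g u := by
    apply intervalIntegral.integral_comp_smul_deriv''' (hfcont.continuousOn)
    · intro t ht
      rw [min_def, max_def] at ht
      simp only [if_pos zero_le_one] at ht
      have : HasDerivAt f (f' t) t := by
        have := (Real.hasDerivAt_rpow_const (p := 1/p) (Or.inl ht.1.ne')).const_mul (A ^ (1/p))
        exact this
      exact this.hasDerivWithinAt
    · refine hgcont.mono ?_
      rintro u ⟨t, ht, rfl⟩
      rw [min_def, max_def] at ht
      simp only [if_pos zero_le_one] at ht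
      exact mul_pos (Real.rpow_pos_of_pos hApos _) (Real.rpow_pos_of_pos ht.1 _)
    · refine hgInt.mono_set ?_
      rintro u ⟨t, ht, rfl⟩
      rw [uIcc_of_le zero_le_one] at ht
      constructor
      · exact mul_nonneg (Real.rpow_nonneg hA _) (Real.rpow_nonneg ht.1 _)
      · calc A ^ (1/p) * t ^ (1/p) ≤ A ^ (1/p) * 1 := by
              apply mul_le_mul_of_nonneg_left _ (Real.rpow_nonneg hA _)
              exact Real.rpow_le_one ht.1 ht.2 (by positivity)
          _ = A ^ (1/p) := mul_one _
    · rw [uIcc_of_le zero_le_one, integrableOn_Icc_iff_integrableOn_Ioc]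
      have hnice : IntegrableOn (fun t : ℝ => A ^ (m + c) / p * (t ^ (m - 1) * (1 - t) ^ c))
          (Ioc (0:ℝ) 1) := by
        have h1 : IntervalIntegrable (fun t : ℝ => t ^ (m - 1)) volume 0 1 :=
          intervalIntegral.intervalIntegrable_rpow' (by linarith)
        have h2 : ContinuousOn (fun t : ℝ => (1 - t) ^ c) (Set.uIcc (0:ℝ) 1) := by
          apply ContinuousOn.rpow_const
          · exact continuousOn_const.sub continuousOn_id
          · exact fun x _ => Or.inr hc
        have h3 := (h1.mul_continuousOn h2).const_mul (A ^ (m + c) / p)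
        rw [intervalIntegrable_iff_integrableOn_Ioc_of_le zero_le_one] at h3
        simpa [mul_assoc] using h3
      exact hnice.congr_fun (fun t ht => (hpoint t ht).symm) measurableSet_Ioc
  have hf0 : f 0 = 0 := by
    simp only [hf_def]
    rw [Real.zero_rpow hp', mul_zero]
  have hf1 : f 1 = A ^ (1/p) := by simp [hf_def]
  simp only [Function.comp] at hsub
  rw [hf0, hf1] at hsub
  rw [← hsub, intervalIntegral.integral_of_le zero_le_one,
    setIntegral_congr_fun measurableSet_Ioc hpoint, MeasureTheory.integral_const_mul,
    ← intervalIntegral.integral_of_le zero_le_one, beta_eq m c hm (by linarith)]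

/-- Closed form of the melonic threshold integral. -/
theorem melonic_threshold_integral (η s α β y : ℝ) (hη : 0 < η)
    (hα : -1 < α) (hβ : -1 < β) (hy0 : 0 ≤ y) (hy1 : y < 1) :
    2 ^ 3 * Real.exp ((3 + α + β) * s) *
      ∫ x₁ in (0 : ℝ)..((1 - y ^ (2 * η)) ^ (1 / (2 * η))),
        x₁ ^ α *
          ∫ x₂ in (0 : ℝ)..((1 - y ^ (2 * η) - x₁ ^ (2 * η)) ^ (1 / (2 * η))),
            x₂ ^ β *
              ∫ _x₃ in (0 : ℝ)..
                  ((1 - y ^ (2 * η) - x₁ ^ (2 * η) - x₂ ^ (2 * η)) ^ (1 / (2 * η))),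
                (1 : ℝ)
      = (8 * Real.exp ((3 + α + β) * s) / (2 * η) ^ 2) *
          (1 - y ^ (2 * η)) ^ ((3 + α + β) / (2 * η)) *
          eulerBeta ((α + 1) / (2 * η)) ((β + 2) / (2 * η) + 1) *
          eulerBeta ((β + 1) / (2 * η)) (1 / (2 * η) + 1) := by
  set p := 2 * η with hpdef
  have hp : (0:ℝ) < p := by positivity
  have hyp : y ^ p < 1 := Real.rpow_lt_one hy0 hy1 hp
  have hA : (0:ℝ) < 1 - y ^ p := by linarith
  have hxple : ∀ B x : ℝ, 0 ≤ B → 0 ≤ x → x ≤ B ^ (1/p) → x ^ p ≤ B := by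
    intro B x hB hx0 hx1
    calc x ^ p ≤ (B ^ (1/p)) ^ p := Real.rpow_le_rpow hx0 hx1 hp.le
    _ = B := by rw [← Real.rpow_mul hB, one_div, inv_mul_cancel₀ hp.ne', Real.rpow_one]
  have houter : (∫ x₁ in (0:ℝ)..((1 - y ^ p) ^ (1 / p)),
        x₁ ^ α *
          ∫ x₂ in (0:ℝ)..((1 - y ^ p - x₁ ^ p) ^ (1 / p)),
            x₂ ^ β *
              ∫ _x₃ in (0:ℝ)..((1 - y ^ p - x₁ ^ p - x₂ ^ p) ^ (1 / p)), (1:ℝ))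
      = ∫ x₁ in (0:ℝ)..((1 - y ^ p) ^ (1 / p)),
          (eulerBeta ((β + 1) / p) (1 / p + 1) / p) *
            (x₁ ^ α * (1 - y ^ p - x₁ ^ p) ^ ((β + 2) / p)) := by
    apply intervalIntegral.integral_congr
    intro x₁ hx₁
    rw [Set.uIcc_of_le (Real.rpow_nonneg hA.le _)] at hx₁
    have hB : (0:ℝ) ≤ 1 - y ^ p - x₁ ^ p :=
      sub_nonneg.mpr (hxple _ _ hA.le hx₁.1 hx₁.2)
    have hmid : (∫ x₂ in (0:ℝ)..((1 - y ^ p - x₁ ^ p) ^ (1 / p)),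
          x₂ ^ β * ∫ _x₃ in (0:ℝ)..((1 - y ^ p - x₁ ^ p - x₂ ^ p) ^ (1 / p)), (1:ℝ))
        = ∫ x₂ in (0:ℝ)..((1 - y ^ p - x₁ ^ p) ^ (1 / p)),
            x₂ ^ β * (1 - y ^ p - x₁ ^ p - x₂ ^ p) ^ (1 / p) := by
      apply intervalIntegral.integral_congr
      intro x₂ _
      simp only []
      rw [integral_one, sub_zero]
    simp only []
    rw [hmid, key hp hβ (by positivity) hB,
      show (β + 1) / p + 1 / p = (β + 2) / p by ring]
    ring
  rw [houter, intervalIntegral.integral_const_mul,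
    key hp hα (div_nonneg (by linarith) hp.le) hA.le,
    show (α + 1) / p + (β + 2) / p = (3 + α + β) / p by ring]
  field_simp
  ring
end

section
/- One-loop necklace bubble asymptotics. One has lim_{Λ→∞} Λ · (9/4) Λ^{-3/2} · Σ_{q∈ℤ²} ∫_Λ^∞ Λ'^{-5/2} · exp( −(Λ^{-3/2} + Λ'^{-3/2})(|q₁|^{3/2} + |q₂|^{3/2}) ) dΛ' = 18 (1 − 2^{-1/3}) Γ(5/3)², where Γ denotes the real Gamma function. -/
open MeasureTheory Real Set Filter
set_option maxHeartbeats 1000000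

noncomputable def th (s : ℝ) : ℝ := ∑' n : ℤ, Real.exp (-s * |(n : ℝ)| ^ ((3:ℝ)/2))

lemma nat_le_rpow (n : ℕ) : (n : ℝ) ≤ (n : ℝ) ^ ((3:ℝ)/2) := by
  rcases Nat.eq_zero_or_pos n with h | h
  · simp [h]
  · calc (n:ℝ) = (n:ℝ) ^ (1:ℝ) := (Real.rpow_one _).symm
      _ ≤ _ := Real.rpow_le_rpow_of_exponent_le (by exact_mod_cast h) (by norm_num)

lemma summable_nat (s : ℝ) (hs : 0 < s) :
    Summable (fun n : ℕ => Real.exp (-s * (n : ℝ) ^ ((3:ℝ)/2))) := by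
  apply Summable.of_nonneg_of_le (fun n => (Real.exp_pos _).le)
    (fun n => ?_) (summable_geometric_of_lt_one (Real.exp_pos (-s)).le
      (Real.exp_lt_one_iff.mpr (by linarith)))
  rw [← Real.exp_nat_mul]
  apply Real.exp_le_exp.mpr
  have := nat_le_rpow n
  nlinarith [nat_le_rpow n, Real.rpow_nonneg (Nat.cast_nonneg (α := ℝ) n) ((3:ℝ)/2)]

lemma summable_int (s : ℝ) (hs : 0 < s) :
    Summable (fun n : ℤ => Real.exp (-s * |(n : ℝ)| ^ ((3:ℝ)/2))) := by
  apply Summable.of_nat_of_neg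
  · simpa using summable_nat s hs
  · simpa using summable_nat s hs


lemma intOn (s : ℝ) (hs : 0 < s) :
    IntegrableOn (fun x : ℝ => Real.exp (-s * x ^ ((3:ℝ)/2))) (Ioi 0) := by
  have := integrableOn_rpow_mul_exp_neg_mul_rpow (s := 0) (p := (3:ℝ)/2) (b := s)
    (by norm_num) (by norm_num) hs
  simpa using this

lemma I_val (s : ℝ) (hs : 0 < s) :
    ∫ x in Ioi (0:ℝ), Real.exp (-s * x ^ ((3:ℝ)/2)) = s ^ (-(2:ℝ)/3) * Real.Gamma (5/3) := by
  rw [integral_exp_neg_mul_rpow (by norm_num) hs]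
  norm_num

lemma anti_exp (s : ℝ) (hs : 0 < s) (A : ℝ) :
    AntitoneOn (fun x : ℝ => Real.exp (-s * x ^ ((3:ℝ)/2))) (Icc 0 A) := by
  intro x hx y hy hxy
  apply Real.exp_le_exp.mpr
  have : x ^ ((3:ℝ)/2) ≤ y ^ ((3:ℝ)/2) := Real.rpow_le_rpow hx.1 hxy (by norm_num)
  nlinarith

lemma summable_T (s : ℝ) (hs : 0 < s) :
    Summable (fun n : ℕ => Real.exp (-s * ((n : ℝ) + 1) ^ ((3:ℝ)/2))) := by
  have h := (summable_nat_add_iff (f := fun n : ℕ => Real.exp (-s * (n : ℝ) ^ ((3:ℝ)/2))) 1).2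
    (summable_nat s hs)
  convert h using 2 with n
  · rfl
  push_cast
  ring_nf

lemma T_le (s : ℝ) (hs : 0 < s) :
    ∑' n : ℕ, Real.exp (-s * ((n : ℝ) + 1) ^ ((3:ℝ)/2)) ≤ s ^ (-(2:ℝ)/3) * Real.Gamma (5/3) := by
  rw [← I_val s hs]
  apply Summable.tsum_le_of_sum_le (summable_T s hs)
  intro u
  obtain ⟨N, hN⟩ : ∃ N, u ⊆ Finset.range N := ⟨u.sup id + 1,
    fun x hx => Finset.mem_range.mpr (Nat.lt_succ_of_le (Finset.le_sup (f := id) hx))⟩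
  calc ∑ x ∈ u, Real.exp (-s * ((x:ℝ) + 1) ^ ((3:ℝ)/2))
      ≤ ∑ x ∈ Finset.range N, Real.exp (-s * ((x:ℝ) + 1) ^ ((3:ℝ)/2)) :=
        Finset.sum_le_sum_of_subset_of_nonneg hN (fun _ _ _ => (Real.exp_pos _).le)
    _ ≤ ∫ x in (0:ℝ)..(0 + N), Real.exp (-s * x ^ ((3:ℝ)/2)) := by
        have := (anti_exp s hs (0 + (N:ℝ))).sum_le_integral (x₀ := 0) (a := N)
        refine le_trans (le_of_eq ?_) this
        apply Finset.sum_congr rfl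
        intro i _
        push_cast
        norm_num
    _ ≤ ∫ x in Ioi (0:ℝ), Real.exp (-s * x ^ ((3:ℝ)/2)) := by
        rw [intervalIntegral.integral_of_le (by positivity)]
        apply setIntegral_mono_set (intOn s hs)
        · filter_upwards with x using (Real.exp_pos _).le
        · exact HasSubset.Subset.eventuallyLE (by norm_num [Set.Ioc_subset_Ioi_self])

lemma le_T (s : ℝ) (hs : 0 < s) :
    s ^ (-(2:ℝ)/3) * Real.Gamma (5/3) - 1 ≤
      ∑' n : ℕ, Real.exp (-s * ((n : ℝ) + 1) ^ ((3:ℝ)/2)) := by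
  have key : ∫ x in Ioi (1:ℝ), Real.exp (-s * x ^ ((3:ℝ)/2)) ≤
      ∑' n : ℕ, Real.exp (-s * ((n : ℝ) + 1) ^ ((3:ℝ)/2)) := by
    have hint : IntegrableOn (fun x : ℝ => Real.exp (-s * x ^ ((3:ℝ)/2))) (Ioi 1) :=
      (intOn s hs).mono (Ioi_subset_Ioi (by norm_num)) le_rfl
    refine le_of_tendsto (intervalIntegral_tendsto_integral_Ioi 1 hint
      (tendsto_atTop_add_const_left atTop (1:ℝ) tendsto_natCast_atTop_atTop)) ?_
    filter_upwards with N
    calc ∫ x in (1:ℝ)..(1 + N), Real.exp (-s * x ^ ((3:ℝ)/2))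
        ≤ ∑ i ∈ Finset.range N, Real.exp (-s * ((1:ℝ) + i) ^ ((3:ℝ)/2)) := by
          exact ((anti_exp s hs (1 + (N:ℝ))).mono
            (Icc_subset_Icc (by norm_num) le_rfl)).integral_le_sum (x₀ := 1) (a := N)
      _ ≤ ∑' n : ℕ, Real.exp (-s * ((n : ℝ) + 1) ^ ((3:ℝ)/2)) := by
          have := Summable.sum_le_tsum (Finset.range N) (fun i _ => (Real.exp_pos _).le) (summable_T s hs)
          refine le_trans (le_of_eq ?_) this
          exact Finset.sum_congr rfl (fun i _ => by ring_nf)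
  have split : ∫ x in Ioi (0:ℝ), Real.exp (-s * x ^ ((3:ℝ)/2)) ≤
      1 + ∫ x in Ioi (1:ℝ), Real.exp (-s * x ^ ((3:ℝ)/2)) := by
    have hu : Ioi (0:ℝ) = Ioc 0 1 ∪ Ioi 1 := (Set.Ioc_union_Ioi_eq_Ioi (by norm_num)).symm
    rw [hu, setIntegral_union (by simp [Set.disjoint_left]) measurableSet_Ioi
      ((intOn s hs).mono (by rw [hu]; exact Set.subset_union_left) le_rfl)
      ((intOn s hs).mono (by rw [hu]; exact Set.subset_union_right) le_rfl)]
    have : ∫ x in Ioc (0:ℝ) 1, Real.exp (-s * x ^ ((3:ℝ)/2)) ≤ 1 := by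
      calc ∫ x in Ioc (0:ℝ) 1, Real.exp (-s * x ^ ((3:ℝ)/2)) ≤ ∫ _ in Ioc (0:ℝ) 1, (1:ℝ) := by
            apply setIntegral_mono_on ((intOn s hs).mono (by norm_num [Set.Ioc_subset_Ioi_self]) le_rfl)
              (integrableOn_const (by simp)) measurableSet_Ioc
            intro x hx
            rw [← Real.exp_zero]
            apply Real.exp_le_exp.mpr
            have : (0:ℝ) ≤ x ^ ((3:ℝ)/2) := Real.rpow_nonneg hx.1.le _
            nlinarith
        _ = 1 := by simp
    linarith
  rw [← I_val s hs]
  linarith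

lemma th_eq (s : ℝ) (hs : 0 < s) :
    th s = 1 + 2 * ∑' n : ℕ, Real.exp (-s * ((n : ℝ) + 1) ^ ((3:ℝ)/2)) := by
  have h1 : Summable (fun n : ℕ => Real.exp (-s * |((n:ℤ):ℝ)| ^ ((3:ℝ)/2))) := by
    simpa using summable_nat s hs
  have h2 : Summable (fun n : ℕ => Real.exp (-s * |((-(n+1) : ℤ):ℝ)| ^ ((3:ℝ)/2))) := by
    have := summable_T s hs
    apply this.congr
    intro n
    push_cast
    rw [abs_of_nonpos (by linarith [Nat.cast_nonneg (α := ℝ) n])]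
    ring_nf
  rw [th, tsum_of_nat_of_neg_add_one (f := fun n : ℤ => Real.exp (-s * |(n:ℝ)| ^ ((3:ℝ)/2))) h1 h2]
  have e2 : ∑' n : ℕ, Real.exp (-s * |((-(n+1) : ℤ):ℝ)| ^ ((3:ℝ)/2))
      = ∑' n : ℕ, Real.exp (-s * ((n : ℝ) + 1) ^ ((3:ℝ)/2)) := by
    apply tsum_congr
    intro n
    push_cast
    rw [abs_of_nonpos (by linarith [Nat.cast_nonneg (α := ℝ) n])]
    ring_nf
  have e1 : ∑' n : ℕ, Real.exp (-s * |((n : ℤ):ℝ)| ^ ((3:ℝ)/2))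
      = 1 + ∑' n : ℕ, Real.exp (-s * ((n : ℝ) + 1) ^ ((3:ℝ)/2)) := by
    rw [Summable.tsum_eq_zero_add h1]
    congr 1
    · simp
    · apply tsum_congr
      intro n
      push_cast
      rw [abs_of_nonneg (by positivity)]
  rw [e1, e2]
  ring

lemma th_bound (s : ℝ) (hs : 0 < s) :
    |th s - 2 * Real.Gamma (5/3) * s ^ (-(2:ℝ)/3)| ≤ 1 := by
  have h1 := T_le s hs
  have h2 := le_T s hs
  rw [th_eq s hs, abs_le]
  constructor <;> nlinarith

lemma th_nonneg (s : ℝ) : 0 ≤ th s := tsum_nonneg (fun n => (Real.exp_pos _).le)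

lemma th_anti {s t : ℝ} (hs : 0 < s) (hst : s ≤ t) : th t ≤ th s := by
  apply Summable.tsum_le_tsum _ (summable_int t (lt_of_lt_of_le hs hst)) (summable_int s hs)
  intro n
  apply Real.exp_le_exp.mpr
  have : (0:ℝ) ≤ |(n:ℝ)| ^ ((3:ℝ)/2) := Real.rpow_nonneg (abs_nonneg _) _
  nlinarith

lemma th_sq (s : ℝ) (hs : 0 < s) :
    ∑' q : ℤ × ℤ, Real.exp (-s * (|(q.1 : ℝ)| ^ ((3:ℝ)/2) + |(q.2 : ℝ)| ^ ((3:ℝ)/2)))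
      = th s ^ 2 := by
  have hsum := summable_int s hs
  have key := Summable.tsum_mul_tsum (f := fun n : ℤ => Real.exp (-s * |(n:ℝ)| ^ ((3:ℝ)/2)))
    (g := fun n : ℤ => Real.exp (-s * |(n:ℝ)| ^ ((3:ℝ)/2))) hsum hsum
    (hsum.mul_of_nonneg hsum (fun n => (Real.exp_pos _).le) (fun n => (Real.exp_pos _).le))
  rw [th, sq, key]
  apply tsum_congr
  intro q
  rw [← Real.exp_add]
  ring_nf


lemma inner_rhs (a c : ℝ) (ha : 0 < a) (hc : 0 ≤ c) :
    ∫ t in Ioc (1:ℝ) 2, (2/3) * a * Real.exp (-(t * a) * c)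
      = if c = 0 then (2/3) * a
        else (2/(3*c)) * (Real.exp (-a*c) - Real.exp (-(2*a)*c)) := by
  rw [← intervalIntegral.integral_of_le (by norm_num : (1:ℝ) ≤ 2)]
  split_ifs with h
  · simp [h]; ring
  · have hc' : 0 < c := lt_of_le_of_ne hc (Ne.symm h)
    have key : ∀ t ∈ Set.uIcc (1:ℝ) 2, HasDerivAt (fun t => -(2/(3*c)) * Real.exp (-(t * a) * c))
        ((2/3) * a * Real.exp (-(t * a) * c)) t := by
      intro t _
      have h1 : HasDerivAt (fun t : ℝ => -(t * a) * c) (-(a * c)) t := by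
        simpa using (((hasDerivAt_id t).mul_const a).neg.mul_const c)
      have h2 := (h1.exp).const_mul (-(2/(3*c)))
      refine h2.congr_deriv ?_
      field_simp
    rw [intervalIntegral.integral_eq_sub_of_hasDerivAt key
      (Continuous.intervalIntegrable (by continuity) 1 2)]
    norm_num
    rw [show (2:ℝ) * a * c = 2 * (a * c) by ring]
    field_simp
    ring_nf

lemma inner_lhs (Λ c : ℝ) (hΛ : 0 < Λ) (hc : 0 ≤ c) :
    ∫ x in Ioi Λ, x ^ (-(5:ℝ)/2) * Real.exp (-(Λ ^ (-(3:ℝ)/2) + x ^ (-(3:ℝ)/2)) * c)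
      = if c = 0 then (2/3) * Λ ^ (-(3:ℝ)/2)
        else (2/(3*c)) * (Real.exp (-Λ ^ (-(3:ℝ)/2)*c) - Real.exp (-(2*Λ ^ (-(3:ℝ)/2))*c)) := by
  set a := Λ ^ (-(3:ℝ)/2) with ha_def
  have ha : 0 < a := Real.rpow_pos_of_pos hΛ _
  split_ifs with h
  · subst h
    simp only [mul_zero, neg_zero, Real.exp_zero, mul_one]
    rw [integral_Ioi_rpow_of_lt (by norm_num) hΛ]
    rw [ha_def, show (-(5:ℝ)/2) + 1 = -(3:ℝ)/2 by norm_num]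
    ring
  · have hc' : 0 < c := lt_of_le_of_ne hc (Ne.symm h)
    have hderiv : ∀ x ∈ Ici Λ, HasDerivAt
        (fun x : ℝ => (2/(3*c)) * Real.exp (-(a + x ^ (-(3:ℝ)/2)) * c))
        (x ^ (-(5:ℝ)/2) * Real.exp (-(a + x ^ (-(3:ℝ)/2)) * c)) x := by
      intro x hx
      have hx0 : 0 < x := lt_of_lt_of_le hΛ hx
      have h1 : HasDerivAt (fun x : ℝ => x ^ (-(3:ℝ)/2))
          ((-(3:ℝ)/2) * x ^ ((-(3:ℝ)/2) - 1)) x :=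
        Real.hasDerivAt_rpow_const (Or.inl hx0.ne')
      have h2 : HasDerivAt (fun x : ℝ => -(a + x ^ (-(3:ℝ)/2)) * c)
          (-((-(3:ℝ)/2) * x ^ ((-(3:ℝ)/2) - 1)) * c) x :=
        ((h1.const_add a).neg.mul_const c)
      have h3 := (h2.exp).const_mul (2/(3*c))
      refine h3.congr_deriv ?_
      have : x ^ ((-(3:ℝ)/2) - 1) = x ^ (-(5:ℝ)/2) := by norm_num
      rw [this]
      field_simp
    have hint : IntegrableOn
        (fun x : ℝ => x ^ (-(5:ℝ)/2) * Real.exp (-(a + x ^ (-(3:ℝ)/2)) * c)) (Ioi Λ) := by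
      apply Integrable.mono' (integrableOn_Ioi_rpow_of_lt (a := -(5:ℝ)/2) (by norm_num) hΛ)
      · apply ContinuousOn.aestronglyMeasurable _ measurableSet_Ioi
        apply ContinuousOn.mul
        · exact fun x hx => (Real.continuousAt_rpow_const x _
            (Or.inl (ne_of_gt (lt_trans hΛ hx)))).continuousWithinAt
        · apply Real.continuous_exp.comp_continuousOn
          apply ContinuousOn.mul _ continuousOn_const
          apply ContinuousOn.neg
          apply ContinuousOn.add continuousOn_const
          exact fun x hx => (Real.continuousAt_rpow_const x _
            (Or.inl (ne_of_gt (lt_trans hΛ hx)))).continuousWithinAt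
      · filter_upwards [ae_restrict_mem measurableSet_Ioi] with x hx
        have hx0 : 0 < x := lt_trans hΛ hx
        rw [norm_mul, norm_of_nonneg (Real.rpow_nonneg hx0.le _),
          norm_of_nonneg (Real.exp_pos _).le]
        nth_rewrite 2 [show x ^ (-(5:ℝ)/2) = x ^ (-(5:ℝ)/2) * 1 by ring]
        apply mul_le_mul_of_nonneg_left _ (Real.rpow_nonneg hx0.le _)
        rw [← Real.exp_zero]
        apply Real.exp_le_exp.mpr
        have h1 : (0:ℝ) ≤ x ^ (-(3:ℝ)/2) := Real.rpow_nonneg hx0.le _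
        nlinarith
    have htend : Tendsto (fun x : ℝ => (2/(3*c)) * Real.exp (-(a + x ^ (-(3:ℝ)/2)) * c))
        atTop (nhds ((2/(3*c)) * Real.exp (-a * c))) := by
      have h0 : Tendsto (fun x : ℝ => x ^ (-(3:ℝ)/2)) atTop (nhds 0) := by
        have := tendsto_rpow_neg_atTop (by norm_num : (0:ℝ) < 3/2)
        convert this using 2
        norm_num
      have h1 := ((h0.const_add a).neg.mul_const c)
      have h2 := (Real.continuous_exp.tendsto _).comp h1
      have h3 := h2.const_mul (2/(3*c))
      convert h3 using 2
      all_goals norm_num [Function.comp, add_zero]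
    rw [integral_Ioi_of_hasDerivAt_of_tendsto' hderiv hint htend]
    rw [show -(a + Λ ^ (-(3:ℝ)/2)) * c = -(2*a)*c by rw [← ha_def]; ring]
    ring

lemma rpow_anti {x y z : ℝ} (hx : 0 < x) (hxy : x ≤ y) (hz : z ≤ 0) : y ^ z ≤ x ^ z := by
  have hy : 0 < y := lt_of_lt_of_le hx hxy
  rw [show z = -(-z) by ring, Real.rpow_neg hy.le, Real.rpow_neg hx.le]
  exact inv_anti₀ (Real.rpow_pos_of_pos hx _) (Real.rpow_le_rpow hx.le hxy (by linarith))

lemma summable_prod (s : ℝ) (hs : 0 < s) :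
    Summable (fun q : ℤ × ℤ =>
      Real.exp (-s * (|(q.1 : ℝ)| ^ ((3:ℝ)/2) + |(q.2 : ℝ)| ^ ((3:ℝ)/2)))) := by
  have h := (summable_int s hs).mul_of_nonneg (summable_int s hs)
    (fun n => (Real.exp_pos _).le) (fun n => (Real.exp_pos _).le)
  apply h.congr
  intro q
  rw [← Real.exp_add]
  ring_nf

lemma interchange (a : ℝ) (ha : 0 < a) :
    ∑' q : ℤ × ℤ, ∫ t in Ioc (1:ℝ) 2, (2/3) * a *
        Real.exp (-(t * a) * (|(q.1 : ℝ)| ^ ((3:ℝ)/2) + |(q.2 : ℝ)| ^ ((3:ℝ)/2)))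
      = ∫ t in Ioc (1:ℝ) 2, (2/3) * a * th (t * a) ^ 2 := by
  rw [← MeasureTheory.integral_tsum]
  · apply setIntegral_congr_fun measurableSet_Ioc
    intro t ht
    have hta : 0 < t * a := mul_pos (lt_trans one_pos ht.1) ha
    dsimp only
    rw [tsum_mul_left, th_sq _ hta]
  · intro q
    apply Continuous.aestronglyMeasurable
    continuity
  · apply ne_of_lt
    have bound : ∀ q : ℤ × ℤ, (∫⁻ t in Ioc (1:ℝ) 2, ‖(2/3) * a *
        Real.exp (-(t * a) * (|(q.1 : ℝ)| ^ ((3:ℝ)/2) + |(q.2 : ℝ)| ^ ((3:ℝ)/2)))‖₊ ∂volume)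
        ≤ ENNReal.ofReal ((2/3) * a *
            Real.exp (-a * (|(q.1 : ℝ)| ^ ((3:ℝ)/2) + |(q.2 : ℝ)| ^ ((3:ℝ)/2)))) := by
      intro q
      set c := |(q.1 : ℝ)| ^ ((3:ℝ)/2) + |(q.2 : ℝ)| ^ ((3:ℝ)/2) with hc_def
      have hc : 0 ≤ c := by positivity
      calc (∫⁻ t in Ioc (1:ℝ) 2, ‖(2/3) * a * Real.exp (-(t * a) * c)‖₊ ∂volume)
          ≤ ∫⁻ _ in Ioc (1:ℝ) 2, ENNReal.ofReal ((2/3) * a * Real.exp (-a * c)) ∂volume := by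
            apply setLIntegral_mono' measurableSet_Ioc
            intro t ht
            rw [← enorm_eq_nnnorm, ← ofReal_norm, Real.norm_of_nonneg (by positivity)]
            apply ENNReal.ofReal_le_ofReal
            have : Real.exp (-(t * a) * c) ≤ Real.exp (-a * c) := by
              apply Real.exp_le_exp.mpr
              nlinarith [mul_nonneg (mul_nonneg (sub_nonneg.mpr ht.1.le) ha.le) hc]
            nlinarith [ha]
        _ = ENNReal.ofReal ((2/3) * a * Real.exp (-a * c)) := by
            rw [setLIntegral_const, Real.volume_Ioc]
            norm_num
    calc ∑' q : ℤ × ℤ, (∫⁻ t in Ioc (1:ℝ) 2, ‖(2/3) * a *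
          Real.exp (-(t * a) * (|(q.1 : ℝ)| ^ ((3:ℝ)/2) + |(q.2 : ℝ)| ^ ((3:ℝ)/2)))‖₊ ∂volume)
        ≤ ∑' q : ℤ × ℤ, ENNReal.ofReal ((2/3) * a *
            Real.exp (-a * (|(q.1 : ℝ)| ^ ((3:ℝ)/2) + |(q.2 : ℝ)| ^ ((3:ℝ)/2)))) :=
          ENNReal.tsum_le_tsum bound
      _ = ENNReal.ofReal (∑' q : ℤ × ℤ, (2/3) * a *
            Real.exp (-a * (|(q.1 : ℝ)| ^ ((3:ℝ)/2) + |(q.2 : ℝ)| ^ ((3:ℝ)/2)))) := by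
          rw [ENNReal.ofReal_tsum_of_nonneg (fun q => by positivity)
            ((summable_prod a ha).mul_left _)]
      _ < ⊤ := ENNReal.ofReal_lt_top

lemma th_sq_integrable (a : ℝ) (ha : 0 < a) :
    IntegrableOn (fun t : ℝ => th (t * a) ^ 2) (Ioc 1 2) := by
  have h : IntervalIntegrable (fun t : ℝ => th (t * a) ^ 2) volume 1 2 := by
    apply AntitoneOn.intervalIntegrable
    intro t1 h1 t2 h2 h12
    rw [uIcc_of_le (by norm_num : (1:ℝ) ≤ 2)] at h1 h2
    have ht1 : 0 < t1 * a := mul_pos (lt_of_lt_of_le one_pos h1.1) ha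
    have hth := th_anti ht1 (mul_le_mul_of_nonneg_right h12 ha.le)
    have n1 := th_nonneg (t1 * a)
    have n2 := th_nonneg (t2 * a)
    dsimp only
    nlinarith
  exact (intervalIntegrable_iff_integrableOn_Ioc_of_le (by norm_num : (1:ℝ) ≤ 2)).mp h

lemma int_h (a : ℝ) (ha : 0 < a) :
    ∫ t in Ioc (1:ℝ) 2, 4 * Real.Gamma (5/3) ^ 2 * a ^ (-(4:ℝ)/3) * t ^ (-(4:ℝ)/3)
      = 4 * Real.Gamma (5/3) ^ 2 * a ^ (-(4:ℝ)/3) * (3 - 3 * (2:ℝ) ^ (-(1:ℝ)/3)) := by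
  rw [← intervalIntegral.integral_of_le (by norm_num : (1:ℝ) ≤ 2),
    intervalIntegral.integral_const_mul, integral_rpow (Or.inr ⟨by norm_num, by
      rw [Set.uIcc_of_le (by norm_num : (1:ℝ) ≤ 2)]; norm_num⟩)]
  congr 1
  rw [show (-(4:ℝ)/3) + 1 = -(1:ℝ)/3 by norm_num]
  rw [Real.one_rpow]
  ring

lemma h_integrable (a : ℝ) :
    IntegrableOn (fun t : ℝ => 4 * Real.Gamma (5/3) ^ 2 * a ^ (-(4:ℝ)/3) * t ^ (-(4:ℝ)/3))
      (Ioc 1 2) := by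
  apply IntegrableOn.mono_set _ Set.Ioc_subset_Icc_self
  apply ContinuousOn.integrableOn_compact isCompact_Icc
  apply ContinuousOn.mul continuousOn_const
  intro x hx
  exact (Real.continuousAt_rpow_const x _ (Or.inl (fun h => by rw [h] at hx; exact absurd hx.1 (by norm_num)))).continuousWithinAt

lemma key_est (a : ℝ) (ha : 0 < a) :
    |(∫ t in Ioc (1:ℝ) 2, th (t * a) ^ 2)
        - 4 * Real.Gamma (5/3) ^ 2 * a ^ (-(4:ℝ)/3) * (3 - 3 * (2:ℝ) ^ (-(1:ℝ)/3))|
      ≤ 1 + 4 * Real.Gamma (5/3) * a ^ (-(2:ℝ)/3) := by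
  have hG : 0 < Real.Gamma (5/3) := Real.Gamma_pos_of_pos (by norm_num)
  rw [← int_h a ha, ← integral_sub (th_sq_integrable a ha) (h_integrable a)]
  have key := norm_setIntegral_le_of_norm_le_const (μ := volume) (s := Ioc (1:ℝ) 2)
    (f := fun t => th (t * a) ^ 2 - 4 * Real.Gamma (5/3) ^ 2 * a ^ (-(4:ℝ)/3) * t ^ (-(4:ℝ)/3))
    (C := 1 + 4 * Real.Gamma (5/3) * a ^ (-(2:ℝ)/3)) (by rw [Real.volume_Ioc]; norm_num)
    ?_
  · rw [← Real.norm_eq_abs]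
    refine le_trans key ?_
    rw [Real.volume_real_Ioc]
    norm_num
  · intro t ht
    have ht1 : (1:ℝ) ≤ t := ht.1.le
    have hta : 0 < t * a := mul_pos (lt_of_lt_of_le one_pos ht1) ha
    set s := t * a with hs_def
    set X := 2 * Real.Gamma (5/3) * s ^ (-(2:ℝ)/3) with hX_def
    have hXpos : 0 < X := by positivity
    have hb := th_bound s hta
    have hsplit : 4 * Real.Gamma (5/3) ^ 2 * a ^ (-(4:ℝ)/3) * t ^ (-(4:ℝ)/3) = X ^ 2 := by
      rw [hX_def]
      have h1 : s ^ (-(4:ℝ)/3) = s ^ (-(2:ℝ)/3) * s ^ (-(2:ℝ)/3) := by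
        rw [← Real.rpow_add hta]; norm_num
      have h2 : s ^ (-(4:ℝ)/3) = t ^ (-(4:ℝ)/3) * a ^ (-(4:ℝ)/3) := by
        rw [hs_def, Real.mul_rpow (by linarith) ha.le]
      nlinarith [h1, h2]
    have hXle : X ≤ 2 * Real.Gamma (5/3) * a ^ (-(2:ℝ)/3) := by
      have : s ^ (-(2:ℝ)/3) ≤ a ^ (-(2:ℝ)/3) := by
        apply rpow_anti ha (by nlinarith) (by norm_num)
      nlinarith
    rw [hsplit, Real.norm_eq_abs]
    have factored : th s ^ 2 - X ^ 2 = (th s - X) * (th s + X) := by ring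
    rw [factored, abs_mul]
    have h2 : |th s + X| ≤ 1 + 2 * X := by
      rw [abs_of_nonneg (add_nonneg (th_nonneg s) hXpos.le)]
      have := abs_le.mp hb
      nlinarith [th_nonneg s]
    calc |th s - X| * |th s + X| ≤ 1 * (1 + 2 * X) := by
          apply mul_le_mul hb h2 (abs_nonneg _) (by norm_num)
      _ ≤ 1 + 4 * Real.Gamma (5/3) * a ^ (-(2:ℝ)/3) := by nlinarith



open MeasureTheory

/-- One-loop necklace bubble asymptotics:
`lim_{Λ→∞} Λ · (9/4) Λ^{-3/2} Σ_{q∈ℤ²} ∫_Λ^∞ Λ'^{-5/2}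
    e^{−(Λ^{-3/2}+Λ'^{-3/2})(|q₁|^{3/2}+|q₂|^{3/2})} dΛ' = 18 (1 − 2^{-1/3}) Γ(5/3)²`. -/
theorem necklace_bubble_asymptotics :
    Filter.Tendsto
      (fun Λ : ℝ =>
        Λ * ((9 / 4) * Λ ^ (-(3 : ℝ) / 2) *
          ∑' q : ℤ × ℤ,
            ∫ Λ' in Set.Ioi Λ,
              Λ' ^ (-(5 : ℝ) / 2) *
                Real.exp (-(Λ ^ (-(3 : ℝ) / 2) + Λ' ^ (-(3 : ℝ) / 2)) *
                  (|(q.1 : ℝ)| ^ ((3 : ℝ) / 2) + |(q.2 : ℝ)| ^ ((3 : ℝ) / 2)))))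
      Filter.atTop
      (nhds (18 * (1 - (2 : ℝ) ^ (-(1 : ℝ) / 3)) * Real.Gamma (5 / 3) ^ 2)) := by
  have hG : 0 < Real.Gamma (5/3) := Real.Gamma_pos_of_pos (by norm_num)
  rw [← tendsto_sub_nhds_zero_iff]
  apply squeeze_zero_norm' (a := fun Λ : ℝ => (3/2 + 6 * Real.Gamma (5/3)) * Λ⁻¹)
  · filter_upwards [eventually_ge_atTop (1:ℝ)] with Λ hΛ
    have hΛ0 : (0:ℝ) < Λ := lt_of_lt_of_le one_pos hΛ
    set a := Λ ^ (-(3:ℝ)/2) with ha_def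
    have ha : 0 < a := Real.rpow_pos_of_pos hΛ0 _
    have hsum_eq : (∑' q : ℤ × ℤ,
        ∫ Λ' in Set.Ioi Λ, Λ' ^ (-(5 : ℝ) / 2) *
          Real.exp (-(Λ ^ (-(3 : ℝ) / 2) + Λ' ^ (-(3 : ℝ) / 2)) *
            (|(q.1 : ℝ)| ^ ((3 : ℝ) / 2) + |(q.2 : ℝ)| ^ ((3 : ℝ) / 2))))
        = ∑' q : ℤ × ℤ, ∫ t in Ioc (1:ℝ) 2, (2/3) * a *
            Real.exp (-(t * a) * (|(q.1 : ℝ)| ^ ((3:ℝ)/2) + |(q.2 : ℝ)| ^ ((3:ℝ)/2))) := by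
      apply tsum_congr
      intro q
      have hc : (0:ℝ) ≤ |(q.1 : ℝ)| ^ ((3:ℝ)/2) + |(q.2 : ℝ)| ^ ((3:ℝ)/2) := by positivity
      rw [inner_lhs Λ _ hΛ0 hc, ← ha_def, ← inner_rhs a _ ha hc]
    rw [hsum_eq, interchange a ha, MeasureTheory.integral_const_mul]
    set B := ∫ t in Ioc (1:ℝ) 2, th (t * a) ^ 2 with hB_def
    have hA3 : a ^ (-(2:ℝ)/3) = Λ := by
      rw [ha_def, ← Real.rpow_mul hΛ0.le]
      norm_num
    have hA4 : a ^ (-(4:ℝ)/3) = Λ ^ (2:ℝ) := by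
      rw [ha_def, ← Real.rpow_mul hΛ0.le]
      norm_num
    have hA2 : Λ * a * a = Λ ^ (-(2:ℝ)) := by
      rw [ha_def]
      nth_rewrite 1 [← Real.rpow_one Λ]
      rw [← Real.rpow_add hΛ0, ← Real.rpow_add hΛ0]
      norm_num
    have hΛ2 : Λ ^ (-(2:ℝ)) * Λ ^ (2:ℝ) = 1 := by
      rw [← Real.rpow_add hΛ0]
      norm_num
    have est : |B - 4 * Real.Gamma (5/3) ^ 2 * Λ ^ (2:ℝ) * (3 - 3 * (2:ℝ) ^ (-(1:ℝ)/3))|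
        ≤ 1 + 4 * Real.Gamma (5/3) * Λ := by
      have h := key_est a ha
      rw [hA4, hA3] at h
      exact h
    have key2 : Λ * (9 / 4 * a * (2 / 3 * a * B))
          - 18 * (1 - (2:ℝ) ^ (-(1:ℝ)/3)) * Real.Gamma (5/3) ^ 2
        = (3/2) * Λ ^ (-(2:ℝ)) *
            (B - 4 * Real.Gamma (5/3) ^ 2 * Λ ^ (2:ℝ) * (3 - 3 * (2:ℝ) ^ (-(1:ℝ)/3))) := by
      have e : Λ * (9 / 4 * a * (2 / 3 * a * B)) = (3/2) * (Λ * a * a) * B := by ring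
      rw [e, hA2]
      linear_combination (18 * Real.Gamma (5/3) ^ 2 * (1 - (2:ℝ) ^ (-(1:ℝ)/3))) * hΛ2
    rw [Real.norm_eq_abs, key2, abs_mul,
      abs_of_nonneg (by positivity : (0:ℝ) ≤ (3/2) * Λ ^ (-(2:ℝ)))]
    have hstep : (3/2) * Λ ^ (-(2:ℝ)) *
        |B - 4 * Real.Gamma (5/3) ^ 2 * Λ ^ (2:ℝ) * (3 - 3 * (2:ℝ) ^ (-(1:ℝ)/3))|
        ≤ (3/2) * Λ ^ (-(2:ℝ)) * (1 + 4 * Real.Gamma (5/3) * Λ) :=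
      mul_le_mul_of_nonneg_left est (by positivity)
    refine le_trans hstep ?_
    have hΛ2' : Λ ^ (-(2:ℝ)) = Λ⁻¹ * Λ⁻¹ := by
      rw [show (-(2:ℝ)) = (-1) + (-1) by norm_num, Real.rpow_add hΛ0, Real.rpow_neg_one]
    rw [hΛ2']
    have h1 : Λ⁻¹ ≤ 1 := by simpa using inv_anti₀ one_pos hΛ
    have h2 : Λ⁻¹ * Λ = 1 := inv_mul_cancel₀ hΛ0.ne'
    have h3 : 0 < Λ⁻¹ := inv_pos.mpr hΛ0
    have hprod : Λ⁻¹ * Λ⁻¹ * Λ = Λ⁻¹ := by rw [mul_assoc, h2, mul_one]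
    have hsq : Λ⁻¹ * Λ⁻¹ ≤ Λ⁻¹ := by nlinarith
    nlinarith [hG, hprod, hsq, h3]
  · have := tendsto_inv_atTop_zero (𝕜 := ℝ)
    simpa using this.const_mul ((3:ℝ)/2 + 6 * Real.Gamma (5/3))
end

section
/- Melonic tadpole asymptotics. One has lim_{Λ→∞} Λ^{-3/2} · [ (3/2) Λ^{-3/2} Σ_{q∈ℤ³} exp( −(|q₁|^{3/2} + |q₂|^{3/2} + |q₃|^{3/2})/Λ^{3/2} ) ] = 12 Γ(5/3)³, where Γ denotes the real Gamma function. -/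
open Real Filter Set MeasureTheory

noncomputable def meloI : ℝ := ∫ x in Set.Ioi (0:ℝ), Real.exp (-x ^ ((3:ℝ)/2))

lemma meloI_eq : meloI = Real.Gamma (5/3) := by
  rw [meloI, integral_exp_neg_rpow (by norm_num : (0:ℝ) < 3/2)]
  norm_num

lemma melo_integrable : IntegrableOn (fun x : ℝ => Real.exp (-x ^ ((3:ℝ)/2))) (Set.Ioi 0) := by
  have := integrableOn_rpow_mul_exp_neg_rpow (p := 3/2) (s := 0) (by norm_num) (by norm_num)
  refine this.congr_fun (fun x hx => ?_) measurableSet_Ioi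
  simp only [Real.rpow_zero, one_mul]

lemma melo_summable {h : ℝ} (hh : 0 < h) :
    Summable (fun n : ℕ => Real.exp (-(h * (n : ℝ)) ^ ((3:ℝ)/2))) := by
  have hsum : Summable (fun n : ℕ => Real.exp ((n : ℝ) * (-(h ^ ((3:ℝ)/2))))) :=
    Real.summable_exp_nat_mul_iff.mpr (neg_neg_iff_pos.mpr (Real.rpow_pos_of_pos hh _))
  apply hsum.of_nonneg_of_le (fun n => (Real.exp_pos _).le)
  intro n
  apply Real.exp_le_exp.mpr
  rw [mul_neg, neg_le_neg_iff]
  rw [mul_comm h, Real.mul_rpow (Nat.cast_nonneg n) hh.le]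
  have : (n : ℝ) ≤ (n : ℝ) ^ ((3:ℝ)/2) := by
    rcases Nat.eq_zero_or_pos n with rfl | hn
    · simp
    · calc (n:ℝ) = (n:ℝ) ^ (1:ℝ) := (Real.rpow_one _).symm
        _ ≤ _ := Real.rpow_le_rpow_of_exponent_le (by exact_mod_cast hn) (by norm_num)
  nlinarith [Real.rpow_nonneg (Nat.cast_nonneg n : (0:ℝ) ≤ n) ((3:ℝ)/2),
    Real.rpow_pos_of_pos hh ((3:ℝ)/2)]

lemma melo_anti {h : ℝ} (hh : 0 < h) :
    AntitoneOn (fun x : ℝ => Real.exp (-(h * x) ^ ((3:ℝ)/2))) (Set.Ici 0) := by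
  intro x hx y hy hxy
  dsimp only
  apply Real.exp_le_exp.mpr
  apply neg_le_neg
  apply Real.rpow_le_rpow (mul_nonneg hh.le (mem_Ici.mp hx))
    (by nlinarith [mem_Ici.mp hx]) (by norm_num)

lemma melo_bounds {h : ℝ} (hh : 0 < h) :
    meloI ≤ h * ∑' n : ℕ, Real.exp (-(h * (n : ℝ)) ^ ((3:ℝ)/2)) ∧
    h * ∑' n : ℕ, Real.exp (-(h * (n : ℝ)) ^ ((3:ℝ)/2)) ≤ meloI + h := by
  set f : ℝ → ℝ := fun x => Real.exp (-x ^ ((3:ℝ)/2)) with hf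
  set g : ℝ → ℝ := fun x => Real.exp (-(h * x) ^ ((3:ℝ)/2)) with hg
  have hsum0 : Summable (fun n : ℕ => g n) := melo_summable hh
  set G : ℕ → ℝ := fun n => g n with hG
  set T : ℝ := ∑' n : ℕ, G n with hT
  have hsum : Summable G := hsum0
  have hTeq : h * ∑' n : ℕ, Real.exp (-(h * (n : ℝ)) ^ ((3:ℝ)/2)) = h * T := rfl
  have hanti : ∀ n : ℕ, AntitoneOn g (Set.Icc (0:ℝ) (0 + n)) := fun n =>
    (melo_anti hh).mono (fun x hx => hx.1)
  set J : ℕ → ℝ := fun n => ∫ x in (0:ℝ)..(h * n), f x with hJ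
  have hcomp : ∀ n : ℕ, ∫ x in (0:ℝ)..(0 + (n:ℝ)), g x = h⁻¹ * J n := by
    intro n
    rw [zero_add, hJ]
    have := intervalIntegral.integral_comp_mul_left (a := 0) (b := (n:ℝ)) f (ne_of_gt hh)
    simpa [mul_zero, smul_eq_mul] using this
  have hJle : ∀ n : ℕ, J n ≤ meloI := by
    intro n
    rw [hJ]
    dsimp only
    rw [intervalIntegral.integral_of_le (by positivity)]
    rw [meloI]
    apply setIntegral_mono_set melo_integrable
      (Filter.Eventually.of_forall (fun x => (Real.exp_pos _).le))
      (HasSubset.Subset.eventuallyLE Set.Ioc_subset_Ioi_self)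
  have hJtend : Tendsto J atTop (nhds meloI) := by
    rw [hJ, meloI]
    exact intervalIntegral_tendsto_integral_Ioi 0 melo_integrable
      (tendsto_natCast_atTop_atTop.const_mul_atTop hh)
  -- lower bound
  have hlow : meloI ≤ h * T := by
    apply le_of_tendsto_of_tendsto' hJtend
      ((hsum.hasSum.tendsto_sum_nat).const_mul h)
    intro n
    have hA := (hanti n).integral_le_sum
    rw [hcomp n] at hA
    simp only [zero_add] at hA
    calc J n = h * (h⁻¹ * J n) := by field_simp
      _ ≤ h * ∑ i ∈ Finset.range n, G i := by
          apply mul_le_mul_of_nonneg_left _ hh.le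
          exact hA
  -- upper bound
  have hG0 : G 0 = 1 := by
    simp only [hG, hg, Nat.cast_zero, mul_zero]
    rw [Real.zero_rpow (by norm_num), neg_zero, Real.exp_zero]
  have hsum' : Summable (fun n : ℕ => G (n + 1)) := (summable_nat_add_iff 1).mpr hsum
  have htsum' : ∑' n : ℕ, G (n + 1) = T - 1 := by
    have := Summable.tsum_eq_zero_add hsum
    rw [hG0] at this
    rw [← hT] at this
    linarith [this]
  have hup : h * (T - 1) ≤ meloI := by
    have htend2 : Tendsto (fun n => h * ∑ i ∈ Finset.range n, G (i + 1)) atTop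
        (nhds (h * (T - 1))) := by
      have := hsum'.hasSum.tendsto_sum_nat
      rw [htsum'] at this
      exact this.const_mul h
    refine le_of_tendsto htend2 (Filter.Eventually.of_forall fun n => ?_)
    have hB := (hanti n).sum_le_integral
    rw [hcomp n] at hB
    simp only [zero_add] at hB
    calc h * ∑ i ∈ Finset.range n, G (i + 1)
        ≤ h * (h⁻¹ * J n) := by
          apply mul_le_mul_of_nonneg_left _ hh.le
          exact hB
      _ = J n := by field_simp
      _ ≤ meloI := hJle n
  rw [hTeq]
  constructor
  · exact hlow
  · linarith [hup]

lemma melo_tendsto_nat :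
    Tendsto (fun h : ℝ => h * ∑' n : ℕ, Real.exp (-(h * (n : ℝ)) ^ ((3:ℝ)/2)))
      (nhdsWithin 0 (Set.Ioi 0)) (nhds meloI) := by
  have hmem := eventually_mem_nhdsWithin (a := (0:ℝ)) (s := Set.Ioi 0)
  have hupper : Tendsto (fun h : ℝ => meloI + h) (nhdsWithin 0 (Set.Ioi 0)) (nhds meloI) := by
    have : Tendsto (fun h : ℝ => meloI + h) (nhds 0) (nhds (meloI + 0)) :=
      (tendsto_const_nhds).add tendsto_id
    rw [add_zero] at this
    exact this.mono_left nhdsWithin_le_nhds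
  exact tendsto_of_tendsto_of_tendsto_of_le_of_le' tendsto_const_nhds hupper
    (hmem.mono fun h hh => (melo_bounds hh).1)
    (hmem.mono fun h hh => (melo_bounds hh).2)

lemma melo_summable_int {h : ℝ} (hh : 0 < h) :
    Summable (fun n : ℤ => Real.exp (-(h * |(n : ℝ)|) ^ ((3:ℝ)/2))) := by
  apply Summable.of_nat_of_neg
  · apply (melo_summable hh).congr
    intro n
    simp only [Int.cast_natCast, Nat.abs_cast]
  · apply (melo_summable hh).congr
    intro n
    simp only [Int.cast_neg, Int.cast_natCast, abs_neg, Nat.abs_cast]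

lemma melo_tsum_int {h : ℝ} (hh : 0 < h) :
    ∑' n : ℤ, Real.exp (-(h * |(n : ℝ)|) ^ ((3:ℝ)/2)) =
      2 * (∑' n : ℕ, Real.exp (-(h * (n : ℝ)) ^ ((3:ℝ)/2))) - 1 := by
  have h1 : Summable (fun n : ℕ => Real.exp (-(h * |((n : ℤ) : ℝ)|) ^ ((3:ℝ)/2))) := by
    apply (melo_summable hh).congr
    intro n; simp [Nat.abs_cast]
  have h2 : Summable (fun n : ℕ => Real.exp (-(h * |((-n : ℤ) : ℝ)|) ^ ((3:ℝ)/2))) := by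
    apply (melo_summable hh).congr
    intro n; simp [Nat.abs_cast]
  have hkey := Summable.tsum_of_nat_of_neg (f := fun n : ℤ => Real.exp (-(h * |(n : ℝ)|) ^ ((3:ℝ)/2))) h1 h2
  rw [hkey]
  have e1 : ∑' n : ℕ, Real.exp (-(h * |((n : ℤ) : ℝ)|) ^ ((3:ℝ)/2)) =
      ∑' n : ℕ, Real.exp (-(h * (n : ℝ)) ^ ((3:ℝ)/2)) := by
    apply tsum_congr; intro n; simp [Nat.abs_cast]
  have e2 : ∑' n : ℕ, Real.exp (-(h * |((-n : ℤ) : ℝ)|) ^ ((3:ℝ)/2)) =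
      ∑' n : ℕ, Real.exp (-(h * (n : ℝ)) ^ ((3:ℝ)/2)) := by
    apply tsum_congr; intro n; simp [Nat.abs_cast]
  have e3 : Real.exp (-(h * |((0 : ℤ) : ℝ)|) ^ ((3:ℝ)/2)) = 1 := by
    simp only [Int.cast_zero, abs_zero, mul_zero]
    rw [Real.zero_rpow (by norm_num), neg_zero, Real.exp_zero]
  rw [e1, e2]
  beta_reduce
  rw [e3]
  ring

lemma melo_tendsto_int :
    Tendsto (fun h : ℝ => h * ∑' n : ℤ, Real.exp (-(h * |(n : ℝ)|) ^ ((3:ℝ)/2)))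
      (nhdsWithin 0 (Set.Ioi 0)) (nhds (2 * meloI)) := by
  have hmem := eventually_mem_nhdsWithin (a := (0:ℝ)) (s := Set.Ioi 0)
  have heq : ∀ᶠ h in nhdsWithin (0:ℝ) (Set.Ioi 0),
      2 * (h * ∑' n : ℕ, Real.exp (-(h * (n : ℝ)) ^ ((3:ℝ)/2))) - h =
      h * ∑' n : ℤ, Real.exp (-(h * |(n : ℝ)|) ^ ((3:ℝ)/2)) := by
    refine hmem.mono fun h hh => ?_
    rw [melo_tsum_int hh]
    ring
  have : Tendsto (fun h : ℝ =>
      2 * (h * ∑' n : ℕ, Real.exp (-(h * (n : ℝ)) ^ ((3:ℝ)/2))) - h)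
      (nhdsWithin 0 (Set.Ioi 0)) (nhds (2 * meloI - 0)) := by
    exact (melo_tendsto_nat.const_mul 2).sub
      (tendsto_id.mono_left nhdsWithin_le_nhds)
  rw [sub_zero] at this
  exact this.congr' heq

lemma melo_tsum_pi (g : ℤ → ℝ) (hg0 : ∀ n, 0 ≤ g n) (hg : Summable g) (n : ℕ) :
    Summable (fun q : Fin n → ℤ => ∏ i, g (q i)) ∧
      ∑' q : Fin n → ℤ, ∏ i, g (q i) = (∑' m, g m) ^ n := by
  induction n with
  | zero =>
    constructor
    · exact summable_of_finite_support (Set.toFinite _)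
    · rw [pow_zero, tsum_eq_single (default : Fin 0 → ℤ)
        (fun b hb => absurd (Subsingleton.elim b default) hb)]
      simp
  | succ n ih =>
    obtain ⟨ihS, ihT⟩ := ih
    set e := (Fin.consEquiv (fun _ : Fin (n+1) => ℤ)) with he
    have hpt : ∀ xp : ℤ × (Fin n → ℤ),
        (∏ i, g ((e xp) i)) = g xp.1 * ∏ i, g (xp.2 i) := by
      intro xp
      rw [Fin.prod_univ_succ]
      simp [he, Fin.consEquiv]
    have hg0' : 0 ≤ g := fun x => hg0 x
    have hP0 : (0 : (Fin n → ℤ) → ℝ) ≤ fun q => ∏ i, g (q i) := fun q =>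
      Finset.prod_nonneg fun i _ => hg0 _
    have hS2 : Summable (fun xp : ℤ × (Fin n → ℤ) => g xp.1 * ∏ i, g (xp.2 i)) :=
      Summable.mul_of_nonneg (f := g) (g := fun q : Fin n → ℤ => ∏ i, g (q i)) hg ihS hg0' hP0
    have hS : Summable (fun q : Fin (n+1) → ℤ => ∏ i, g (q i)) := by
      exact e.summable_iff.mp (hS2.congr (fun xp => (hpt xp).symm))
    refine ⟨hS, ?_⟩
    rw [← Equiv.tsum_eq e (fun q => ∏ i, g (q i))]
    rw [tsum_congr hpt]
    rw [Summable.tsum_prod' (hS2) (fun x => ihS.mul_left (g x))]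
    simp_rw [tsum_mul_left]
    rw [tsum_mul_right, ihT, pow_succ]
    ring

/-- Melonic tadpole asymptotics:
`lim_{Λ→∞} Λ^{-3/2} · [(3/2) Λ^{-3/2} Σ_{q∈ℤ³} e^{−(Σ|qᵢ|^{3/2})/Λ^{3/2}}] = 12 Γ(5/3)³`. -/
theorem melonic_tadpole_asymptotics :
    Filter.Tendsto
      (fun Λ : ℝ =>
        Λ ^ (-(3 : ℝ) / 2) *
          ((3 / 2) * Λ ^ (-(3 : ℝ) / 2) *
            ∑' q : Fin 3 → ℤ,
              Real.exp (-(∑ i, |(q i : ℝ)| ^ ((3 : ℝ) / 2)) / Λ ^ ((3 : ℝ) / 2))))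
      Filter.atTop
      (nhds (12 * Real.Gamma (5 / 3) ^ 3)) := by
  have hinv : Tendsto (fun Λ : ℝ => Λ⁻¹) atTop (nhdsWithin 0 (Set.Ioi 0)) := by
    rw [tendsto_nhdsWithin_iff]
    exact ⟨tendsto_inv_atTop_zero,
      (eventually_gt_atTop 0).mono fun Λ hΛ => Set.mem_Ioi.mpr (by positivity)⟩
  have hcomp : Tendsto
      (fun Λ : ℝ => Λ⁻¹ * ∑' n : ℤ, Real.exp (-(Λ⁻¹ * |(n:ℝ)|) ^ ((3:ℝ)/2)))
      atTop (nhds (2 * meloI)) := melo_tendsto_int.comp hinv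
  have hfin : Tendsto
      (fun Λ : ℝ => 3/2 *
        (Λ⁻¹ * ∑' n : ℤ, Real.exp (-(Λ⁻¹ * |(n:ℝ)|) ^ ((3:ℝ)/2))) ^ 3)
      atTop (nhds (3/2 * (2 * meloI) ^ 3)) := (hcomp.pow 3).const_mul (3/2)
  have hconst : (3/2 : ℝ) * (2 * meloI) ^ 3 = 12 * Real.Gamma (5/3) ^ 3 := by
    rw [meloI_eq]; ring
  rw [hconst] at hfin
  refine Tendsto.congr' ?_ hfin
  filter_upwards [eventually_gt_atTop (0:ℝ)] with Λ hΛ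
  have hΛi : 0 < Λ⁻¹ := by positivity
  set g : ℤ → ℝ := fun m => Real.exp (-(Λ⁻¹ * |(m:ℝ)|) ^ ((3:ℝ)/2)) with hgdef
  have hg0 : ∀ m, 0 ≤ g m := fun m => (Real.exp_pos _).le
  have hgsum : Summable g := melo_summable_int hΛi
  have hA : (0:ℝ) < Λ ^ ((3:ℝ)/2) := Real.rpow_pos_of_pos hΛ _
  have h1 : ∀ m : ℤ, (Λ⁻¹ * |(m:ℝ)|) ^ ((3:ℝ)/2) = |(m:ℝ)| ^ ((3:ℝ)/2) / Λ ^ ((3:ℝ)/2) := by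
    intro m
    rw [Real.mul_rpow (inv_nonneg.mpr hΛ.le) (abs_nonneg _), Real.inv_rpow hΛ.le,
      inv_mul_eq_div]
  have hpt : ∀ q : Fin 3 → ℤ,
      Real.exp (-(∑ i, |(q i : ℝ)| ^ ((3:ℝ)/2)) / Λ ^ ((3:ℝ)/2)) = ∏ i, g (q i) := by
    intro q
    have : -(∑ i, |(q i : ℝ)| ^ ((3:ℝ)/2)) / Λ ^ ((3:ℝ)/2)
        = ∑ i, -(|(q i : ℝ)| ^ ((3:ℝ)/2) / Λ ^ ((3:ℝ)/2)) := by
      rw [neg_div, Finset.sum_div]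
      simp
    rw [this, Real.exp_sum]
    apply Finset.prod_congr rfl
    intro i _
    rw [← h1 (q i)]
  have hfact : (∑' q : Fin 3 → ℤ,
      Real.exp (-(∑ i, |(q i : ℝ)| ^ ((3:ℝ)/2)) / Λ ^ ((3:ℝ)/2)))
      = (∑' m, g m) ^ 3 := by
    rw [tsum_congr hpt, (melo_tsum_pi g hg0 hgsum 3).2]
  have hneg : Λ ^ (-(3:ℝ)/2) = (Λ ^ ((3:ℝ)/2))⁻¹ := by
    rw [show (-(3:ℝ)/2) = -((3:ℝ)/2) by ring, Real.rpow_neg hΛ.le]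
  have hAA : Λ ^ ((3:ℝ)/2) * Λ ^ ((3:ℝ)/2) = Λ ^ (3:ℕ) := by
    rw [← Real.rpow_add hΛ]
    norm_num
  show 3/2 * (Λ⁻¹ * ∑' m, g m) ^ 3 = _
  rw [hfact, hneg]
  set S := ∑' m, g m with hS
  calc 3/2 * (Λ⁻¹ * S) ^ 3 = 3/2 * S^3 * (Λ ^ (3:ℕ))⁻¹ := by ring
    _ = 3/2 * S^3 * (Λ ^ ((3:ℝ)/2) * Λ ^ ((3:ℝ)/2))⁻¹ := by rw [hAA]
    _ = (Λ ^ ((3:ℝ)/2))⁻¹ * (3/2 * (Λ ^ ((3:ℝ)/2))⁻¹ * S^3) := by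
        rw [mul_inv]
        ring
end

section
/- Necklace tadpole asymptotics (unweighted). One has lim_{Λ→∞} Λ^{-1/2} · [ (3/2) Λ^{-3/2} Σ_{(q₁,q₂)∈ℤ²} exp( −(|q₁|^{3/2} + |q₂|^{3/2})/Λ^{3/2} ) ] = 6 Γ(5/3)², where Γ denotes the real Gamma function. -/
set_option maxHeartbeats 800000

open Real MeasureTheory Set Filter Topology

lemma neck_oneDim {Λ : ℝ} (hΛ : 0 < Λ) :
    Summable (fun n : ℤ => Real.exp (-(|(n : ℝ)| ^ ((3 : ℝ) / 2)) / Λ ^ ((3 : ℝ) / 2)))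
    ∧ 2 * Λ * Real.Gamma (5 / 3) - 1 ≤ ∑' n : ℤ, Real.exp (-(|(n : ℝ)| ^ ((3 : ℝ) / 2)) / Λ ^ ((3 : ℝ) / 2))
    ∧ (∑' n : ℤ, Real.exp (-(|(n : ℝ)| ^ ((3 : ℝ) / 2)) / Λ ^ ((3 : ℝ) / 2))) ≤ 2 * Λ * Real.Gamma (5 / 3) + 1 := by
  obtain ⟨c, hcdef, hc⟩ : ∃ c : ℝ, Λ ^ ((3 : ℝ) / 2) = c ∧ 0 < c :=
    ⟨Λ ^ ((3 : ℝ) / 2), rfl, rpow_pos_of_pos hΛ _⟩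
  rw [hcdef]
  set f : ℝ → ℝ := fun x => Real.exp (-(x ^ ((3 : ℝ) / 2)) / c) with hfdef
  have hf_eq : ∀ x : ℝ, (x ^ (0 : ℝ)) * Real.exp (-c⁻¹ * x ^ ((3 : ℝ) / 2)) = f x := by
    intro x
    simp only [Real.rpow_zero, one_mul, hfdef]
    congr 1
    ring
  have hInt : IntegrableOn f (Ioi (0 : ℝ)) := by
    have h := integrableOn_rpow_mul_exp_neg_mul_rpow (p := (3 : ℝ) / 2) (s := 0)
      (by norm_num) (by norm_num) (inv_pos.2 hc)
    exact h.congr_fun (fun x _ => hf_eq x) measurableSet_Ioi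
  have hIval : ∫ x in Ioi (0 : ℝ), f x = Λ * Real.Gamma (5 / 3) := by
    have h := integral_exp_neg_mul_rpow (p := (3 : ℝ) / 2) (b := c⁻¹)
      (by norm_num) (inv_pos.2 hc)
    have h2 : ∫ x in Ioi (0 : ℝ), f x
        = ∫ x in Ioi (0 : ℝ), Real.exp (-c⁻¹ * x ^ ((3 : ℝ) / 2)) := by
      refine setIntegral_congr_fun measurableSet_Ioi fun x _ => ?_
      simp only [hfdef]
      congr 1
      ring
    have hc' : c⁻¹ = Λ ^ (-((3 : ℝ) / 2)) := by rw [Real.rpow_neg hΛ.le, hcdef]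
    rw [h2, h, hc', ← Real.rpow_mul hΛ.le]
    norm_num
  -- nonneg and antitone
  have hf_nonneg : ∀ x : ℝ, 0 ≤ f x := fun x => (Real.exp_pos _).le
  have hAnti : AntitoneOn f (Ici (0 : ℝ)) := by
    intro x hx y hy hxy
    have hxy' : x ^ ((3 : ℝ) / 2) ≤ y ^ ((3 : ℝ) / 2) :=
      Real.rpow_le_rpow hx hxy (by norm_num)
    apply Real.exp_le_exp.2
    rw [div_le_div_iff_of_pos_right hc]
    linarith
  have hf0 : f 0 = 1 := by
    rw [hfdef]
    simp [Real.zero_rpow (by norm_num : ((3:ℝ)/2) ≠ 0)]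
  -- interval integrals bounded by improper integral
  have hIival : ∀ N : ℕ, ∫ x in (0:ℝ)..(N:ℝ), f x ≤ Λ * Real.Gamma (5 / 3) := by
    intro N
    rw [intervalIntegral.integral_of_le (by positivity), ← hIval]
    refine setIntegral_mono_set hInt ?_ ?_
    · exact Filter.Eventually.of_forall fun x => hf_nonneg x
    · exact HasSubset.Subset.eventuallyLE Ioc_subset_Ioi_self
  -- partial sums bounded
  have hPartial : ∀ N : ℕ, ∑ i ∈ Finset.range N, f i ≤ 1 + Λ * Real.Gamma (5 / 3) := by
    intro N
    have step : ∑ i ∈ Finset.range N, f i ≤ ∑ i ∈ Finset.range (N + 1), f i := by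
      rw [Finset.sum_range_succ]
      nlinarith [hf_nonneg (N : ℝ)]
    have h1 : ∑ i ∈ Finset.range N, f ((0:ℝ) + ((i + 1 : ℕ) : ℝ)) ≤ ∫ x in (0:ℝ)..((0:ℝ)+(N:ℕ)), f x :=
      AntitoneOn.sum_le_integral (hAnti.mono (fun x hx => hx.1))
    rw [zero_add] at h1
    have h2 : ∑ i ∈ Finset.range (N + 1), f i = f 0 + ∑ i ∈ Finset.range N, f ((0:ℝ) + ((i + 1 : ℕ) : ℝ)) := by
      rw [Finset.sum_range_succ']
      simp [add_comm]
    calc ∑ i ∈ Finset.range N, f i ≤ ∑ i ∈ Finset.range (N + 1), f i := step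
      _ = f 0 + ∑ i ∈ Finset.range N, f ((0:ℝ) + ((i + 1 : ℕ) : ℝ)) := h2
      _ ≤ 1 + Λ * Real.Gamma (5 / 3) := by
          rw [hf0]
          exact add_le_add_right (h1.trans (hIival N)) 1
  have hSumN : Summable (fun n : ℕ => f n) :=
    summable_of_sum_range_le (fun n => hf_nonneg _) hPartial
  -- T bounds
  have hT_ub : ∑' n : ℕ, f n ≤ 1 + Λ * Real.Gamma (5 / 3) :=
    Summable.tsum_le_of_sum_range_le hSumN hPartial
  have hT_lb : Λ * Real.Gamma (5 / 3) ≤ ∑' n : ℕ, f n := by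
    have hTend : Tendsto (fun N : ℕ => ∫ x in (0:ℝ)..(N:ℝ), f x) atTop
        (nhds (∫ x in Ioi (0:ℝ), f x)) :=
      intervalIntegral_tendsto_integral_Ioi 0 hInt tendsto_natCast_atTop_atTop
    rw [← hIval]
    refine le_of_tendsto hTend (Filter.Eventually.of_forall fun N => ?_)
    have h1 : ∫ x in (0:ℝ)..((0:ℝ)+(N:ℕ)), f x ≤ ∑ i ∈ Finset.range N, f ((0:ℝ) + (i : ℕ)) :=
      AntitoneOn.integral_le_sum (hAnti.mono (fun x hx => hx.1))
    rw [zero_add] at h1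
    simp only [zero_add] at h1
    calc ∫ x in (0:ℝ)..(N:ℝ), f x ≤ ∑ i ∈ Finset.range N, f (i : ℕ) := h1
      _ ≤ ∑' n : ℕ, f n := Summable.sum_le_tsum _ (fun i _ => hf_nonneg _) hSumN
  -- relate ℤ sum to ℕ sum
  have hnat : ∀ n : ℕ, Real.exp (-(|((n : ℤ) : ℝ)| ^ ((3 : ℝ) / 2)) / c) = f n := by
    intro n
    rw [hfdef]
    norm_num
  have hneg : ∀ n : ℕ, Real.exp (-(|((-(n + 1) : ℤ) : ℝ)| ^ ((3 : ℝ) / 2)) / c) = f (n + 1) := by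
    intro n
    rw [hfdef]
    try push_cast
    rw [abs_neg, abs_of_nonneg (by positivity)]
  have hS1 : Summable (fun n : ℕ => Real.exp (-(|((n : ℤ) : ℝ)| ^ ((3 : ℝ) / 2)) / c)) := by
    exact hSumN.congr fun n => (hnat n).symm
  have hS2 : Summable (fun n : ℕ => Real.exp (-(|((-(n + 1) : ℤ) : ℝ)| ^ ((3 : ℝ) / 2)) / c)) := by
    refine ((summable_nat_add_iff 1).2 hSumN).congr fun n => ?_
    rw [hneg n]
    try push_cast
    ring_nf
  have hSummableZ : Summable (fun n : ℤ => Real.exp (-(|(n : ℝ)| ^ ((3 : ℝ) / 2)) / c)) :=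
    Summable.of_nat_of_neg_add_one (f := fun n : ℤ => Real.exp (-(|(n : ℝ)| ^ ((3 : ℝ) / 2)) / c)) hS1 hS2
  have hSval : (∑' n : ℤ, Real.exp (-(|(n : ℝ)| ^ ((3 : ℝ) / 2)) / c)) = 2 * (∑' n : ℕ, f n) - 1 := by
    rw [tsum_of_nat_of_neg_add_one (f := fun n : ℤ => Real.exp (-(|(n : ℝ)| ^ ((3 : ℝ) / 2)) / c)) hS1 hS2]
    have e1 : ∑' n : ℕ, Real.exp (-(|((n : ℤ) : ℝ)| ^ ((3 : ℝ) / 2)) / c) = ∑' n : ℕ, f n :=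
      tsum_congr hnat
    have e2 : ∑' n : ℕ, Real.exp (-(|((-(n + 1) : ℤ) : ℝ)| ^ ((3 : ℝ) / 2)) / c)
        = ∑' n : ℕ, f (n + 1) := tsum_congr hneg
    have e3 := Summable.tsum_eq_zero_add hSumN
    simp only [Nat.cast_zero, Nat.cast_add, Nat.cast_one] at e3
    rw [e1, e2]
    rw [hf0] at e3
    try push_cast
    linarith
  refine ⟨hSummableZ, ?_, ?_⟩ <;> rw [hSval] <;> linarith

/-- Necklace tadpole asymptotics (unweighted):
`lim_{Λ→∞} Λ^{-1/2} · [(3/2) Λ^{-3/2} Σ_{q∈ℤ²} e^{−(|q₁|^{3/2}+|q₂|^{3/2})/Λ^{3/2}}] = 6 Γ(5/3)²`. -/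
theorem necklace_tadpole_asymptotics_unweighted :
    Filter.Tendsto
      (fun Λ : ℝ =>
        Λ ^ (-(1 : ℝ) / 2) *
          ((3 / 2) * Λ ^ (-(3 : ℝ) / 2) *
            ∑' q : ℤ × ℤ,
              Real.exp (-(|(q.1 : ℝ)| ^ ((3 : ℝ) / 2) + |(q.2 : ℝ)| ^ ((3 : ℝ) / 2)) /
                Λ ^ ((3 : ℝ) / 2))))
      Filter.atTop
      (nhds (6 * Real.Gamma (5 / 3) ^ 2)) := by
  set G : ℝ := Real.Gamma (5 / 3) with hG
  set S : ℝ → ℝ := fun Λ => ∑' n : ℤ, Real.exp (-(|(n : ℝ)| ^ ((3 : ℝ) / 2)) / Λ ^ ((3 : ℝ) / 2))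
    with hS
  -- step 1 : S Λ / Λ → 2G
  have h1 : Tendsto (fun Λ : ℝ => S Λ / Λ) atTop (𝓝 (2 * G)) := by
    have hlo : Tendsto (fun Λ : ℝ => 2 * G - Λ⁻¹) atTop (𝓝 (2 * G)) := by
      simpa using (tendsto_const_nhds : Tendsto (fun _ : ℝ => 2 * G) atTop (𝓝 (2 * G))).sub tendsto_inv_atTop_zero
    have hhi : Tendsto (fun Λ : ℝ => 2 * G + Λ⁻¹) atTop (𝓝 (2 * G)) := by
      simpa using (tendsto_const_nhds : Tendsto (fun _ : ℝ => 2 * G) atTop (𝓝 (2 * G))).add tendsto_inv_atTop_zero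
    refine tendsto_of_tendsto_of_tendsto_of_le_of_le' hlo hhi ?_ ?_ <;>
      · filter_upwards [eventually_ge_atTop (1 : ℝ)] with Λ hΛ1
        have hΛ : (0 : ℝ) < Λ := lt_of_lt_of_le zero_lt_one hΛ1
        obtain ⟨-, hlb, hub⟩ := neck_oneDim hΛ
        first
        | · rw [le_div_iff₀ hΛ]
            calc (2 * G - Λ⁻¹) * Λ = 2 * Λ * G - 1 := by field_simp
              _ ≤ S Λ := hlb
        | · rw [div_le_iff₀ hΛ]
            calc S Λ ≤ 2 * Λ * G + 1 := hub
              _ = (2 * G + Λ⁻¹) * Λ := by field_simp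
  -- step 2 : eventual equality of the two functions
  have h2 : (fun Λ : ℝ =>
        Λ ^ (-(1 : ℝ) / 2) *
          ((3 / 2) * Λ ^ (-(3 : ℝ) / 2) *
            ∑' q : ℤ × ℤ,
              Real.exp (-(|(q.1 : ℝ)| ^ ((3 : ℝ) / 2) + |(q.2 : ℝ)| ^ ((3 : ℝ) / 2)) /
                Λ ^ ((3 : ℝ) / 2))))
      =ᶠ[atTop] (fun Λ : ℝ => 3 / 2 * (S Λ / Λ) ^ 2) := by
    filter_upwards [eventually_ge_atTop (1 : ℝ)] with Λ hΛ1
    have hΛ : (0 : ℝ) < Λ := lt_of_lt_of_le zero_lt_one hΛ1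
    obtain ⟨hsum, -, -⟩ := neck_oneDim hΛ
    have hprod : (∑' q : ℤ × ℤ,
        Real.exp (-(|(q.1 : ℝ)| ^ ((3 : ℝ) / 2) + |(q.2 : ℝ)| ^ ((3 : ℝ) / 2)) /
          Λ ^ ((3 : ℝ) / 2))) = S Λ * S Λ := by
      have hterm : ∀ q : ℤ × ℤ,
          Real.exp (-(|(q.1 : ℝ)| ^ ((3 : ℝ) / 2) + |(q.2 : ℝ)| ^ ((3 : ℝ) / 2)) /
            Λ ^ ((3 : ℝ) / 2))
          = Real.exp (-(|(q.1 : ℝ)| ^ ((3 : ℝ) / 2)) / Λ ^ ((3 : ℝ) / 2)) *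
            Real.exp (-(|(q.2 : ℝ)| ^ ((3 : ℝ) / 2)) / Λ ^ ((3 : ℝ) / 2)) := by
        intro q
        rw [← Real.exp_add]
        congr 1
        ring
      rw [tsum_congr hterm,
        ← Summable.tsum_mul_tsum hsum hsum
          (hsum.mul_of_nonneg hsum (fun n => (Real.exp_pos _).le) (fun n => (Real.exp_pos _).le))]
    have hpow : Λ ^ (-(1 : ℝ) / 2) * Λ ^ (-(3 : ℝ) / 2) = (Λ ^ 2)⁻¹ := by
      rw [← Real.rpow_add hΛ, ← Real.rpow_natCast Λ 2, ← Real.rpow_neg hΛ.le]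
      norm_num
    rw [hprod]
    calc Λ ^ (-(1 : ℝ) / 2) * (3 / 2 * Λ ^ (-(3 : ℝ) / 2) * (S Λ * S Λ))
        = (Λ ^ (-(1 : ℝ) / 2) * Λ ^ (-(3 : ℝ) / 2)) * (3 / 2 * (S Λ * S Λ)) := by ring
      _ = (Λ ^ 2)⁻¹ * (3 / 2 * (S Λ * S Λ)) := by rw [hpow]
      _ = 3 / 2 * (S Λ / Λ) ^ 2 := by
          have hne : (Λ : ℝ) ≠ 0 := hΛ.ne'
          rw [div_pow]
          field_simp
  rw [Filter.tendsto_congr' h2]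
  have h3 : Tendsto (fun Λ : ℝ => 3 / 2 * (S Λ / Λ) ^ 2) atTop (𝓝 (3 / 2 * (2 * G) ^ 2)) :=
    ((h1.pow 2).const_mul _)
  convert h3 using 2
  ring
end

section
/- Necklace tadpole asymptotics (derivative-coupling weight). One has lim_{Λ→∞} Λ^{-3/2} · [ (3/2) Λ^{-3/2} Σ_{(q₁,q₂)∈ℤ²} |q₁| · exp( −(|q₁|^{3/2} + |q₂|^{3/2})/Λ^{3/2} ) ] = 3 Γ(5/3) Γ(7/3), where Γ denotes the real Gamma function. -/
open Real MeasureTheory Set Filter Topology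

noncomputable def nf (x : ℝ) : ℝ := Real.exp (-(x ^ ((3:ℝ)/2)))

lemma nf_nonneg (x : ℝ) : 0 ≤ nf x := (Real.exp_pos _).le

lemma nf_le_one {x : ℝ} (hx : 0 ≤ x) : nf x ≤ 1 := by
  rw [nf, Real.exp_le_one_iff, neg_nonpos]
  positivity

lemma nf_anti {a b : ℝ} (ha : 0 ≤ a) (hab : a ≤ b) : nf b ≤ nf a := by
  rw [nf, nf, Real.exp_le_exp, neg_le_neg_iff]
  exact Real.rpow_le_rpow ha hab (by norm_num)

lemma nf_cont : Continuous nf :=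
  Real.continuous_exp.comp ((continuous_id.rpow_const fun x => Or.inr (by norm_num)).neg)

lemma nf_integrable : IntegrableOn nf (Ioi (0:ℝ)) := by
  have h := integrableOn_rpow_mul_exp_neg_rpow (p := 3/2) (s := 0) (by norm_num) (by norm_num)
  show IntegrableOn (fun x : ℝ => Real.exp (-(x ^ ((3:ℝ)/2)))) (Ioi 0)
  simpa [Real.rpow_zero] using h

lemma nfx_integrable : IntegrableOn (fun x => x * nf x) (Ioi (0:ℝ)) := by
  have h := integrableOn_rpow_mul_exp_neg_rpow (p := 3/2) (s := 1) (by norm_num) (by norm_num)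
  simpa [nf, Real.rpow_one] using h

lemma hI1 : ∫ x in Ioi (0:ℝ), nf x = Real.Gamma (5/3) := by
  have h := integral_exp_neg_rpow (p := 3/2) (by norm_num)
  rw [show (1:ℝ)/(3/2) + 1 = 5/3 by norm_num] at h
  simpa [nf] using h

lemma hI2 : ∫ x in Ioi (0:ℝ), x * nf x = (2/3) * Real.Gamma (4/3) := by
  have h := integral_rpow_mul_exp_neg_rpow (p := 3/2) (q := 1) (by norm_num) (by norm_num)
  rw [show ((1:ℝ) + 1)/(3/2) = 4/3 by norm_num, show (1:ℝ)/(3/2) = 2/3 by norm_num] at h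
  simpa [nf, Real.rpow_one] using h
/-- key geometric bound -/
lemma nf_bound {l : ℝ} (hl : 0 < l) (n : ℕ) :
    nf (l * n) ≤ Real.exp (-(l ^ ((3:ℝ)/2))) ^ n := by
  rw [← Real.exp_nat_mul, nf, Real.exp_le_exp, mul_neg, neg_le_neg_iff]
  rw [Real.mul_rpow hl.le (Nat.cast_nonneg n)]
  rcases Nat.eq_zero_or_pos n with rfl | hn
  · simp
  · have h1 : (1:ℝ) ≤ (n:ℝ) := by exact_mod_cast hn
    have : (n:ℝ) = (n:ℝ) ^ (1:ℝ) := (Real.rpow_one _).symm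
    calc (n:ℝ) * l ^ ((3:ℝ)/2) = l ^ ((3:ℝ)/2) * (n:ℝ) ^ (1:ℝ) := by
          rw [Real.rpow_one]; ring
      _ ≤ l ^ ((3:ℝ)/2) * (n:ℝ) ^ ((3:ℝ)/2) := by
          apply mul_le_mul_of_nonneg_left
            (Real.rpow_le_rpow_of_exponent_le h1 (by norm_num)) (by positivity)

lemma r_lt_one {l : ℝ} (hl : 0 < l) : Real.exp (-(l ^ ((3:ℝ)/2))) < 1 := by
  rw [Real.exp_lt_one_iff, neg_lt_zero]; positivity

lemma sumQnat {l : ℝ} (hl : 0 < l) : Summable (fun n : ℕ => nf (l * n)) := by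
  refine Summable.of_nonneg_of_le (fun n => nf_nonneg _) (nf_bound hl) ?_
  exact summable_geometric_of_lt_one (Real.exp_pos _).le (r_lt_one hl)

lemma sumPnat {l : ℝ} (hl : 0 < l) : Summable (fun n : ℕ => (n : ℝ) * nf (l * n)) := by
  refine Summable.of_nonneg_of_le (fun n => mul_nonneg (Nat.cast_nonneg n) (nf_nonneg _))
    (fun n => mul_le_mul_of_nonneg_left (nf_bound hl n) (Nat.cast_nonneg n)) ?_
  have h := summable_pow_mul_geometric_of_norm_lt_one (R := ℝ) 1
    (r := Real.exp (-(l ^ ((3:ℝ)/2)))) (by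
      rw [Real.norm_eq_abs, abs_of_pos (Real.exp_pos _)]; exact r_lt_one hl)
  simpa using h

lemma integral_ge_const {g : ℝ → ℝ} {a b c : ℝ} (hab : a ≤ b)
    (hg : IntervalIntegrable g volume a b) (h : ∀ x ∈ Icc a b, c ≤ g x) :
    (b - a) * c ≤ ∫ x in a..b, g x := by
  have h0 := intervalIntegral.integral_mono_on (f := fun _ => c) hab
    intervalIntegrable_const hg h
  simpa using h0

lemma integral_le_const {g : ℝ → ℝ} {a b c : ℝ} (hab : a ≤ b)
    (hg : IntervalIntegrable g volume a b) (h : ∀ x ∈ Icc a b, g x ≤ c) :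
    ∫ x in a..b, g x ≤ (b - a) * c := by
  have h0 := intervalIntegral.integral_mono_on (g := fun _ => c) hab
    hg intervalIntegrable_const h
  simpa using h0

lemma Q_upper {l : ℝ} (hl : 0 < l) :
    l * ∑' n : ℕ, nf (l * (n+1)) ≤ ∫ x in Ioi (0:ℝ), nf x := by
  rw [← tsum_mul_left]
  apply tsum_le_of_sum_range_le (fun n => mul_nonneg hl.le (nf_nonneg _))
  intro N
  have tele : ∑ n ∈ Finset.range N, ∫ x in (l*(n:ℝ))..(l*((n:ℝ)+1)), nf x
      = ∫ x in (0:ℝ)..(l*(N:ℝ)), nf x := by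
    have h := intervalIntegral.sum_integral_adjacent_intervals
      (a := fun n : ℕ => l * (n:ℝ)) (μ := volume) (f := nf) (n := N)
      (fun k _ => nf_cont.intervalIntegrable _ _)
    push_cast at h
    simpa using h
  calc ∑ n ∈ Finset.range N, l * nf (l*((n:ℝ)+1))
      ≤ ∑ n ∈ Finset.range N, ∫ x in (l*(n:ℝ))..(l*((n:ℝ)+1)), nf x := by
        apply Finset.sum_le_sum; intro n _
        have hab : l*(n:ℝ) ≤ l*((n:ℝ)+1) := by
          have : (0:ℝ) ≤ l := hl.le; nlinarith
        have h := integral_ge_const hab (nf_cont.intervalIntegrable _ _)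
          (fun x hx => nf_anti (le_trans (by positivity) hx.1) hx.2)
        have e : l*((n:ℝ)+1) - l*(n:ℝ) = l := by ring
        rw [e] at h; exact h
    _ = ∫ x in (0:ℝ)..(l*(N:ℝ)), nf x := tele
    _ ≤ ∫ x in Ioi (0:ℝ), nf x := by
        rw [intervalIntegral.integral_of_le (by positivity)]
        exact setIntegral_mono_set nf_integrable
          (Filter.Eventually.of_forall nf_nonneg)
          (HasSubset.Subset.eventuallyLE Ioc_subset_Ioi_self)

lemma tendsto_scaled {l : ℝ} (hl : 0 < l) :
    Tendsto (fun N : ℕ => l*((N:ℝ)+1)) atTop atTop := by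
  apply Tendsto.const_mul_atTop hl
  exact tendsto_atTop_add_const_right _ 1 tendsto_natCast_atTop_atTop

lemma Q_lower {l : ℝ} (hl : 0 < l) :
    (∫ x in Ioi (0:ℝ), nf x) - l ≤ l * ∑' n : ℕ, nf (l * (n+1)) := by
  have hIoiInt : IntegrableOn nf (Ioi l) := nf_integrable.mono_set (Ioi_subset_Ioi hl.le)
  have hsum : Summable (fun n : ℕ => l * nf (l*((n:ℝ)+1))) := by
    apply Summable.mul_left
    have := (sumQnat hl).comp_injective Nat.succ_injective
    simpa [Function.comp_def] using this
  have key : ∀ N : ℕ, ∫ x in l..(l*((N:ℝ)+1)), nf x ≤ l * ∑' n : ℕ, nf (l*((n:ℝ)+1)) := by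
    intro N
    rw [← tsum_mul_left]
    have tele : ∑ n ∈ Finset.range N, ∫ x in (l*((n:ℝ)+1))..(l*((n:ℝ)+2)), nf x
        = ∫ x in l..(l*((N:ℝ)+1)), nf x := by
      have h := intervalIntegral.sum_integral_adjacent_intervals
        (a := fun n : ℕ => l * ((n:ℝ)+1)) (μ := volume) (f := nf) (n := N)
        (fun k _ => nf_cont.intervalIntegrable _ _)
      push_cast at h
      have e : ∀ n:ℕ, l * ((n:ℝ) + 1 + 1) = l * ((n:ℝ)+2) := fun n => by ring
      simp only [e] at h
      simpa [mul_one] using h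
    rw [← tele]
    calc ∑ n ∈ Finset.range N, ∫ x in (l*((n:ℝ)+1))..(l*((n:ℝ)+2)), nf x
        ≤ ∑ n ∈ Finset.range N, l * nf (l*((n:ℝ)+1)) := by
          apply Finset.sum_le_sum; intro n _
          have hab : l*((n:ℝ)+1) ≤ l*((n:ℝ)+2) := by nlinarith
          have h := integral_le_const hab (nf_cont.intervalIntegrable _ _)
            (fun x hx => nf_anti (by positivity) hx.1)
          have e : l*((n:ℝ)+2) - l*((n:ℝ)+1) = l := by ring
          rw [e] at h; exact h
      _ ≤ ∑' n : ℕ, l * nf (l*((n:ℝ)+1)) :=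
          hsum.sum_le_tsum _ (fun n _ => mul_nonneg hl.le (nf_nonneg _))
  have tendstoInt : Tendsto (fun N : ℕ => ∫ x in l..(l*((N:ℝ)+1)), nf x) atTop
      (𝓝 (∫ x in Ioi l, nf x)) :=
    intervalIntegral_tendsto_integral_Ioi l hIoiInt (tendsto_scaled hl)
  have h1 : ∫ x in Ioi l, nf x ≤ l * ∑' n : ℕ, nf (l*((n:ℝ)+1)) :=
    le_of_tendsto tendstoInt (Filter.Eventually.of_forall key)
  have hsplit : ∫ x in Ioi (0:ℝ), nf x = (∫ x in Ioc 0 l, nf x) + ∫ x in Ioi l, nf x := by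
    rw [← setIntegral_union (Ioc_disjoint_Ioi le_rfl) measurableSet_Ioi
      (nf_integrable.mono_set Ioc_subset_Ioi_self) hIoiInt, Ioc_union_Ioi_eq_Ioi hl.le]
  have hsmall : ∫ x in Ioc (0:ℝ) l, nf x ≤ l := by
    calc ∫ x in Ioc (0:ℝ) l, nf x ≤ ∫ _x in Ioc (0:ℝ) l, (1:ℝ) := by
          apply setIntegral_mono_on (nf_integrable.mono_set Ioc_subset_Ioi_self)
            (integrableOn_const measure_Ioc_lt_top.ne) measurableSet_Ioc
            (fun x hx => nf_le_one hx.1.le)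
      _ = l := by simp [Real.volume_Ioc, ENNReal.toReal_ofReal hl.le, hl.le]
  linarith

lemma nfg_cont (c : ℝ) : Continuous (fun x => (x + c) * nf x) :=
  (continuous_id.add continuous_const).mul nf_cont

lemma nf_shift_integrable (c : ℝ) : IntegrableOn (fun x => (x + c) * nf x) (Ioi (0:ℝ)) := by
  have e : (fun x => (x + c) * nf x) = fun x => x * nf x + c * nf x :=
    funext fun x => by ring
  rw [e]; exact nfx_integrable.add (nf_integrable.const_mul c)

lemma P_upper {l : ℝ} (hl : 0 < l) :
    l * ∑' n : ℕ, (l*((n:ℝ)+1)) * nf (l*((n:ℝ)+1))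
      ≤ (∫ x in Ioi (0:ℝ), x * nf x) + l * ∫ x in Ioi (0:ℝ), nf x := by
  rw [← tsum_mul_left]
  apply tsum_le_of_sum_range_le
    (fun n => mul_nonneg hl.le (mul_nonneg (by positivity) (nf_nonneg _)))
  intro N
  have tele : ∑ n ∈ Finset.range N, ∫ x in (l*(n:ℝ))..(l*((n:ℝ)+1)), (x + l) * nf x
      = ∫ x in (0:ℝ)..(l*(N:ℝ)), (x + l) * nf x := by
    have h := intervalIntegral.sum_integral_adjacent_intervals
      (a := fun n : ℕ => l * (n:ℝ)) (μ := volume) (f := fun x => (x + l) * nf x) (n := N)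
      (fun k _ => (nfg_cont l).intervalIntegrable _ _)
    push_cast at h
    simpa using h
  calc ∑ n ∈ Finset.range N, l * ((l*((n:ℝ)+1)) * nf (l*((n:ℝ)+1)))
      ≤ ∑ n ∈ Finset.range N, ∫ x in (l*(n:ℝ))..(l*((n:ℝ)+1)), (x + l) * nf x := by
        apply Finset.sum_le_sum; intro n _
        have hab : l*(n:ℝ) ≤ l*((n:ℝ)+1) := by nlinarith
        have h := integral_ge_const hab ((nfg_cont l).intervalIntegrable _ _)
          (fun x hx => by
            have hx0 : (0:ℝ) ≤ x := le_trans (by positivity) hx.1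
            have h1 : l*((n:ℝ)+1) ≤ x + l := by nlinarith [hx.1]
            have h2 : nf (l*((n:ℝ)+1)) ≤ nf x := nf_anti hx0 hx.2
            calc (l*((n:ℝ)+1)) * nf (l*((n:ℝ)+1)) ≤ (x + l) * nf (l*((n:ℝ)+1)) :=
                  mul_le_mul_of_nonneg_right h1 (nf_nonneg _)
              _ ≤ (x + l) * nf x := mul_le_mul_of_nonneg_left h2 (by linarith))
        have e : l*((n:ℝ)+1) - l*(n:ℝ) = l := by ring
        rw [e] at h; exact h
    _ = ∫ x in (0:ℝ)..(l*(N:ℝ)), (x + l) * nf x := tele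
    _ ≤ ∫ x in Ioi (0:ℝ), (x + l) * nf x := by
        rw [intervalIntegral.integral_of_le (by positivity)]
        refine setIntegral_mono_set (nf_shift_integrable l)
          ?_ (HasSubset.Subset.eventuallyLE Ioc_subset_Ioi_self)
        refine (ae_restrict_iff' measurableSet_Ioi).2 (Filter.Eventually.of_forall ?_)
        intro x hx
        exact mul_nonneg (by linarith [hx.out, hl]) (nf_nonneg _)
    _ = (∫ x in Ioi (0:ℝ), x * nf x) + l * ∫ x in Ioi (0:ℝ), nf x := by
        rw [show (fun x => (x + l) * nf x) = fun x => x * nf x + l * nf x from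
          funext fun x => by ring]
        rw [integral_add nfx_integrable (nf_integrable.const_mul l), integral_const_mul]

lemma P_lower {l : ℝ} (hl : 0 < l) :
    (∫ x in Ioi (0:ℝ), x * nf x) - l * (∫ x in Ioi (0:ℝ), nf x) - l * l
      ≤ l * ∑' n : ℕ, (l*((n:ℝ)+1)) * nf (l*((n:ℝ)+1)) := by
  have hsum : Summable (fun n : ℕ => l * ((l*((n:ℝ)+1)) * nf (l*((n:ℝ)+1)))) := by
    have s0 := (sumPnat hl).comp_injective Nat.succ_injective
    have e : (fun n : ℕ => l * ((l*((n:ℝ)+1)) * nf (l*((n:ℝ)+1))))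
        = fun n : ℕ => (l*l) * (((fun m : ℕ => (m:ℝ) * nf (l * m)) ∘ Nat.succ) n) := by
      funext n
      simp only [Function.comp_apply, Nat.succ_eq_add_one]
      push_cast; ring_nf
    rw [e]; exact s0.mul_left _
  have key : ∀ N : ℕ, ∫ x in l..(l*((N:ℝ)+1)), (x + (-l)) * nf x
      ≤ l * ∑' n : ℕ, (l*((n:ℝ)+1)) * nf (l*((n:ℝ)+1)) := by
    intro N
    rw [← tsum_mul_left]
    have tele : ∑ n ∈ Finset.range N,
          ∫ x in (l*((n:ℝ)+1))..(l*((n:ℝ)+2)), (x + (-l)) * nf x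
        = ∫ x in l..(l*((N:ℝ)+1)), (x + (-l)) * nf x := by
      have h := intervalIntegral.sum_integral_adjacent_intervals
        (a := fun n : ℕ => l * ((n:ℝ)+1)) (μ := volume)
        (f := fun x => (x + (-l)) * nf x) (n := N)
        (fun k _ => (nfg_cont (-l)).intervalIntegrable _ _)
      push_cast at h
      have e : ∀ n:ℕ, l * ((n:ℝ) + 1 + 1) = l * ((n:ℝ)+2) := fun n => by ring
      simp only [e] at h
      simpa [mul_one] using h
    rw [← tele]
    calc ∑ n ∈ Finset.range N, ∫ x in (l*((n:ℝ)+1))..(l*((n:ℝ)+2)), (x + (-l)) * nf x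
        ≤ ∑ n ∈ Finset.range N, l * ((l*((n:ℝ)+1)) * nf (l*((n:ℝ)+1))) := by
          apply Finset.sum_le_sum; intro n _
          have hab : l*((n:ℝ)+1) ≤ l*((n:ℝ)+2) := by nlinarith
          have h := integral_le_const hab ((nfg_cont (-l)).intervalIntegrable _ _)
            (fun x hx => by
              have h1 : x + (-l) ≤ l*((n:ℝ)+1) := by nlinarith [hx.2]
              have h0 : (0:ℝ) ≤ x + (-l) := by nlinarith [hx.1]
              have h2 : nf x ≤ nf (l*((n:ℝ)+1)) := nf_anti (by positivity) hx.1
              calc (x + (-l)) * nf x ≤ (l*((n:ℝ)+1)) * nf x :=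
                    mul_le_mul_of_nonneg_right h1 (nf_nonneg _)
                _ ≤ (l*((n:ℝ)+1)) * nf (l*((n:ℝ)+1)) :=
                    mul_le_mul_of_nonneg_left h2 (by positivity))
          have e : l*((n:ℝ)+2) - l*((n:ℝ)+1) = l := by ring
          rw [e] at h; exact h
      _ ≤ ∑' n : ℕ, l * ((l*((n:ℝ)+1)) * nf (l*((n:ℝ)+1))) :=
          hsum.sum_le_tsum _ (fun n _ =>
            mul_nonneg hl.le (mul_nonneg (by positivity) (nf_nonneg _)))
  have hIoiInt : IntegrableOn (fun x => (x + (-l)) * nf x) (Ioi l) :=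
    (nf_shift_integrable (-l)).mono_set (Ioi_subset_Ioi hl.le)
  have tendstoInt : Tendsto (fun N : ℕ => ∫ x in l..(l*((N:ℝ)+1)), (x + (-l)) * nf x) atTop
      (nhds (∫ x in Ioi l, (x + (-l)) * nf x)) :=
    intervalIntegral_tendsto_integral_Ioi l hIoiInt (tendsto_scaled hl)
  have h1 : ∫ x in Ioi l, (x + (-l)) * nf x
      ≤ l * ∑' n : ℕ, (l*((n:ℝ)+1)) * nf (l*((n:ℝ)+1)) :=
    le_of_tendsto tendstoInt (Filter.Eventually.of_forall key)
  have hxInt : IntegrableOn (fun x => x * nf x) (Ioi l) :=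
    nfx_integrable.mono_set (Ioi_subset_Ioi hl.le)
  have hnfInt : IntegrableOn nf (Ioi l) := nf_integrable.mono_set (Ioi_subset_Ioi hl.le)
  have hsub : ∫ x in Ioi l, (x + (-l)) * nf x
      = (∫ x in Ioi l, x * nf x) - l * (∫ x in Ioi l, nf x) := by
    rw [show (fun x => (x + (-l)) * nf x) = fun x => x * nf x - l * nf x from
      funext fun x => by ring]
    rw [integral_sub hxInt (hnfInt.const_mul l), integral_const_mul]
  have hsplit : ∫ x in Ioi (0:ℝ), x * nf x
      = (∫ x in Ioc 0 l, x * nf x) + ∫ x in Ioi l, x * nf x := by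
    rw [← setIntegral_union (Ioc_disjoint_Ioi le_rfl) measurableSet_Ioi
      (nfx_integrable.mono_set Ioc_subset_Ioi_self) hxInt, Ioc_union_Ioi_eq_Ioi hl.le]
  have hsmall : ∫ x in Ioc (0:ℝ) l, x * nf x ≤ l * l := by
    calc ∫ x in Ioc (0:ℝ) l, x * nf x ≤ ∫ _x in Ioc (0:ℝ) l, l := by
          apply setIntegral_mono_on (nfx_integrable.mono_set Ioc_subset_Ioi_self)
            (integrableOn_const measure_Ioc_lt_top.ne) measurableSet_Ioc
          intro x hx
          calc x * nf x ≤ x * 1 :=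
                mul_le_mul_of_nonneg_left (nf_le_one hx.1.le) hx.1.le
            _ ≤ l := by rw [mul_one]; exact hx.2
      _ = l * l := by simp [Real.volume_Ioc, ENNReal.toReal_ofReal hl.le, hl.le]
  have hIoiLe : ∫ x in Ioi l, nf x ≤ ∫ x in Ioi (0:ℝ), nf x :=
    setIntegral_mono_set nf_integrable (Filter.Eventually.of_forall nf_nonneg)
      (HasSubset.Subset.eventuallyLE (Ioi_subset_Ioi hl.le))
  have h2 : l * (∫ x in Ioi l, nf x) ≤ l * ∫ x in Ioi (0:ℝ), nf x :=
    mul_le_mul_of_nonneg_left hIoiLe hl.le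
  linarith

lemma hQ : Tendsto (fun Λ : ℝ => Λ⁻¹ * ∑' n : ℕ, nf (Λ⁻¹*((n:ℝ)+1))) atTop
    (nhds (Real.Gamma (5/3))) := by
  apply tendsto_of_tendsto_of_tendsto_of_le_of_le'
    (g := fun Λ : ℝ => Real.Gamma (5/3) - Λ⁻¹) (h := fun _ => Real.Gamma (5/3))
  · have := (tendsto_const_nhds (x := Real.Gamma (5/3)) (f := atTop (α := ℝ))).sub
      tendsto_inv_atTop_zero
    simpa using this
  · exact tendsto_const_nhds
  · filter_upwards [eventually_gt_atTop (0:ℝ)] with Λ hΛ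
    have h := Q_lower (inv_pos.2 hΛ)
    rwa [hI1] at h
  · filter_upwards [eventually_gt_atTop (0:ℝ)] with Λ hΛ
    have h := Q_upper (inv_pos.2 hΛ)
    rwa [hI1] at h

lemma hP : Tendsto (fun Λ : ℝ => Λ⁻¹ * ∑' n : ℕ, (Λ⁻¹*((n:ℝ)+1)) * nf (Λ⁻¹*((n:ℝ)+1)))
    atTop (nhds ((2/3) * Real.Gamma (4/3))) := by
  apply tendsto_of_tendsto_of_tendsto_of_le_of_le'
    (g := fun Λ : ℝ => (2/3) * Real.Gamma (4/3) - Λ⁻¹ * Real.Gamma (5/3) - Λ⁻¹ * Λ⁻¹)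
    (h := fun Λ : ℝ => (2/3) * Real.Gamma (4/3) + Λ⁻¹ * Real.Gamma (5/3))
  · have := (tendsto_const_nhds (x := (2/3) * Real.Gamma (4/3)) (f := atTop (α := ℝ))).sub
      ((tendsto_inv_atTop_zero.mul_const (Real.Gamma (5/3)))) |>.sub
      (tendsto_inv_atTop_zero.mul tendsto_inv_atTop_zero)
    simpa using this
  · have := (tendsto_const_nhds (x := (2/3) * Real.Gamma (4/3)) (f := atTop (α := ℝ))).add
      ((tendsto_inv_atTop_zero.mul_const (Real.Gamma (5/3))))
    simpa using this
  · filter_upwards [eventually_gt_atTop (0:ℝ)] with Λ hΛ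
    have h := P_lower (inv_pos.2 hΛ)
    rwa [hI1, hI2] at h
  · filter_upwards [eventually_gt_atTop (0:ℝ)] with Λ hΛ
    have h := P_upper (inv_pos.2 hΛ)
    rwa [hI1, hI2] at h

lemma abs_neg_cast (n : ℕ) : |((-((n:ℤ) + 1) : ℤ) : ℝ)| = (n:ℝ) + 1 := by
  push_cast
  rw [abs_neg, abs_of_nonneg (by positivity)]

lemma abs_nat_cast (n : ℕ) : |(((n:ℤ)) : ℝ)| = (n:ℝ) := by
  push_cast
  exact abs_of_nonneg (by positivity)

lemma sumb_nat {l : ℝ} (hl : 0 < l) : Summable (fun n : ℕ => nf (l * |((n:ℤ):ℝ)|)) := by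
  apply (sumQnat hl).congr
  intro n; rw [abs_nat_cast]

lemma sumb_neg {l : ℝ} (hl : 0 < l) :
    Summable (fun n : ℕ => nf (l * |((-((n:ℤ)+1)):ℝ)|)) := by
  apply ((sumQnat hl).comp_injective Nat.succ_injective).congr
  intro n
  simp only [Function.comp_apply, Nat.succ_eq_add_one]
  rw [show ((-((n:ℤ)+1)):ℝ) = ((-((n:ℤ)+1) : ℤ) : ℝ) by push_cast; ring, abs_neg_cast]
  push_cast
  ring_nf

lemma sumb {l : ℝ} (hl : 0 < l) : Summable (fun k : ℤ => nf (l * |(k:ℝ)|)) :=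
  Summable.of_nat_of_neg_add_one (sumb_nat hl) (by
    have := sumb_neg hl
    apply this.congr
    intro n; push_cast; ring_nf)

lemma suma_nat {l : ℝ} (hl : 0 < l) :
    Summable (fun n : ℕ => |((n:ℤ):ℝ)| * nf (l * |((n:ℤ):ℝ)|)) := by
  apply (sumPnat hl).congr
  intro n; rw [abs_nat_cast]

lemma suma_neg {l : ℝ} (hl : 0 < l) :
    Summable (fun n : ℕ => |((-((n:ℤ)+1)):ℝ)| * nf (l * |((-((n:ℤ)+1)):ℝ)|)) := by
  apply ((sumPnat hl).comp_injective Nat.succ_injective).congr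
  intro n
  simp only [Function.comp_apply, Nat.succ_eq_add_one]
  rw [show ((-((n:ℤ)+1)):ℝ) = ((-((n:ℤ)+1) : ℤ) : ℝ) by push_cast; ring, abs_neg_cast]
  push_cast
  ring_nf

lemma suma {l : ℝ} (hl : 0 < l) : Summable (fun m : ℤ => |(m:ℝ)| * nf (l * |(m:ℝ)|)) :=
  Summable.of_nat_of_neg_add_one (suma_nat hl) (by
    have := suma_neg hl
    apply this.congr
    intro n; push_cast; ring_nf)

lemma nf_zero : nf 0 = 1 := by
  rw [nf, Real.zero_rpow (by norm_num), neg_zero, Real.exp_zero]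

lemma tsumb {l : ℝ} (hl : 0 < l) :
    ∑' k : ℤ, nf (l * |(k:ℝ)|) = 1 + 2 * ∑' n : ℕ, nf (l*((n:ℝ)+1)) := by
  rw [tsum_of_nat_of_neg_add_one (f := fun k : ℤ => nf (l * |(k:ℝ)|)) (sumb_nat hl)
    (by have := sumb_neg hl; apply this.congr; intro n; push_cast; ring_nf)]
  have e1 : ∑' n : ℕ, nf (l * |((n:ℤ):ℝ)|) = ∑' n : ℕ, nf (l * (n:ℝ)) :=
    tsum_congr fun n => by rw [abs_nat_cast]
  have e2 : ∑' n : ℕ, nf (l * |(((-((n:ℤ)+1)) : ℤ):ℝ)|) = ∑' n : ℕ, nf (l*((n:ℝ)+1)) :=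
    tsum_congr fun n => by
      rw [abs_neg_cast]
  have e3 : ∑' n : ℕ, nf (l * (n:ℝ))
      = nf (l * ((0:ℕ):ℝ)) + ∑' n : ℕ, nf (l * (((n+1:ℕ)):ℝ)) :=
    Summable.tsum_eq_zero_add (f := fun n : ℕ => nf (l * (n:ℝ))) (sumQnat hl)
  rw [e1, e3]
  have e4 : ∑' n : ℕ, nf (l * (((n+1:ℕ)):ℝ)) = ∑' n : ℕ, nf (l*((n:ℝ)+1)) :=
    tsum_congr fun n => by push_cast; ring_nf
  rw [e4]
  have e5 : ∑' n : ℕ, nf (l * |(((-((n:ℤ)+1)) : ℤ):ℝ)|) = ∑' n : ℕ, nf (l*((n:ℝ)+1)) := e2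
  rw [show (((0:ℕ)):ℝ) = (0:ℝ) by norm_num, mul_zero, nf_zero]
  rw [e5]
  ring

lemma tsuma {l : ℝ} (hl : 0 < l) :
    ∑' m : ℤ, |(m:ℝ)| * nf (l * |(m:ℝ)|)
      = 2 * ∑' n : ℕ, ((n:ℝ)+1) * nf (l*((n:ℝ)+1)) := by
  rw [tsum_of_nat_of_neg_add_one (f := fun m : ℤ => |(m:ℝ)| * nf (l * |(m:ℝ)|)) (suma_nat hl)
    (by have := suma_neg hl; apply this.congr; intro n; push_cast; ring_nf)]
  have e1 : ∑' n : ℕ, |((n:ℤ):ℝ)| * nf (l * |((n:ℤ):ℝ)|)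
      = ∑' n : ℕ, (n:ℝ) * nf (l * (n:ℝ)) :=
    tsum_congr fun n => by rw [abs_nat_cast]
  have e2 : ∑' n : ℕ, |(((-((n:ℤ)+1)) : ℤ):ℝ)| * nf (l * |(((-((n:ℤ)+1)) : ℤ):ℝ)|)
      = ∑' n : ℕ, ((n:ℝ)+1) * nf (l*((n:ℝ)+1)) :=
    tsum_congr fun n => by
      rw [abs_neg_cast]
  have e3 : ∑' n : ℕ, (n:ℝ) * nf (l * (n:ℝ))
      = ((0:ℕ):ℝ) * nf (l * ((0:ℕ):ℝ)) + ∑' n : ℕ, ((n+1:ℕ):ℝ) * nf (l * (((n+1:ℕ)):ℝ)) :=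
    Summable.tsum_eq_zero_add (f := fun n : ℕ => (n:ℝ) * nf (l * (n:ℝ))) (sumPnat hl)
  rw [e1, e3]
  have e4 : ∑' n : ℕ, ((n+1:ℕ):ℝ) * nf (l * (((n+1:ℕ)):ℝ))
      = ∑' n : ℕ, ((n:ℝ)+1) * nf (l*((n:ℝ)+1)) :=
    tsum_congr fun n => by push_cast; ring_nf
  rw [e4, e2]
  norm_num
  ring

lemma term_eq {Λ : ℝ} (hΛ : 0 < Λ) (q : ℤ × ℤ) :
    |(q.1:ℝ)| * Real.exp (-(|(q.1:ℝ)| ^ ((3:ℝ)/2) + |(q.2:ℝ)| ^ ((3:ℝ)/2)) / Λ ^ ((3:ℝ)/2))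
      = (|(q.1:ℝ)| * nf (Λ⁻¹ * |(q.1:ℝ)|)) * nf (Λ⁻¹ * |(q.2:ℝ)|) := by
  have hp : ∀ y : ℝ, 0 ≤ y → nf (Λ⁻¹ * y) = Real.exp (-(y ^ ((3:ℝ)/2) / Λ ^ ((3:ℝ)/2))) := by
    intro y hy
    rw [nf, Real.mul_rpow (inv_nonneg.2 hΛ.le) hy, Real.inv_rpow hΛ.le]
    congr 1
    ring
  rw [hp _ (abs_nonneg _), hp _ (abs_nonneg _), mul_assoc, ← Real.exp_add]
  congr 2
  ring

set_option maxHeartbeats 1000000 in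
/-- Necklace tadpole asymptotics (derivative-coupling weight):
`lim_{Λ→∞} Λ^{-3/2} · [(3/2) Λ^{-3/2} Σ_{q∈ℤ²} |q₁| e^{−(|q₁|^{3/2}+|q₂|^{3/2})/Λ^{3/2}}]
  = 3 Γ(5/3) Γ(7/3)`. -/
theorem necklace_tadpole_asymptotics_weighted :
    Filter.Tendsto
      (fun Λ : ℝ =>
        Λ ^ (-(3 : ℝ) / 2) *
          ((3 / 2) * Λ ^ (-(3 : ℝ) / 2) *
            ∑' q : ℤ × ℤ,
              |(q.1 : ℝ)| *
                Real.exp (-(|(q.1 : ℝ)| ^ ((3 : ℝ) / 2) + |(q.2 : ℝ)| ^ ((3 : ℝ) / 2)) /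
                  Λ ^ ((3 : ℝ) / 2))))
      Filter.atTop
      (nhds (3 * Real.Gamma (5 / 3) * Real.Gamma (7 / 3))) := by
  have hmodel : Tendsto (fun Λ : ℝ =>
      3 * (Λ⁻¹ * ∑' n : ℕ, (Λ⁻¹*((n:ℝ)+1)) * nf (Λ⁻¹*((n:ℝ)+1))) *
        (Λ⁻¹ + 2 * (Λ⁻¹ * ∑' n : ℕ, nf (Λ⁻¹*((n:ℝ)+1))))) atTop
      (nhds (3 * ((2/3) * Real.Gamma (4/3)) * (0 + 2 * Real.Gamma (5/3)))) :=
    (hP.const_mul 3).mul (tendsto_inv_atTop_zero.add (hQ.const_mul 2))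
  have hval : 3 * ((2/3) * Real.Gamma (4/3)) * (0 + 2 * Real.Gamma (5/3))
      = 3 * Real.Gamma (5/3) * Real.Gamma (7/3) := by
    rw [show (7:ℝ)/3 = 4/3 + 1 by norm_num, Real.Gamma_add_one (by norm_num)]
    ring
  rw [← hval]
  apply hmodel.congr'
  filter_upwards [eventually_gt_atTop (0:ℝ)] with Λ hΛ
  have hl : (0:ℝ) < Λ⁻¹ := inv_pos.2 hΛ
  have hT : ∑' q : ℤ × ℤ,
        |(q.1 : ℝ)| * Real.exp (-(|(q.1 : ℝ)| ^ ((3:ℝ)/2) + |(q.2 : ℝ)| ^ ((3:ℝ)/2)) /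
          Λ ^ ((3:ℝ)/2))
      = (2 * (Λ * ∑' n : ℕ, (Λ⁻¹*((n:ℝ)+1)) * nf (Λ⁻¹*((n:ℝ)+1)))) *
        (1 + 2 * ∑' n : ℕ, nf (Λ⁻¹*((n:ℝ)+1))) := by
    rw [tsum_congr (term_eq hΛ)]
    rw [← Summable.tsum_mul_tsum (suma hl) (sumb hl)
      ((suma hl).mul_of_nonneg (sumb hl)
        (fun m => mul_nonneg (abs_nonneg _) (nf_nonneg _)) (fun k => nf_nonneg _))]
    rw [tsuma hl, tsumb hl]
    congr 2
    have e : ∀ n : ℕ, ((n:ℝ)+1) * nf (Λ⁻¹*((n:ℝ)+1))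
        = Λ * ((Λ⁻¹*((n:ℝ)+1)) * nf (Λ⁻¹*((n:ℝ)+1))) := by
      intro n
      rw [← mul_assoc, ← mul_assoc, mul_inv_cancel₀ hΛ.ne', one_mul]
    rw [tsum_congr e, tsum_mul_left]
  rw [hT]
  have hr : Λ ^ (-(3:ℝ)/2) * Λ ^ (-(3:ℝ)/2) = Λ⁻¹ * Λ⁻¹ * Λ⁻¹ := by
    have hinv : Λ⁻¹ = Λ ^ (-1:ℝ) := by rw [Real.rpow_neg_one]
    rw [hinv, ← Real.rpow_add hΛ, ← Real.rpow_add hΛ, ← Real.rpow_add hΛ]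
    norm_num
  set P := ∑' n : ℕ, (Λ⁻¹*((n:ℝ)+1)) * nf (Λ⁻¹*((n:ℝ)+1)) with hPdef
  set Q := ∑' n : ℕ, nf (Λ⁻¹*((n:ℝ)+1)) with hQdef
  have e1 : Λ ^ (-(3:ℝ)/2) * (3/2 * Λ ^ (-(3:ℝ)/2) * (2 * (Λ * P) * (1 + 2 * Q)))
      = (Λ ^ (-(3:ℝ)/2) * Λ ^ (-(3:ℝ)/2)) * (3/2 * (2 * (Λ * P) * (1 + 2 * Q))) := by
    ring
  rw [e1, hr]
  field_simp
end
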